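/- arXiv:2507.00312 — 5 statements merged into one kernel-verified Lean document; each statement's English description precedes it below -/
import Mathlib

section
/- In the finite-state exogenous MDP, there exist constants c_s ∈ ℝ and p_s ∈ [0,1] for each s ∈ S such that the policy π*(x,s) := 1{τ(x,s) > c_s} + p_s · 1{τ(x,s) = c_s} satisfies μ(π*) ≥ μ(π) for every measurable policy π : X × S → [0,1]; that is, an optimal policy exists and can be taken to be a state-specific CADE-thresholding rule with randomized tie-breaking. -/
open MeasureTheory

section Setup

variable {X : Type*} [MeasurableSpace X] {S : Type*} [Fintype S]

/-- A valid policy: measurable in the covariate for each state, `[0,1]`-valued. -/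
def IsPolicy (π : X → S → ℝ) : Prop :=
  (∀ s : S, Measurable fun x => π x s) ∧ ∀ x s, π x s ∈ Set.Icc (0:ℝ) 1

/-- The transition matrix `M_π` induced by a policy `π`. -/
noncomputable def transMat (PX : Measure X) (PS : S → Bool → S → ℝ)
    (π : X → S → ℝ) (s s' : S) : ℝ :=
  ∫ x, (π x s * PS s true s' + (1 - π x s) * PS s false s') ∂PX

/-- `d` is a stationary probability vector for `M_π`. -/
def IsStationaryMDP (PX : Measure X) (PS : S → Bool → S → ℝ)
    (π : X → S → ℝ) (d : S → ℝ) : Prop :=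
  (∀ s, 0 ≤ d s) ∧ (∑ s : S, d s = 1) ∧
    ∀ s' : S, ∑ s : S, d s * transMat PX PS π s s' = d s'

/-- The policy value `μ(π)`. -/
noncomputable def polValue (PX : Measure X) (η : Bool → X → S → ℝ)
    (dstat : (X → S → ℝ) → S → ℝ) (π : X → S → ℝ) : ℝ :=
  ∑ s : S, dstat π s *
    ∫ x, (π x s * η true x s + (1 - π x s) * η false x s) ∂PX

end Setup

set_option linter.unusedSectionVars false
set_option linter.unusedVariables false

section Thresh

variable {X : Type*} [MeasurableSpace X] (P : Measure X) [IsProbabilityMeasure P]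
  (f : X → ℝ)

noncomputable def survR (c : ℝ) : ℝ := (P {x | c < f x}).toReal

def thrSet (C a : ℝ) : Set ℝ := {c : ℝ | -C - 1 ≤ c ∧ survR P f c ≤ a}

noncomputable def thr (C a : ℝ) : ℝ := sInf (thrSet P f C a)

noncomputable def tie (C a : ℝ) : ℝ :=
  if (P {x | f x = thr P f C a}).toReal = 0 then 0
  else (a - survR P f (thr P f C a)) / (P {x | f x = thr P f C a}).toReal

noncomputable def thrPol (C a : ℝ) (x : X) : ℝ :=
  (if thr P f C a < f x then (1:ℝ) else 0) +
    tie P f C a * (if f x = thr P f C a then (1:ℝ) else 0)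

variable {P f}
variable (hf : Measurable f) {C : ℝ} (hC0 : 0 ≤ C) (hC : ∀ x, |f x| ≤ C)
  {a : ℝ} (ha0 : 0 ≤ a) (ha1 : a ≤ 1)

include hC0 hC ha0 in
lemma C_mem_thrSet : C ∈ thrSet P f C a := by
  refine ⟨by linarith, ?_⟩
  have : {x | C < f x} = (∅ : Set X) := by
    ext x; simp only [Set.mem_setOf_eq, Set.mem_empty_iff_false, iff_false, not_lt]
    exact le_trans (le_abs_self _) (hC x)
  simp [survR, this, ha0]

lemma thrSet_bddBelow : BddBelow (thrSet P f C a) := ⟨-C - 1, fun c hc => hc.1⟩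

include hC0 hC ha0 in
lemma thr_le : thr P f C a ≤ C := csInf_le thrSet_bddBelow (C_mem_thrSet hC0 hC ha0)

include hC0 hC ha0 in
lemma thr_ge : -C - 1 ≤ thr P f C a :=
  le_csInf ⟨C, C_mem_thrSet hC0 hC ha0⟩ fun c hc => hc.1

lemma survR_anti : Antitone (survR P f) := fun c c' h =>
  ENNReal.toReal_mono (measure_ne_top _ _)
    (measure_mono fun x hx => lt_of_le_of_lt h hx)

lemma survR_nonneg (c : ℝ) : 0 ≤ survR P f c := ENNReal.toReal_nonneg

include hf hC0 hC ha0 in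
lemma survR_thr_le : survR P f (thr P f C a) ≤ a := by
  set c₀ := thr P f C a with hc₀
  have key : P {x | c₀ < f x} ≤ ENNReal.ofReal a := by
    have hset : {x | c₀ < f x} = ⋃ n : ℕ, {x | c₀ + 1/(n+1) < f x} := by
      ext x
      simp only [Set.mem_setOf_eq, Set.mem_iUnion]
      constructor
      · intro hx
        obtain ⟨n, hn⟩ := exists_nat_one_div_lt (sub_pos.mpr hx)
        exact ⟨n, by push_cast at hn ⊢; linarith⟩
      · rintro ⟨n, hn⟩
        have : (0:ℝ) < 1/(n+1) := by positivity
        linarith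
    rw [hset, Monotone.measure_iUnion]
    · refine iSup_le fun n => ?_
      have hpos : (0:ℝ) < 1/(n+1) := by positivity
      obtain ⟨c, hc, hcc⟩ := exists_lt_of_csInf_lt ⟨C, C_mem_thrSet hC0 hC ha0⟩
        (show c₀ < c₀ + 1/(n+1) by linarith)
      calc P {x | c₀ + 1/(n+1) < f x} ≤ P {x | c < f x} :=
            measure_mono fun x hx => lt_of_le_of_lt hcc.le hx
        _ = ENNReal.ofReal (survR P f c) := by
            rw [survR, ENNReal.ofReal_toReal (measure_ne_top _ _)]
        _ ≤ ENNReal.ofReal a := ENNReal.ofReal_le_ofReal hc.2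
    · intro m n hmn x hx
      simp only [Set.mem_setOf_eq] at *
      have hmn' : (m:ℝ)+1 ≤ (n:ℝ)+1 := by exact_mod_cast Nat.succ_le_succ hmn
      have : (1:ℝ)/(n+1) ≤ 1/(m+1) := by
        apply one_div_le_one_div_of_le (by positivity) hmn'
      linarith
  calc survR P f c₀ ≤ (ENNReal.ofReal a).toReal := ENNReal.toReal_mono (by simp) key
    _ = a := ENNReal.toReal_ofReal ha0

include hf hC0 hC ha0 ha1 in
lemma le_measure_ge_thr : a ≤ (P {x | thr P f C a ≤ f x}).toReal := by
  set c₀ := thr P f C a with hc₀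
  have key : ENNReal.ofReal a ≤ P {x | c₀ ≤ f x} := by
    have hset : {x | c₀ ≤ f x} = ⋂ n : ℕ, {x | c₀ - 1/(n+1) < f x} := by
      ext x
      simp only [Set.mem_setOf_eq, Set.mem_iInter]
      constructor
      · intro hx n
        have : (0:ℝ) < 1/(n+1) := by positivity
        linarith
      · intro hx
        by_contra hlt
        push_neg at hlt
        obtain ⟨n, hn⟩ := exists_nat_one_div_lt (sub_pos.mpr hlt)
        have := hx n
        push_cast at hn
        linarith
    rw [hset, Directed.measure_iInter]
    · refine le_iInf fun n => ?_
      have hpos : (0:ℝ) < 1/(n+1) := by positivity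
      have hclt : c₀ - 1/(n+1) < c₀ := by linarith
      generalize hc : c₀ - 1/(n+1) = c at *
      by_cases hcb : -C - 1 ≤ c
      · have hnot : c ∉ thrSet P f C a := fun hmem =>
          absurd (csInf_le thrSet_bddBelow hmem) (not_le.mpr hclt)
        have hgt : a < survR P f c := by
          by_contra h
          exact hnot ⟨hcb, not_lt.mp h⟩
        calc ENNReal.ofReal a ≤ ENNReal.ofReal (survR P f c) :=
              ENNReal.ofReal_le_ofReal hgt.le
          _ = P {x | c < f x} := by rw [survR, ENNReal.ofReal_toReal (measure_ne_top _ _)]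
      · have : {x | c < f x} = Set.univ := by
          ext x
          simp only [Set.mem_setOf_eq, Set.mem_univ, iff_true]
          have := (abs_le.mp (hC x)).1
          push_neg at hcb
          linarith
        rw [this, measure_univ]
        exact ENNReal.ofReal_le_one.mpr ha1
    · exact fun n => (measurableSet_lt measurable_const hf).nullMeasurableSet
    · intro m n
      have h1 : (1:ℝ)/(max m n+1) ≤ 1/(m+1) := by
        apply one_div_le_one_div_of_le (by positivity)
        have : (m:ℝ) ≤ max m n := by exact_mod_cast le_max_left m n
        linarith
      have h2 : (1:ℝ)/(max m n+1) ≤ 1/(n+1) := by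
        apply one_div_le_one_div_of_le (by positivity)
        have : (n:ℝ) ≤ max m n := by exact_mod_cast le_max_right m n
        linarith
      refine ⟨max m n, fun x hx => ?_, fun x hx => ?_⟩ <;>
        simp only [Set.mem_setOf_eq] at * <;> linarith
    · exact ⟨0, measure_ne_top _ _⟩
  calc a = (ENNReal.ofReal a).toReal := (ENNReal.toReal_ofReal ha0).symm
    _ ≤ (P {x | c₀ ≤ f x}).toReal := ENNReal.toReal_mono (measure_ne_top _ _) key

include hf in
lemma measure_ge_split :
    (P {x | thr P f C a ≤ f x}).toReal
      = survR P f (thr P f C a) + (P {x | f x = thr P f C a}).toReal := by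
  set c₀ := thr P f C a
  have hset : {x | c₀ ≤ f x} = {x | c₀ < f x} ∪ {x | f x = c₀} := by
    ext x
    simp only [Set.mem_setOf_eq, Set.mem_union]
    constructor
    · intro h; rcases lt_or_eq_of_le h with h | h
      · exact Or.inl h
      · exact Or.inr h.symm
    · rintro (h | h); exacts [h.le, h.ge]
  have hdisj : Disjoint {x | c₀ < f x} {x | f x = c₀} := by
    rw [Set.disjoint_left]; intro x hx hx'
    simp only [Set.mem_setOf_eq] at hx hx'
    exact (ne_of_gt hx) hx'
  rw [hset, measure_union hdisj (hf (measurableSet_singleton c₀)),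
    ENNReal.toReal_add (measure_ne_top _ _) (measure_ne_top _ _)]
  rfl

include hf hC0 hC ha0 ha1 in
lemma tie_nonneg : 0 ≤ tie P f C a := by
  rw [tie]
  split
  · exact le_refl 0
  · next h =>
    have hm : 0 < (P {x | f x = thr P f C a}).toReal :=
      lt_of_le_of_ne ENNReal.toReal_nonneg (Ne.symm h)
    exact div_nonneg (sub_nonneg.mpr (survR_thr_le (P:=P) (a:=a) hf hC0 hC ha0)) hm.le

include hf hC0 hC ha0 ha1 in
lemma tie_le_one : tie P f C a ≤ 1 := by
  rw [tie]
  split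
  · exact zero_le_one
  · next h =>
    have hm : 0 < (P {x | f x = thr P f C a}).toReal :=
      lt_of_le_of_ne ENNReal.toReal_nonneg (Ne.symm h)
    rw [div_le_one hm]
    have := le_measure_ge_thr (P:=P) (a:=a) hf hC0 hC ha0 ha1
    rw [measure_ge_split hf] at this
    linarith

include hf hC0 hC ha0 ha1 in
lemma thrPol_mem (x : X) : thrPol P f C a x ∈ Set.Icc (0:ℝ) 1 := by
  have ht0 := tie_nonneg (P:=P) (a:=a) hf hC0 hC ha0 ha1
  have ht1 := tie_le_one (P:=P) (a:=a) hf hC0 hC ha0 ha1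
  rw [thrPol]
  by_cases h1 : thr P f C a < f x
  · have h2 : ¬ (f x = thr P f C a) := ne_of_gt h1
    simp [h1, h2]
  · by_cases h2 : f x = thr P f C a
    · simp [h1, h2]; constructor <;> linarith
    · simp [h1, h2]

include hf in
lemma thrPol_measurable : Measurable (thrPol P f C a) := by
  apply Measurable.add
  · exact Measurable.ite (measurableSet_lt measurable_const hf)
      measurable_const measurable_const
  · exact Measurable.mul measurable_const
      (Measurable.ite (hf (measurableSet_singleton _)) measurable_const measurable_const)

lemma integrable_of_bdd {g : X → ℝ} (hg : Measurable g) {M : ℝ} (h : ∀ x, |g x| ≤ M) :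
    Integrable g P :=
  (integrable_const M).mono' hg.aestronglyMeasurable
    (Filter.Eventually.of_forall fun x => by rw [Real.norm_eq_abs]; exact h x)

include hf hC0 hC ha0 ha1 in
lemma integral_thrPol : ∫ x, thrPol P f C a x ∂P = a := by
  have hA : MeasurableSet {x | thr P f C a < f x} := measurableSet_lt measurable_const hf
  have hB : MeasurableSet {x | f x = thr P f C a} := hf (measurableSet_singleton _)
  have e1 : (fun x => if thr P f C a < f x then (1:ℝ) else 0)
      = Set.indicator {x | thr P f C a < f x} (fun _ => (1:ℝ)) := by
    ext x; simp [Set.indicator_apply]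
  have e2 : (fun x => if f x = thr P f C a then (1:ℝ) else 0)
      = Set.indicator {x | f x = thr P f C a} (fun _ => (1:ℝ)) := by
    ext x; simp [Set.indicator_apply]
  have i1 : Integrable (fun x => if thr P f C a < f x then (1:ℝ) else 0) P := by
    rw [e1]; exact (integrable_const 1).indicator hA
  have i2 : Integrable (fun x => if f x = thr P f C a then (1:ℝ) else 0) P := by
    rw [e2]; exact (integrable_const 1).indicator hB
  simp only [thrPol]
  rw [integral_add i1 (i2.const_mul _), integral_const_mul]
  have v1 : ∫ x, (if thr P f C a < f x then (1:ℝ) else 0) ∂P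
      = (P {x | thr P f C a < f x}).toReal := by
    rw [e1]
    simpa [measureReal_def, Pi.one_def] using integral_indicator_one (μ := P) hA
  have v2 : ∫ x, (if f x = thr P f C a then (1:ℝ) else 0) ∂P
      = (P {x | f x = thr P f C a}).toReal := by
    rw [e2]
    simpa [measureReal_def, Pi.one_def] using integral_indicator_one (μ := P) hB
  rw [v1, v2]
  rw [tie]
  split
  · next h =>
    rw [h, mul_zero, add_zero]
    have h1 := survR_thr_le (P:=P) (a:=a) hf hC0 hC ha0
    have h2 := le_measure_ge_thr (P:=P) (a:=a) hf hC0 hC ha0 ha1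
    rw [measure_ge_split hf, h, add_zero] at h2
    have : survR P f (thr P f C a) = a := le_antisymm h1 h2
    exact this
  · next h =>
    have hm : (P {x | f x = thr P f C a}).toReal ≠ 0 := h
    rw [div_mul_cancel₀ _ hm]
    show survR P f (thr P f C a) + (a - survR P f (thr P f C a)) = a
    ring

include hf hC0 hC ha0 ha1 in
lemma np {π : X → ℝ} (hπm : Measurable π) (hπb : ∀ x, π x ∈ Set.Icc (0:ℝ) 1)
    (hπa : ∫ x, π x ∂P = a) :
    ∫ x, π x * f x ∂P ≤ ∫ x, thrPol P f C a x * f x ∂P := by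
  set g := thrPol P f C a with hg
  set c := thr P f C a with hc
  have hgm : Measurable g := thrPol_measurable hf
  have hgb : ∀ x, g x ∈ Set.Icc (0:ℝ) 1 := fun x => thrPol_mem hf hC0 hC ha0 ha1 x
  have habs : ∀ (h : X → ℝ), (∀ x, h x ∈ Set.Icc (0:ℝ) 1) → ∀ x, |h x| ≤ 1 := by
    intro h hb x
    rw [abs_le]; exact ⟨by linarith [(hb x).1], (hb x).2⟩
  have iπ : Integrable π P := integrable_of_bdd hπm (habs π hπb)
  have ig : Integrable g P := integrable_of_bdd hgm (habs g hgb)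
  have hfabs : ∀ (h : X → ℝ), (∀ x, h x ∈ Set.Icc (0:ℝ) 1) →
      ∀ x, |h x * f x| ≤ C := by
    intro h hb x
    rw [abs_mul]
    calc |h x| * |f x| ≤ 1 * C :=
      mul_le_mul (habs h hb x) (hC x) (abs_nonneg _) zero_le_one
    _ = C := one_mul C
  have iπf : Integrable (fun x => π x * f x) P :=
    integrable_of_bdd (hπm.mul hf) (hfabs π hπb)
  have igf : Integrable (fun x => g x * f x) P :=
    integrable_of_bdd (hgm.mul hf) (hfabs g hgb)
  have key : ∀ x, 0 ≤ (g x - π x) * (f x - c) := by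
    intro x
    rcases lt_trichotomy c (f x) with h1 | h1 | h1
    · have h2 : ¬ (f x = c) := ne_of_gt h1
      have : g x = 1 := by rw [hg, thrPol, ← hc]; simp [h1, h2]
      rw [this]
      exact mul_nonneg (by linarith [(hπb x).2]) (by linarith)
    · rw [← h1]; simp
    · have h2 : ¬ (c < f x) := not_lt.mpr h1.le
      have h2' : ¬ (f x = c) := ne_of_lt h1
      have : g x = 0 := by rw [hg, thrPol, ← hc]; simp [h2, h2']
      rw [this]
      have := (hπb x).1
      nlinarith
  have h0 : 0 ≤ ∫ x, (g x - π x) * (f x - c) ∂P := integral_nonneg key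
  have e : (fun x => (g x - π x) * (f x - c))
      = fun x => (g x * f x - π x * f x) + (c * π x - c * g x) := by
    funext x; ring
  have i1 : Integrable (fun x => g x * f x - π x * f x) P := igf.sub iπf
  have i2 : Integrable (fun x => c * π x - c * g x) P :=
    (iπ.const_mul c).sub (ig.const_mul c)
  have i3 : Integrable (fun x => c * π x) P := iπ.const_mul c
  have i4 : Integrable (fun x => c * g x) P := ig.const_mul c
  rw [e, integral_add i1 i2, integral_sub igf iπf, integral_sub i3 i4,
    integral_const_mul, integral_const_mul, hπa, hg, integral_thrPol hf hC0 hC ha0 ha1] at h0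
  linarith

include hf hC0 hC ha0 ha1 in
lemma thrPol_mono {a' : ℝ} (ha'1 : a' ≤ 1) (haa' : a ≤ a') (x : X) :
    thrPol P f C a x ≤ thrPol P f C a' x := by
  have ha'0 : 0 ≤ a' := ha0.trans haa'
  have hsub : thrSet P f C a ⊆ thrSet P f C a' := fun c hc => ⟨hc.1, hc.2.trans haa'⟩
  have hcc' : thr P f C a' ≤ thr P f C a :=
    csInf_le_csInf thrSet_bddBelow ⟨C, C_mem_thrSet hC0 hC ha0⟩ hsub
  by_cases h1 : thr P f C a < f x
  · have h1' : thr P f C a' < f x := lt_of_le_of_lt hcc' h1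
    have h2 : ¬ (f x = thr P f C a) := ne_of_gt h1
    have h2' : ¬ (f x = thr P f C a') := ne_of_gt h1'
    rw [thrPol, thrPol]
    simp [h1, h1', h2, h2']
  · by_cases h2 : f x = thr P f C a
    · by_cases h3 : thr P f C a' < f x
      · have h3' : ¬ (f x = thr P f C a') := ne_of_gt h3
        rw [thrPol, thrPol]
        simp only [if_pos h3, if_neg h1, if_pos h2, if_neg h3', mul_zero, mul_one,
          zero_add, add_zero]
        exact tie_le_one (P:=P) (a:=a) hf hC0 hC ha0 ha1
      · have h3' : f x = thr P f C a' := le_antisymm (not_lt.mp h3) (hcc'.trans_eq h2.symm)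
        have hthr : thr P f C a' = thr P f C a := by rw [← h2, ← h3']
        rw [thrPol, thrPol]
        simp only [if_neg h1, if_pos h2, if_neg (hthr ▸ h1), if_pos h3', mul_one, zero_add]
        rw [tie, tie, hthr]
        split
        · exact le_refl 0
        · next h =>
          have hm : 0 < (P {x | f x = thr P f C a}).toReal :=
            lt_of_le_of_ne ENNReal.toReal_nonneg (Ne.symm h)
          rw [div_le_div_iff₀ hm hm]
          nlinarith
    · have : thrPol P f C a x = 0 := by
        rw [thrPol]; simp [h1, h2]
      rw [this]
      exact (thrPol_mem hf hC0 hC ha'0 ha'1 x).1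

include hf hC0 hC ha0 ha1 in
lemma integral_thrPol_lip {a' : ℝ} (ha'1 : a' ≤ 1) (haa' : a ≤ a') :
    |∫ x, thrPol P f C a' x * f x ∂P - ∫ x, thrPol P f C a x * f x ∂P| ≤ C * (a' - a) := by
  have ha'0 : 0 ≤ a' := ha0.trans haa'
  set g := fun x => thrPol P f C a' x - thrPol P f C a x with hgdef
  have hg0 : ∀ x, 0 ≤ g x := fun x =>
    sub_nonneg.mpr (thrPol_mono hf hC0 hC ha0 ha1 ha'1 haa' x)
  have hgm : Measurable g := (thrPol_measurable hf).sub (thrPol_measurable hf)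
  have hmem := fun x => thrPol_mem (P:=P) (a:=a) hf hC0 hC ha0 ha1 x
  have hmem' := fun x => thrPol_mem (P:=P) (a:=a') hf hC0 hC ha'0 ha'1 x
  have hgb : ∀ x, |g x| ≤ 1 := by
    intro x
    have e : g x = thrPol P f C a' x - thrPol P f C a x := rfl
    rw [abs_le, e]
    constructor <;> [linarith [(hmem' x).1, (hmem x).2]; linarith [(hmem' x).2, (hmem x).1]]
  have ig : Integrable g P := integrable_of_bdd hgm hgb
  have hgint : ∫ x, g x ∂P = a' - a := by
    show ∫ x, (thrPol P f C a' x - thrPol P f C a x) ∂P = a' - a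
    rw [integral_sub (integrable_of_bdd (thrPol_measurable hf)
        (fun x => abs_le.mpr ⟨by linarith [(hmem' x).1], (hmem' x).2⟩))
      (integrable_of_bdd (thrPol_measurable hf)
        (fun x => abs_le.mpr ⟨by linarith [(hmem x).1], (hmem x).2⟩)),
      integral_thrPol hf hC0 hC ha0 ha1, integral_thrPol hf hC0 hC ha'0 ha'1]
  have hbnd : ∀ (b : ℝ), 0 ≤ b → b ≤ 1 →
      ∀ x, |thrPol P f C b x * f x| ≤ C := by
    intro b hb0 hb1 x
    rw [abs_mul]
    have hm := thrPol_mem (P:=P) (a:=b) hf hC0 hC hb0 hb1 x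
    calc |thrPol P f C b x| * |f x| ≤ 1 * C :=
      mul_le_mul (abs_le.mpr ⟨by linarith [hm.1], hm.2⟩) (hC x) (abs_nonneg _) zero_le_one
    _ = C := one_mul C
  have i'f : Integrable (fun x => thrPol P f C a' x * f x) P :=
    integrable_of_bdd ((thrPol_measurable hf).mul hf) (hbnd a' ha'0 ha'1)
  have i_f : Integrable (fun x => thrPol P f C a x * f x) P :=
    integrable_of_bdd ((thrPol_measurable hf).mul hf) (hbnd a ha0 ha1)
  have igf : Integrable (fun x => g x * f x) P := by
    have : (fun x => g x * f x) = fun x => thrPol P f C a' x * f x - thrPol P f C a x * f x := by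
      funext x; rw [hgdef]; ring
    rw [this]; exact i'f.sub i_f
  have e2 : ∫ x, thrPol P f C a' x * f x ∂P - ∫ x, thrPol P f C a x * f x ∂P
      = ∫ x, g x * f x ∂P := by
    rw [← integral_sub i'f i_f]
    congr 1; funext x; rw [hgdef]; ring
  rw [e2]
  calc |∫ x, g x * f x ∂P| ≤ ∫ x, |g x * f x| ∂P :=
        by
        rw [← Real.norm_eq_abs]
        exact (norm_integral_le_integral_norm _).trans
          (le_of_eq (by simp [Real.norm_eq_abs, abs_mul]))
    _ ≤ ∫ x, C * g x ∂P := by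
        apply integral_mono igf.abs (ig.const_mul C)
        intro x
        show |g x * f x| ≤ C * g x
        rw [abs_mul, abs_of_nonneg (hg0 x)]
        calc g x * |f x| ≤ g x * C := mul_le_mul_of_nonneg_left (hC x) (hg0 x)
          _ = C * g x := mul_comm _ _
    _ = C * (a' - a) := by rw [integral_const_mul, hgint]

end Thresh

section Aux

variable {X : Type*} [MeasurableSpace X] {S : Type*} [Fintype S]

/-- auxiliary: the value of the threshold policy at level `t` -/
noncomputable def Tval (PX : Measure X) (η : Bool → X → S → ℝ) (C : ℝ) (s : S) (t : ℝ) : ℝ :=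
  ∫ x, thrPol PX (fun y => η true y s - η false y s) C t x * (η true x s - η false x s) ∂PX

/-- auxiliary: the objective as a function of the per-state action frequencies -/
noncomputable def Fobj (PX : Measure X) (η : Bool → X → S → ℝ)
    (dstat : (X → S → ℝ) → S → ℝ) (C : ℝ) (a : S → ℝ) : ℝ :=
  ∑ s : S, dstat (fun (_ : X) (s' : S) => a s') s *
    ((∫ x, η false x s ∂PX) + Tval PX η C s (a s))

end Aux

/-- In the finite-state exogenous MDP there exist constants
`c_s ∈ ℝ` and `p_s ∈ [0,1]` such that the state-specific CADE-thresholding rule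
`π*(x,s) = 1{τ(x,s) > c_s} + p_s · 1{τ(x,s) = c_s}` is optimal. -/
theorem optimal_threshold_policy_exists
    {X : Type*} [MeasurableSpace X] (PX : Measure X) [IsProbabilityMeasure PX]
    {S : Type*} [Fintype S] [Nonempty S]
    (PS : S → Bool → S → ℝ)
    (hPS_nonneg : ∀ s w s', 0 ≤ PS s w s')
    (hPS_sum : ∀ s w, ∑ s' : S, PS s w s' = 1)
    (η : Bool → X → S → ℝ)
    (hη_meas : ∀ w s, Measurable fun x => η w x s)
    (B : ℝ) (hη_bdd : ∀ w x s, |η w x s| ≤ B)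
    (dstat : (X → S → ℝ) → S → ℝ)
    (hd_stat : ∀ π : X → S → ℝ, IsPolicy π → IsStationaryMDP PX PS π (dstat π))
    (hd_uniq : ∀ π : X → S → ℝ, IsPolicy π →
      ∀ d : S → ℝ, IsStationaryMDP PX PS π d → d = dstat π) :
    ∃ (c : S → ℝ) (p : S → ℝ), (∀ s, p s ∈ Set.Icc (0:ℝ) 1) ∧
      ∀ π : X → S → ℝ, IsPolicy π →
        polValue PX η dstat π ≤
          polValue PX η dstat (fun x s =>
            (if c s < η true x s - η false x s then (1:ℝ) else 0) +
              p s * (if η true x s - η false x s = c s then (1:ℝ) else 0)) := by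
  classical
  set C := 2 * |B| with hCdef
  have hC0 : 0 ≤ C := by rw [hCdef]; positivity
  have hfm : ∀ s : S, Measurable fun x => η true x s - η false x s :=
    fun s => (hη_meas true s).sub (hη_meas false s)
  have hC : ∀ (s : S) (x : X), |η true x s - η false x s| ≤ C := by
    intro s x
    have h1 := abs_le.mp (hη_bdd true x s)
    have h2 := abs_le.mp (hη_bdd false x s)
    have hB : B ≤ |B| := le_abs_self B
    rw [hCdef, abs_le]
    constructor <;> linarith [h1.1, h1.2, h2.1, h2.2]
  -- constant policies are policies
  have hconstPol : ∀ b : S → ℝ, (∀ s, b s ∈ Set.Icc (0:ℝ) 1) →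
      IsPolicy (fun (_ : X) (s : S) => b s) :=
    fun b hb => ⟨fun s => measurable_const, fun x s => hb s⟩
  -- integrability of policy coordinates
  have hπint : ∀ π : X → S → ℝ, IsPolicy π → ∀ s, Integrable (fun x => π x s) PX := by
    intro π hπ s
    exact integrable_of_bdd (hπ.1 s)
      (fun x => abs_le.mpr ⟨by linarith [(hπ.2 x s).1], (hπ.2 x s).2⟩)
  have hIb : ∀ π : X → S → ℝ, IsPolicy π → ∀ s, (∫ x, π x s ∂PX) ∈ Set.Icc (0:ℝ) 1 := by
    intro π hπ s
    constructor
    · exact integral_nonneg fun x => (hπ.2 x s).1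
    · calc ∫ x, π x s ∂PX ≤ ∫ _, (1:ℝ) ∂PX :=
            integral_mono (hπint π hπ s) (integrable_const 1) (fun x => (hπ.2 x s).2)
        _ = 1 := by simp
  -- formula for the transition matrix of any policy
  have htrans : ∀ π : X → S → ℝ, IsPolicy π → ∀ s s', transMat PX PS π s s'
      = (∫ x, π x s ∂PX) * PS s true s' + (1 - ∫ x, π x s ∂PX) * PS s false s' := by
    intro π hπ s s'
    have hint := hπint π hπ s
    have e : (fun x => π x s * PS s true s' + (1 - π x s) * PS s false s')
        = fun x => PS s false s' + π x s * (PS s true s' - PS s false s') := by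
      funext x; ring
    rw [transMat, e, integral_add (integrable_const _) (hint.mul_const _),
      integral_const, integral_mul_const]
    simp only [measureReal_def, measure_univ, ENNReal.toReal_one, smul_eq_mul, one_mul]
    ring
  -- dstat only depends on the action frequencies
  have hdconst : ∀ π : X → S → ℝ, IsPolicy π →
      dstat π = dstat (fun (_ : X) (s : S) => ∫ x, π x s ∂PX) := by
    intro π hπ
    apply hd_uniq _ (hconstPol _ (hIb π hπ))
    obtain ⟨h1, h2, h3⟩ := hd_stat π hπ
    refine ⟨h1, h2, fun s' => ?_⟩
    have he : ∀ s, transMat PX PS (fun (_ : X) (s : S) => ∫ x, π x s ∂PX) s s'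
        = transMat PX PS π s s' := by
      intro s
      rw [htrans _ hπ, htrans _ (hconstPol _ (hIb π hπ))]
      simp [integral_const, measure_univ]
    simp only [he]
    exact h3 s'
  -- value decomposition
  have hval : ∀ π : X → S → ℝ, IsPolicy π → polValue PX η dstat π
      = ∑ s : S, dstat π s * ((∫ x, η false x s ∂PX)
        + ∫ x, π x s * (η true x s - η false x s) ∂PX) := by
    intro π hπ
    rw [polValue]
    refine Finset.sum_congr rfl fun s _ => ?_
    congr 1
    have iη0 : Integrable (fun x => η false x s) PX :=
      integrable_of_bdd (hη_meas false s) (fun x => (hη_bdd false x s).trans (le_abs_self B))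
    have iπf : Integrable (fun x => π x s * (η true x s - η false x s)) PX := by
      apply integrable_of_bdd ((hπ.1 s).mul (hfm s))
      intro x
      simp only [Pi.mul_apply]
      rw [abs_mul]
      calc |π x s| * |η true x s - η false x s| ≤ 1 * C :=
            mul_le_mul (abs_le.mpr ⟨by linarith [(hπ.2 x s).1], (hπ.2 x s).2⟩) (hC s x)
              (abs_nonneg _) zero_le_one
        _ = C := one_mul C
    have e : (fun x => π x s * η true x s + (1 - π x s) * η false x s)
        = fun x => η false x s + π x s * (η true x s - η false x s) := by
      funext x; ring
    rw [e, integral_add iη0 iπf]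
  -- Neyman-Pearson step
  have hnp : ∀ π : X → S → ℝ, IsPolicy π → ∀ s,
      ∫ x, π x s * (η true x s - η false x s) ∂PX
        ≤ Tval PX η C s (∫ x, π x s ∂PX) := by
    intro π hπ s
    exact np (hfm s) hC0 (hC s) (hIb π hπ s).1 (hIb π hπ s).2 (hπ.1 s)
      (fun x => hπ.2 x s) rfl
  -- threshold policies are policies
  have hthrPolicy : ∀ a : S → ℝ, (∀ s, a s ∈ Set.Icc (0:ℝ) 1) →
      IsPolicy (fun x s => thrPol PX (fun y => η true y s - η false y s) C (a s) x) := by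
    intro a ha
    exact ⟨fun s => thrPol_measurable (hfm s),
      fun x s => thrPol_mem (hfm s) hC0 (hC s) (ha s).1 (ha s).2 x⟩
  have hthrInt : ∀ a : S → ℝ, (∀ s, a s ∈ Set.Icc (0:ℝ) 1) → ∀ s,
      ∫ x, thrPol PX (fun y => η true y s - η false y s) C (a s) x ∂PX = a s :=
    fun a ha s => integral_thrPol (hfm s) hC0 (hC s) (ha s).1 (ha s).2
  -- dstat bounds for policies
  have hdb : ∀ π : X → S → ℝ, IsPolicy π → ∀ s, dstat π s ∈ Set.Icc (0:ℝ) 1 := by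
    intro π hπ s
    obtain ⟨h1, h2, _⟩ := hd_stat π hπ
    refine ⟨h1 s, ?_⟩
    calc dstat π s ≤ ∑ s' : S, dstat π s' :=
          Finset.single_le_sum (fun s' _ => h1 s') (Finset.mem_univ s)
      _ = 1 := h2
  -- Tval bounds and Lipschitz continuity
  have hTb : ∀ (s : S) (t : ℝ), 0 ≤ t → t ≤ 1 → |Tval PX η C s t| ≤ C := by
    intro s t ht0 ht1
    have hmem := fun x => thrPol_mem (P:=PX) (a:=t) (hfm s) hC0 (hC s) ht0 ht1 x
    have hb : ∀ x, |thrPol PX (fun y => η true y s - η false y s) C t x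
        * (η true x s - η false x s)| ≤ C := by
      intro x
      rw [abs_mul]
      calc |thrPol PX (fun y => η true y s - η false y s) C t x|
            * |η true x s - η false x s| ≤ 1 * C :=
            mul_le_mul (abs_le.mpr ⟨by linarith [(hmem x).1], (hmem x).2⟩)
              (hC s x) (abs_nonneg _) zero_le_one
        _ = C := one_mul C
    have hint : Integrable (fun x => thrPol PX (fun y => η true y s - η false y s) C t x
        * (η true x s - η false x s)) PX :=
      integrable_of_bdd ((thrPol_measurable (hfm s)).mul (hfm s)) hb
    calc |Tval PX η C s t| ≤ ∫ x, |thrPol PX (fun y => η true y s - η false y s) C t x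
          * (η true x s - η false x s)| ∂PX := by
          rw [Tval, ← Real.norm_eq_abs]
          exact (norm_integral_le_integral_norm _).trans
            (le_of_eq (by simp [Real.norm_eq_abs, abs_mul]))
      _ ≤ ∫ (_ : X), C ∂PX := integral_mono hint.abs (integrable_const C) hb
      _ = C := by simp
  have hTlip : ∀ (s : S) (t t' : ℝ), 0 ≤ t → t ≤ 1 → 0 ≤ t' → t' ≤ 1 →
      |Tval PX η C s t - Tval PX η C s t'| ≤ C * |t - t'| := by
    intro s t t' ht0 ht1 ht'0 ht'1
    simp only [Tval]
    rcases le_total t t' with h | h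
    · rw [abs_sub_comm t t', abs_of_nonneg (by linarith : (0:ℝ) ≤ t' - t),
        abs_sub_comm]
      exact integral_thrPol_lip (hfm s) hC0 (hC s) ht0 ht1 ht'1 h
    · rw [abs_of_nonneg (by linarith : (0:ℝ) ≤ t - t')]
      exact integral_thrPol_lip (hfm s) hC0 (hC s) ht'0 ht'1 ht1 h
  -- the compact feasible set
  set K : Set (S → ℝ) := Set.pi Set.univ (fun _ : S => Set.Icc (0:ℝ) 1) with hKdef
  have hKmem : ∀ a : S → ℝ, a ∈ K ↔ ∀ s, a s ∈ Set.Icc (0:ℝ) 1 := by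
    intro a; rw [hKdef]; constructor
    · intro h s; exact h s (Set.mem_univ s)
    · intro h s _; exact h s
  have hKcpt : IsCompact K := isCompact_univ_pi fun _ => isCompact_Icc
  have hKne : (Fobj PX η dstat C '' K).Nonempty :=
    ⟨_, Set.mem_image_of_mem _ ((hKmem _).mpr fun s => ⟨le_refl (0:ℝ), zero_le_one⟩)⟩
  have heb : ∀ s : S, |∫ x, η false x s ∂PX| ≤ |B| := by
    intro s
    calc |∫ x, η false x s ∂PX| ≤ ∫ x, |η false x s| ∂PX := by
          rw [← Real.norm_eq_abs]
          exact (norm_integral_le_integral_norm _).trans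
            (le_of_eq (by simp [Real.norm_eq_abs]))
      _ ≤ ∫ (_ : X), |B| ∂PX := by
          apply integral_mono _ (integrable_const _)
          · exact fun x => (hη_bdd false x s).trans (le_abs_self B)
          · exact (integrable_of_bdd (hη_meas false s)
              (fun x => (hη_bdd false x s).trans (le_abs_self B))).abs
      _ = |B| := by simp
  have hterm : ∀ (a : S → ℝ), (∀ s, a s ∈ Set.Icc (0:ℝ) 1) → ∀ s : S,
      dstat (fun (_ : X) (s' : S) => a s') s *
        ((∫ x, η false x s ∂PX) + Tval PX η C s (a s)) ≤ |B| + C := by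
    intro a ha s
    have hd := hdb _ (hconstPol a ha) s
    have hsum : (∫ x, η false x s ∂PX) + Tval PX η C s (a s) ≤ |B| + C := by
      have h1 := abs_le.mp (heb s)
      have h2 := abs_le.mp (hTb s (a s) (ha s).1 (ha s).2)
      linarith [h1.2, h2.2]
    calc dstat (fun (_ : X) (s' : S) => a s') s *
          ((∫ x, η false x s ∂PX) + Tval PX η C s (a s))
        ≤ dstat (fun (_ : X) (s' : S) => a s') s * (|B| + C) :=
          mul_le_mul_of_nonneg_left hsum hd.1
      _ ≤ 1 * (|B| + C) :=
          mul_le_mul_of_nonneg_right hd.2 (by positivity)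
      _ = |B| + C := one_mul _
  have hMb : BddAbove (Fobj PX η dstat C '' K) := by
    refine ⟨∑ _s : S, (|B| + C), ?_⟩
    rintro y ⟨a, haK, rfl⟩
    rw [Fobj]
    exact Finset.sum_le_sum fun s _ => hterm a ((hKmem a).mp haK) s
  set V := sSup (Fobj PX η dstat C '' K) with hVdef
  have haseq : ∀ n : ℕ, ∃ a ∈ K, V - 1/(n+1) < Fobj PX η dstat C a := by
    intro n
    have hpos : (0:ℝ) < 1/(n+1) := by positivity
    have hlt : V - 1/(n+1) < V := by linarith
    obtain ⟨y, hy, hy2⟩ := exists_lt_of_lt_csSup hKne hlt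
    obtain ⟨a, haK, rfl⟩ := hy
    exact ⟨a, haK, hy2⟩
  choose aseq haseqK haseqV using haseq
  have haseqA : ∀ n s, aseq n s ∈ Set.Icc (0:ℝ) 1 := fun n => (hKmem _).mp (haseqK n)
  obtain ⟨astar, hastarK, φ, hφ, hφtend⟩ := hKcpt.tendsto_subseq haseqK
  have hastarA : ∀ s, astar s ∈ Set.Icc (0:ℝ) 1 := (hKmem astar).mp hastarK
  have hdK : ∀ n, dstat (fun (_ : X) (s' : S) => aseq (φ n) s') ∈ K := fun n =>
    (hKmem _).mpr fun s => hdb _ (hconstPol _ (haseqA (φ n))) s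
  obtain ⟨dstar, hdstarK, ψ, hψ, hψtend⟩ :=
    hKcpt.tendsto_subseq (x := fun n => dstat (fun (_ : X) (s' : S) => aseq (φ n) s')) hdK
  set ρ : ℕ → ℕ := fun n => φ (ψ n) with hρdef
  have hρmono : StrictMono ρ := hφ.comp hψ
  have haρ : Filter.Tendsto (fun n => aseq (ρ n)) Filter.atTop (nhds astar) :=
    hφtend.comp hψ.tendsto_atTop
  have hdρ : Filter.Tendsto (fun n => dstat (fun (_ : X) (s' : S) => aseq (ρ n) s'))
      Filter.atTop (nhds dstar) := hψtend
  have haρs : ∀ s, Filter.Tendsto (fun n => aseq (ρ n) s) Filter.atTop (nhds (astar s)) :=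
    fun s => (tendsto_pi_nhds.mp haρ) s
  have hdρs : ∀ s, Filter.Tendsto (fun n => dstat (fun (_ : X) (s' : S) => aseq (ρ n) s') s)
      Filter.atTop (nhds (dstar s)) := fun s => (tendsto_pi_nhds.mp hdρ) s
  -- transition matrix of a constant policy
  have htransc : ∀ (b : S → ℝ), (∀ s, b s ∈ Set.Icc (0:ℝ) 1) → ∀ s s',
      transMat PX PS (fun (_ : X) (s' : S) => b s') s s'
        = b s * PS s true s' + (1 - b s) * PS s false s' := by
    intro b hb s s'
    rw [htrans _ (hconstPol b hb)]
    simp [integral_const, measure_univ]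
  -- the limit dstar is the stationary distribution of the constant policy astar
  have hdstar : dstar = dstat (fun (_ : X) (s : S) => astar s) := by
    apply hd_uniq _ (hconstPol _ hastarA)
    refine ⟨?_, ?_, ?_⟩
    · intro s
      exact le_of_tendsto_of_tendsto' tendsto_const_nhds (hdρs s)
        (fun n => ((hd_stat _ (hconstPol _ (haseqA (ρ n)))).1) s)
    · have h1 : Filter.Tendsto
          (fun n => ∑ s : S, dstat (fun (_ : X) (s' : S) => aseq (ρ n) s') s)
          Filter.atTop (nhds (∑ s : S, dstar s)) :=
        tendsto_finset_sum _ fun s _ => hdρs s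
      have h2 : ∀ n, ∑ s : S, dstat (fun (_ : X) (s' : S) => aseq (ρ n) s') s = 1 :=
        fun n => (hd_stat _ (hconstPol _ (haseqA (ρ n)))).2.1
      simp only [h2] at h1
      exact tendsto_nhds_unique h1 tendsto_const_nhds
    · intro s'
      have hn : ∀ n, ∑ s : S, dstat (fun (_ : X) (s' : S) => aseq (ρ n) s') s *
          (aseq (ρ n) s * PS s true s' + (1 - aseq (ρ n) s) * PS s false s')
            = dstat (fun (_ : X) (s' : S) => aseq (ρ n) s') s' := by
        intro n
        have h := (hd_stat _ (hconstPol _ (haseqA (ρ n)))).2.2 s'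
        have he : ∀ s : S, transMat PX PS (fun (_ : X) (s' : S) => aseq (ρ n) s') s s'
            = aseq (ρ n) s * PS s true s' + (1 - aseq (ρ n) s) * PS s false s' :=
          fun s => htransc _ (haseqA (ρ n)) s s'
        simp only [he] at h
        exact h
      have hL : Filter.Tendsto (fun n => ∑ s : S,
          dstat (fun (_ : X) (s' : S) => aseq (ρ n) s') s *
            (aseq (ρ n) s * PS s true s' + (1 - aseq (ρ n) s) * PS s false s'))
          Filter.atTop (nhds (∑ s : S, dstar s *
            (astar s * PS s true s' + (1 - astar s) * PS s false s'))) := by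
        refine tendsto_finset_sum _ fun s _ => (hdρs s).mul ?_
        exact ((haρs s).mul_const _).add ((tendsto_const_nhds.sub (haρs s)).mul_const _)
      simp only [hn] at hL
      have heq := tendsto_nhds_unique hL (hdρs s')
      have he : ∀ s : S, transMat PX PS (fun (_ : X) (s' : S) => astar s') s s'
          = astar s * PS s true s' + (1 - astar s) * PS s false s' :=
        fun s => htransc _ hastarA s s'
      simp only [he]
      exact heq
  -- convergence of the objective values
  have hTlim : ∀ s, Filter.Tendsto (fun n => Tval PX η C s (aseq (ρ n) s))
      Filter.atTop (nhds (Tval PX η C s (astar s))) := by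
    intro s
    have h0 : Filter.Tendsto (fun n => aseq (ρ n) s - astar s) Filter.atTop (nhds 0) := by
      simpa using (haρs s).sub_const (astar s)
    have h0' : Filter.Tendsto (fun n => C * |aseq (ρ n) s - astar s|)
        Filter.atTop (nhds 0) := by
      have := h0.abs
      simp only [abs_zero] at this
      simpa using this.const_mul C
    have hdiff : Filter.Tendsto (fun n => Tval PX η C s (aseq (ρ n) s) - Tval PX η C s (astar s))
        Filter.atTop (nhds 0) := by
      apply squeeze_zero_norm _ h0'
      intro n
      rw [Real.norm_eq_abs]
      exact hTlip s _ _ (haseqA (ρ n) s).1 (haseqA (ρ n) s).2 (hastarA s).1 (hastarA s).2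
    have := hdiff.add_const (Tval PX η C s (astar s))
    simpa using this
  have hFlim : Filter.Tendsto (fun n => Fobj PX η dstat C (aseq (ρ n)))
      Filter.atTop (nhds (Fobj PX η dstat C astar)) := by
    have h1 : Filter.Tendsto (fun n => ∑ s : S,
        dstat (fun (_ : X) (s' : S) => aseq (ρ n) s') s *
          ((∫ x, η false x s ∂PX) + Tval PX η C s (aseq (ρ n) s)))
        Filter.atTop (nhds (∑ s : S, dstar s *
          ((∫ x, η false x s ∂PX) + Tval PX η C s (astar s)))) :=
      tendsto_finset_sum _ fun s _ => (hdρs s).mul (tendsto_const_nhds.add (hTlim s))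
    have h2 : (∑ s : S, dstar s * ((∫ x, η false x s ∂PX) + Tval PX η C s (astar s)))
        = Fobj PX η dstat C astar := by
      rw [hdstar, Fobj]
    rw [← h2]
    exact h1
  have hVtend : Filter.Tendsto (fun n => Fobj PX η dstat C (aseq (ρ n)))
      Filter.atTop (nhds V) := by
    have hlow : Filter.Tendsto (fun n : ℕ => V - 1/((ρ n : ℝ)+1)) Filter.atTop (nhds V) := by
      have hz : Filter.Tendsto (fun n : ℕ => 1/((ρ n : ℝ)+1)) Filter.atTop (nhds 0) := by
        apply squeeze_zero (fun n => by positivity) (g := fun n : ℕ => 1/((n : ℝ)+1))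
        · intro n
          apply one_div_le_one_div_of_le (by positivity)
          have : (n : ℝ) ≤ (ρ n : ℝ) := by exact_mod_cast hρmono.le_apply
          linarith
        · exact tendsto_one_div_add_atTop_nhds_zero_nat
      simpa using hz.const_sub V
    apply tendsto_of_tendsto_of_tendsto_of_le_of_le hlow tendsto_const_nhds
    · exact fun n => (haseqV (ρ n)).le
    · exact fun n => le_csSup hMb (Set.mem_image_of_mem _ (haseqK (ρ n)))
  have hVeq : Fobj PX η dstat C astar = V := tendsto_nhds_unique hFlim hVtend
  -- conclusion
  refine ⟨fun s => thr PX (fun y => η true y s - η false y s) C (astar s),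
    fun s => tie PX (fun y => η true y s - η false y s) C (astar s), ?_, ?_⟩
  · intro s
    exact ⟨tie_nonneg (hfm s) hC0 (hC s) (hastarA s).1 (hastarA s).2,
      tie_le_one (hfm s) hC0 (hC s) (hastarA s).1 (hastarA s).2⟩
  · intro π hπ
    have hπstar : IsPolicy (fun (x : X) (s : S) =>
        thrPol PX (fun y => η true y s - η false y s) C (astar s) x) :=
      hthrPolicy astar hastarA
    have hbπK : (fun s => ∫ x, π x s ∂PX) ∈ K := (hKmem _).mpr (hIb π hπ)
    have step1 : polValue PX η dstat π ≤ Fobj PX η dstat C (fun s => ∫ x, π x s ∂PX) := by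
      rw [hval π hπ, Fobj, ← hdconst π hπ]
      refine Finset.sum_le_sum fun s _ => ?_
      exact mul_le_mul_of_nonneg_left (add_le_add_right (hnp π hπ s) _)
        ((hd_stat π hπ).1 s)
    have step2 : Fobj PX η dstat C (fun s => ∫ x, π x s ∂PX) ≤ V :=
      le_csSup hMb (Set.mem_image_of_mem _ hbπK)
    have step3 : Fobj PX η dstat C astar = polValue PX η dstat
        (fun (x : X) (s : S) =>
          thrPol PX (fun y => η true y s - η false y s) C (astar s) x) := by
      have heqf : (fun (_ : X) (s : S) => ∫ x,
          thrPol PX (fun y => η true y s - η false y s) C (astar s) x ∂PX)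
          = fun (_ : X) (s : S) => astar s := by
        funext _ s
        exact hthrInt astar hastarA s
      have h1 : dstat (fun (x : X) (s : S) =>
          thrPol PX (fun y => η true y s - η false y s) C (astar s) x)
          = dstat (fun (_ : X) (s : S) => astar s) := by
        rw [hdconst _ hπstar, heqf]
      rw [hval _ hπstar, h1, Fobj]
      rfl
    calc polValue PX η dstat π
        ≤ Fobj PX η dstat C (fun s => ∫ x, π x s ∂PX) := step1
      _ ≤ V := step2
      _ = Fobj PX η dstat C astar := hVeq.symm
      _ = polValue PX η dstat _ := step3
end

section
/- In the finite-state exogenous MDP, assume in addition that for every s ∈ S the pushforward of P_X under x ↦ τ(x,s) is atomless (τ(X,s) is continuously distributed). Then there exist constants c_s ∈ ℝ for each s ∈ S such that the deterministic threshold policy π*(x,s) := 1{τ(x,s) > c_s} satisfies μ(π*) ≥ μ(π) for every measurable policy π : X × S → [0,1]. -/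
open MeasureTheory

section Setup

variable {X : Type*} [MeasurableSpace X] {S : Type*} [Fintype S]

/-- `d` is a stationary probability vector for `M_π`. -/
def IsStationaryDist (PX : Measure X) (PS : S → Bool → S → ℝ)
    (π : X → S → ℝ) (d : S → ℝ) : Prop :=
  (∀ s, 0 ≤ d s) ∧ (∑ s : S, d s = 1) ∧
    ∀ s' : S, ∑ s : S, d s * transMat PX PS π s s' = d s'

end Setup


open Set Filter Topology

section Aux

variable {X : Type*} [MeasurableSpace X]

lemma aux_int_bdd (PX : Measure X) [IsFiniteMeasure PX] {f : X → ℝ}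
    (hm : Measurable f) {C : ℝ} (h : ∀ x, |f x| ≤ C) : Integrable f PX :=
  ⟨hm.aestronglyMeasurable, HasFiniteIntegral.of_bounded (C := C)
    (ae_of_all _ fun x => by simpa using h x)⟩

lemma aux_split (PX : Measure X) [IsFiniteMeasure PX] {g : X → ℝ}
    (hg : Measurable g) {c c' : ℝ} (hcc : c ≤ c') :
    (PX {x | c < g x}).toReal
      = (PX {x | c < g x ∧ g x ≤ c'}).toReal + (PX {x | c' < g x}).toReal := by
  have hu : {x | c < g x} = {x | c < g x ∧ g x ≤ c'} ∪ {x | c' < g x} := by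
    ext x
    simp only [Set.mem_setOf_eq, Set.mem_union]
    constructor
    · intro h
      by_cases h2 : g x ≤ c'
      · exact Or.inl ⟨h, h2⟩
      · exact Or.inr (lt_of_not_ge h2)
    · rintro (⟨h, _⟩ | h)
      · exact h
      · exact lt_of_le_of_lt hcc h
  have hd : Disjoint {x | c < g x ∧ g x ≤ c'} {x | c' < g x} := by
    rw [Set.disjoint_left]
    rintro x ⟨_, h2⟩ h3
    exact absurd h3 (not_lt.mpr h2)
  rw [hu, measure_union hd (measurableSet_lt measurable_const hg),
    ENNReal.toReal_add (measure_ne_top _ _) (measure_ne_top _ _)]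

lemma aux_cont_tail (PX : Measure X) [IsProbabilityMeasure PX] {g : X → ℝ}
    (hg : Measurable g) (h0 : ∀ t : ℝ, PX {x | g x = t} = 0) :
    Continuous fun c : ℝ => (PX {x | c < g x}).toReal := by
  rw [continuous_iff_continuousAt]
  intro c₀
  rw [Metric.continuousAt_iff]
  intro ε hε
  set A : ℕ → Set X := fun n => {x | c₀ - 1 / (n + 1) < g x ∧ g x ≤ c₀ + 1 / (n + 1)} with hA
  have hAm : ∀ n, MeasurableSet (A n) := fun n =>
    (measurableSet_lt measurable_const hg).inter (measurableSet_le hg measurable_const)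
  have hanti : Antitone A := by
    intro n m hnm x hx
    have hc : ((n : ℝ) + 1) ≤ (m : ℝ) + 1 := by exact_mod_cast Nat.succ_le_succ hnm
    have h1 : (1 : ℝ) / (m + 1) ≤ 1 / (n + 1) :=
      one_div_le_one_div_of_le (by positivity) hc
    exact ⟨by linarith [hx.1], by linarith [hx.2]⟩
  have hint : ⋂ n, A n = {x | g x = c₀} := by
    ext x
    simp only [Set.mem_iInter, hA, Set.mem_setOf_eq]
    constructor
    · intro h
      by_contra hne
      rcases lt_or_gt_of_ne hne with hl | hr
      · obtain ⟨n, hn⟩ := exists_nat_one_div_lt (show (0:ℝ) < c₀ - g x by linarith)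
        have := (h n).1
        linarith
      · obtain ⟨n, hn⟩ := exists_nat_one_div_lt (show (0:ℝ) < g x - c₀ by linarith)
        have := (h n).2
        linarith
    · intro h n
      have hp : (0:ℝ) < 1 / (n + 1) := by positivity
      constructor <;> [linarith; linarith]
  have hto : Tendsto (fun n => PX (A n)) atTop (𝓝 0) := by
    have := tendsto_measure_iInter_atTop (μ := PX)
      (fun n => (hAm n).nullMeasurableSet) hanti ⟨0, measure_ne_top _ _⟩
    rwa [hint, h0] at this
  have hev : ∀ᶠ n in atTop, PX (A n) < ENNReal.ofReal ε := by
    apply hto.eventually_lt_const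
    simpa using hε
  obtain ⟨n, hn⟩ := hev.exists
  refine ⟨1 / (n + 1), by positivity, ?_⟩
  intro c hc
  rw [Real.dist_eq] at hc ⊢
  have hAn : (PX (A n)).toReal < ε := by
    rw [← ENNReal.ofReal_toReal (measure_ne_top PX (A n))] at hn
    exact (ENNReal.ofReal_lt_ofReal_iff hε).mp hn
  have key : ∀ a b : ℝ, a ≤ b → c₀ - 1/(n+1) ≤ a → b ≤ c₀ + 1/(n+1) →
      (PX {x | a < g x}).toReal - (PX {x | b < g x}).toReal < ε := by
    intro a b hab ha hb
    rw [aux_split PX hg hab]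
    have hsub : {x | a < g x ∧ g x ≤ b} ⊆ A n := by
      intro x hx
      exact ⟨lt_of_le_of_lt ha hx.1, le_trans hx.2 hb⟩
    have : (PX {x | a < g x ∧ g x ≤ b}).toReal ≤ (PX (A n)).toReal :=
      ENNReal.toReal_mono (measure_ne_top _ _) (measure_mono hsub)
    linarith
  rcases le_total c c₀ with h | h
  · have h1 : c₀ - 1/(n+1) ≤ c := by
      rw [abs_lt] at hc; linarith [hc.1]
    have hp : (0:ℝ) < 1/(n+1) := by positivity
    have h2 : (c₀ : ℝ) ≤ c₀ + 1/(n+1) := by linarith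
    have := key c c₀ h h1 (by linarith)
    have hmono : (PX {x | c₀ < g x}).toReal ≤ (PX {x | c < g x}).toReal :=
      ENNReal.toReal_mono (measure_ne_top _ _)
        (measure_mono fun x hx => lt_of_le_of_lt h hx)
    rw [abs_lt]
    constructor <;> linarith
  · have h1 : c ≤ c₀ + 1/(n+1) := by
      rw [abs_lt] at hc; linarith [hc.2]
    have := key c₀ c h (by linarith) h1
    have hmono : (PX {x | c < g x}).toReal ≤ (PX {x | c₀ < g x}).toReal :=
      ENNReal.toReal_mono (measure_ne_top _ _)
        (measure_mono fun x hx => lt_of_le_of_lt h hx)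
    rw [abs_lt]
    constructor <;> linarith

lemma aux_ivt (PX : Measure X) [IsProbabilityMeasure PX] {g : X → ℝ}
    (hg : Measurable g) (h0 : ∀ t : ℝ, PX {x | g x = t} = 0)
    {M : ℝ} (hM : 0 ≤ M) (hb : ∀ x, |g x| ≤ M) {p : ℝ} (hp : p ∈ Set.Icc (0:ℝ) 1) :
    ∃ c ∈ Set.Icc (-(M + 1)) M, (PX {x | c < g x}).toReal = p := by
  have hcont := aux_cont_tail PX hg h0
  have h1 : (PX {x | -(M + 1) < g x}).toReal = 1 := by
    have he : {x | -(M + 1) < g x} = Set.univ := by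
      ext x
      simp only [Set.mem_setOf_eq, Set.mem_univ, iff_true]
      have := (abs_le.mp (hb x)).1
      linarith
    rw [he, measure_univ, ENNReal.toReal_one]
  have h2 : (PX {x | M < g x}).toReal = 0 := by
    have he : {x | M < g x} = ∅ := by
      ext x
      simp only [Set.mem_setOf_eq, Set.mem_empty_iff_false, iff_false, not_lt]
      exact (abs_le.mp (hb x)).2
    rw [he, measure_empty, ENNReal.toReal_zero]
  have hab : -(M + 1) ≤ M := by linarith
  have hsub := intermediate_value_Icc' hab hcont.continuousOn
  rw [h1, h2] at hsub
  obtain ⟨c, hc, hfc⟩ := hsub hp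
  exact ⟨c, hc, hfc⟩

lemma aux_ind_int (PX : Measure X) [IsProbabilityMeasure PX] {g : X → ℝ}
    (hg : Measurable g) (c : ℝ) :
    ∫ x, (if c < g x then (1:ℝ) else 0) ∂PX = (PX {x | c < g x}).toReal := by
  have : (fun x => if c < g x then (1:ℝ) else 0)
      = Set.indicator {x | c < g x} (fun _ => (1:ℝ)) := by
    ext x
    by_cases h : c < g x <;> simp [Set.indicator, h]
  rw [this, integral_indicator_const _ (measurableSet_lt measurable_const hg)]
  simp
  rfl

lemma aux_np (PX : Measure X) [IsProbabilityMeasure PX] {g f : X → ℝ}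
    (hg : Measurable g) (hf : Measurable f) (hf01 : ∀ x, f x ∈ Set.Icc (0:ℝ) 1)
    {C : ℝ} (hgb : ∀ x, |g x| ≤ C) (c : ℝ)
    (hmean : ∫ x, f x ∂PX = ∫ x, (if c < g x then (1:ℝ) else 0) ∂PX) :
    ∫ x, f x * g x ∂PX ≤ ∫ x, (if c < g x then g x else 0) ∂PX := by
  set i : X → ℝ := fun x => if c < g x then (1:ℝ) else 0 with hi
  have him : Measurable i :=
    Measurable.ite (measurableSet_lt measurable_const hg) measurable_const measurable_const
  have hiI : Integrable i PX := aux_int_bdd PX him (C := 1) fun x => by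
    by_cases h : c < g x <;> simp [hi, h]
  have hfI : Integrable f PX := aux_int_bdd PX hf (C := 1) fun x => by
    have := hf01 x
    rw [abs_le]; constructor <;> [linarith [this.1]; exact this.2]
  have hfgI : Integrable (fun x => f x * g x) PX := aux_int_bdd PX (hf.mul hg) (C := C)
    fun x => by
      rw [abs_mul]
      calc |f x| * |g x| ≤ 1 * C := by
            apply mul_le_mul _ (hgb x) (abs_nonneg _) zero_le_one
            rw [abs_le]; constructor <;> [linarith [(hf01 x).1]; exact (hf01 x).2]
        _ = C := one_mul C
  have higI : Integrable (fun x => if c < g x then g x else 0) PX := by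
    have hm : Measurable (fun x => if c < g x then g x else 0) :=
      Measurable.ite (measurableSet_lt measurable_const hg) hg measurable_const
    exact aux_int_bdd PX hm (C := C) fun x => by
      by_cases h : c < g x <;> simp [h]
      · exact hgb x
      · exact le_trans (abs_nonneg (g x)) (hgb x)
  have key : 0 ≤ ∫ x, (i x - f x) * (g x - c) ∂PX := by
    apply integral_nonneg
    intro x
    show (0:ℝ) ≤ (i x - f x) * (g x - c)
    by_cases h : c < g x
    · have h1 : f x ≤ 1 := (hf01 x).2
      have : (i x - f x) * (g x - c) = (1 - f x) * (g x - c) := by simp [hi, h]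
      rw [this]
      exact mul_nonneg (by linarith) (by linarith)
    · have h0 : 0 ≤ f x := (hf01 x).1
      have : (i x - f x) * (g x - c) = (0 - f x) * (g x - c) := by simp [hi, h]
      rw [this]
      push_neg at h
      nlinarith [mul_nonneg (neg_nonneg.mpr (show 0 - f x ≤ 0 by linarith))
        (neg_nonneg.mpr (show g x - c ≤ 0 by linarith))]
  have expand : ∀ x, (i x - f x) * (g x - c)
      = ((if c < g x then g x else 0) - f x * g x) - c * (i x - f x) := by
    intro x
    by_cases h : c < g x <;> simp [hi, h] <;> ring
  rw [show (fun x => (i x - f x) * (g x - c))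
      = fun x => ((if c < g x then g x else 0) - f x * g x) - c * (i x - f x) from
      funext expand] at key
  have e1 : ∫ x, (((if c < g x then g x else 0) - f x * g x) - c * (i x - f x)) ∂PX
      = ∫ x, ((if c < g x then g x else 0) - f x * g x) ∂PX
        - ∫ x, c * (i x - f x) ∂PX :=
    integral_sub (higI.sub hfgI) ((hiI.sub hfI).const_mul c)
  have e2 : ∫ x, ((if c < g x then g x else 0) - f x * g x) ∂PX
      = ∫ x, (if c < g x then g x else 0) ∂PX - ∫ x, f x * g x ∂PX :=
    integral_sub higI hfgI
  have e3 : ∫ x, c * (i x - f x) ∂PX = c * ∫ x, (i x - f x) ∂PX :=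
    integral_const_mul c _
  have e4 : ∫ x, (i x - f x) ∂PX = ∫ x, i x ∂PX - ∫ x, f x ∂PX :=
    integral_sub hiI hfI
  rw [e1, e2, e3, e4] at key
  have hz : ∫ x, i x ∂PX - ∫ x, f x ∂PX = 0 := sub_eq_zero.mpr hmean.symm
  rw [hz, mul_zero, sub_zero] at key
  linarith

lemma aux_mean (PX : Measure X) [IsProbabilityMeasure PX] {f : X → ℝ}
    (hf : Measurable f) (hf01 : ∀ x, f x ∈ Set.Icc (0:ℝ) 1) (a b : ℝ) :
    ∫ x, (f x * a + (1 - f x) * b) ∂PX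
      = (∫ x, f x ∂PX) * a + (1 - ∫ x, f x ∂PX) * b := by
  have hfI : Integrable f PX := aux_int_bdd PX hf (C := 1) fun x => by
    rw [abs_le]; exact ⟨by linarith [(hf01 x).1], (hf01 x).2⟩
  have he : (fun x => f x * a + (1 - f x) * b) = fun x => (a - b) * f x + b :=
    funext fun x => by ring
  rw [he, integral_add (hfI.const_mul _) (integrable_const b), integral_const_mul,
    integral_const]
  simp [measure_univ]
  ring

lemma aux_cont_K (PX : Measure X) [IsProbabilityMeasure PX] {u v : X → ℝ}
    (hu : Measurable u) (hv : Measurable v) {B : ℝ} (hB : 0 ≤ B)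
    (hub : ∀ x, |u x| ≤ B) (hvb : ∀ x, |v x| ≤ B)
    (h0 : ∀ t : ℝ, PX {x | u x - v x = t} = 0) :
    Continuous fun c : ℝ => ∫ x, (if c < u x - v x then u x else v x) ∂PX := by
  set g : X → ℝ := fun x => u x - v x with hgdef
  have hg : Measurable g := hu.sub hv
  have hgb : ∀ x, |g x| ≤ 2 * B := by
    intro x
    have h1 := abs_le.mp (hub x)
    have h2 := abs_le.mp (hvb x)
    rw [abs_le]
    constructor <;> simp only [hgdef] <;> linarith
  set F : ℝ → ℝ := fun c => (PX {x | c < g x}).toReal with hF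
  set K : ℝ → ℝ := fun c => ∫ x, (if c < g x then u x else v x) ∂PX with hK
  have hKint : ∀ c : ℝ, Integrable (fun x => if c < g x then u x else v x) PX := fun c =>
    aux_int_bdd PX (Measurable.ite (measurableSet_lt measurable_const hg) hu hv)
      (C := B) fun x => by by_cases h : c < g x <;> simp [h, hub x, hvb x]
  have hFanti : ∀ {c c' : ℝ}, c ≤ c' → F c' ≤ F c := by
    intro c c' h
    exact ENNReal.toReal_mono (measure_ne_top _ _)
      (measure_mono fun x hx => lt_of_le_of_lt h hx)
  have hstep : ∀ c c' : ℝ, c ≤ c' → |K c - K c'| ≤ 2 * B * (F c - F c') := by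
    intro c c' hcc
    have hmem : MeasurableSet {x | c < g x ∧ g x ≤ c'} :=
      (measurableSet_lt measurable_const hg).inter (measurableSet_le hg measurable_const)
    have hDint : Integrable (fun x => if c < g x ∧ g x ≤ c' then g x else 0) PX :=
      aux_int_bdd PX (Measurable.ite hmem hg measurable_const) (C := 2 * B) fun x => by
        by_cases h : c < g x ∧ g x ≤ c'
        · simpa [h] using hgb x
        · simp [h]; linarith
    have he : ∀ x, (if c < g x then u x else v x) - (if c' < g x then u x else v x)
        = (if c < g x ∧ g x ≤ c' then g x else 0) := by
      intro x
      by_cases h1 : c' < g x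
      · have h2 : c < g x := lt_of_le_of_lt hcc h1
        simp [h1, h2, not_le.mpr h1]
      · by_cases h2 : c < g x
        · (rw [if_pos h2, if_neg h1, if_pos ⟨h2, not_lt.mp h1⟩]) <;> rfl
        · simp [h1, h2]
    have hsub : K c - K c' = ∫ x, (if c < g x ∧ g x ≤ c' then g x else 0) ∂PX := by
      rw [hK, ← integral_sub (hKint c) (hKint c')]
      exact integral_congr_ae (ae_of_all _ he)
    have habs : |K c - K c'| ≤ ∫ x, |if c < g x ∧ g x ≤ c' then g x else 0| ∂PX := by
      rw [hsub, ← Real.norm_eq_abs]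
      refine (norm_integral_le_integral_norm _).trans_eq ?_
      simp [Real.norm_eq_abs]
    have hmono : ∫ x, |if c < g x ∧ g x ≤ c' then g x else 0| ∂PX
        ≤ ∫ x, (if c < g x ∧ g x ≤ c' then 2 * B else 0) ∂PX := by
      refine integral_mono hDint.abs
        (aux_int_bdd PX (Measurable.ite hmem measurable_const measurable_const)
          (C := 2 * B) fun x => by
            by_cases h : c < g x ∧ g x ≤ c'
            · simp [h, abs_of_nonneg (show (0:ℝ) ≤ 2 * B by linarith)]
            · simp [h]; linarith)
        fun x => ?_
      by_cases h : c < g x ∧ g x ≤ c'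
      · simpa [h] using hgb x
      · simp [h]
    have hval : ∫ x, (if c < g x ∧ g x ≤ c' then 2 * B else 0) ∂PX
        = 2 * B * (PX {x | c < g x ∧ g x ≤ c'}).toReal := by
      rw [show (fun x => if c < g x ∧ g x ≤ c' then 2 * B else (0:ℝ))
          = Set.indicator {x | c < g x ∧ g x ≤ c'} (fun _ => 2 * B) from
          funext fun x => by by_cases h : c < g x ∧ g x ≤ c' <;> simp [Set.indicator, h]]
      rw [integral_indicator_const _ hmem]
      simp [mul_comm]
      exact Or.inl rfl
    have hFs := aux_split PX hg hcc
    calc |K c - K c'| ≤ ∫ x, (if c < g x ∧ g x ≤ c' then 2 * B else 0) ∂PX :=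
          le_trans habs hmono
      _ = 2 * B * (PX {x | c < g x ∧ g x ≤ c'}).toReal := hval
      _ = 2 * B * (F c - F c') := by
          show _ = 2 * B * ((PX {x | c < g x}).toReal - (PX {x | c' < g x}).toReal)
          rw [hFs]; ring
  have habs2 : ∀ c c' : ℝ, |K c - K c'| ≤ 2 * B * |F c - F c'| := by
    intro c c'
    rcases le_total c c' with h | h
    · rw [abs_of_nonneg (sub_nonneg.mpr (hFanti h))]
      exact hstep c c' h
    · rw [abs_sub_comm (K c), abs_sub_comm (F c),
        abs_of_nonneg (sub_nonneg.mpr (hFanti h))]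
      exact hstep c' c h
  rw [continuous_iff_continuousAt]
  intro c₀
  rw [Metric.continuousAt_iff]
  intro ε hε
  have hFc : ContinuousAt F c₀ := (aux_cont_tail PX hg h0).continuousAt
  rw [Metric.continuousAt_iff] at hFc
  obtain ⟨δ, hδ, hd⟩ := hFc (ε / (2 * B + 1)) (by positivity)
  refine ⟨δ, hδ, fun {c} hc => ?_⟩
  have h1 := hd hc
  rw [Real.dist_eq] at h1 ⊢
  have h2 := habs2 c c₀
  have h3 : 2 * B * |F c - F c₀| ≤ 2 * B * (ε / (2 * B + 1)) :=
    mul_le_mul_of_nonneg_left (le_of_lt h1) (by linarith)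
  have h4 : 2 * B * (ε / (2 * B + 1)) < ε := by
    have h5 : 0 < 2 * B + 1 := by linarith
    rw [show 2 * B * (ε / (2 * B + 1)) = ε * ((2 * B) / (2 * B + 1)) by ring]
    exact mul_lt_of_lt_one_right hε ((div_lt_one h5).mpr (by linarith))
  calc |K c - K c₀| ≤ 2 * B * |F c - F c₀| := h2
    _ ≤ 2 * B * (ε / (2 * B + 1)) := h3
    _ < ε := h4

end Aux

/-- If moreover `τ(X,s)` is continuously distributed (its
pushforward law is atomless) for every `s`, then there exist constants `c_s`
such that the deterministic threshold rule `π*(x,s) = 1{τ(x,s) > c_s}` is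
optimal. -/
theorem optimal_deterministic_threshold_policy_exists
    {X : Type*} [MeasurableSpace X] (PX : Measure X) [IsProbabilityMeasure PX]
    {S : Type*} [Fintype S] [Nonempty S]
    (PS : S → Bool → S → ℝ)
    (hPS_nonneg : ∀ s w s', 0 ≤ PS s w s')
    (hPS_sum : ∀ s w, ∑ s' : S, PS s w s' = 1)
    (η : Bool → X → S → ℝ)
    (hη_meas : ∀ w s, Measurable fun x => η w x s)
    (B : ℝ) (hη_bdd : ∀ w x s, |η w x s| ≤ B)
    (dstat : (X → S → ℝ) → S → ℝ)
    (hd_stat : ∀ π : X → S → ℝ, IsPolicy π → IsStationaryDist PX PS π (dstat π))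
    (hd_uniq : ∀ π : X → S → ℝ, IsPolicy π →
      ∀ d : S → ℝ, IsStationaryDist PX PS π d → d = dstat π)
    (hatomless : ∀ (s : S) (t : ℝ),
      PX {x | η true x s - η false x s = t} = 0) :
    ∃ c : S → ℝ,
      ∀ π : X → S → ℝ, IsPolicy π →
        polValue PX η dstat π ≤
          polValue PX η dstat (fun x s =>
            if c s < η true x s - η false x s then (1:ℝ) else 0) := by
  classical
  have hXne : Nonempty X := by
    by_contra h
    rw [not_nonempty_iff] at h
    have h1 : PX Set.univ = 1 := measure_univ
    rw [Set.univ_eq_empty_iff.mpr h, measure_empty] at h1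
    exact zero_ne_one h1
  have hB0 : 0 ≤ B :=
    le_trans (abs_nonneg _) (hη_bdd true (Classical.arbitrary X) (Classical.arbitrary S))
  set τf : S → X → ℝ := fun s x => η true x s - η false x s with hτf
  have hτm : ∀ s, Measurable (τf s) := fun s => (hη_meas true s).sub (hη_meas false s)
  have hτb : ∀ s x, |τf s x| ≤ 2 * B := by
    intro s x
    have h1 := abs_le.mp (hη_bdd true x s)
    have h2 := abs_le.mp (hη_bdd false x s)
    rw [abs_le]
    constructor <;> simp only [hτf] <;> linarith
  set F : S → ℝ → ℝ := fun s c => (PX {x | c < τf s x}).toReal with hF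
  have hFcont : ∀ s, Continuous (F s) := fun s => aux_cont_tail PX (hτm s) (hatomless s)
  set K : S → ℝ → ℝ :=
    fun s c => ∫ x, (if c < τf s x then η true x s else η false x s) ∂PX with hKdef
  have hKcont : ∀ s, Continuous (K s) := fun s =>
    aux_cont_K PX (hη_meas true s) (hη_meas false s) hB0
      (fun x => hη_bdd true x s) (fun x => hη_bdd false x s) (hatomless s)
  set Mm : (S → ℝ) → S → S → ℝ :=
    fun p s s' => p s * PS s true s' + (1 - p s) * PS s false s' with hMm
  have hmeanM : ∀ π : X → S → ℝ, IsPolicy π → ∀ s s',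
      transMat PX PS π s s' = Mm (fun s => ∫ x, π x s ∂PX) s s' := by
    intro π hπ s s'
    exact aux_mean PX (hπ.1 s) (fun x => hπ.2 x s) _ _
  set W : Set ((S → ℝ) × (S → ℝ)) :=
    {q | (∀ s, q.1 s ∈ Set.Icc (-(2*B+1)) (2*B)) ∧ (∀ s, 0 ≤ q.2 s) ∧
      (∑ s, q.2 s = 1) ∧
      ∀ s', ∑ s, q.2 s * Mm (fun s => F s (q.1 s)) s s' = q.2 s'} with hW
  set H : (S → ℝ) × (S → ℝ) → ℝ := fun q => ∑ s, q.2 s * K s (q.1 s) with hH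
  have hHcont : Continuous H := by
    apply continuous_finset_sum
    intro s _
    exact ((continuous_apply s).comp continuous_snd).mul
      ((hKcont s).comp ((continuous_apply s).comp continuous_fst))
  have hWclosed : IsClosed W := by
    have heq : W = (⋂ s, {q : (S → ℝ) × (S → ℝ) | q.1 s ∈ Set.Icc (-(2*B+1)) (2*B)}) ∩
        ((⋂ s, {q : (S → ℝ) × (S → ℝ) | 0 ≤ q.2 s}) ∩
          ({q : (S → ℝ) × (S → ℝ) | ∑ s, q.2 s = 1} ∩
            ⋂ s', {q : (S → ℝ) × (S → ℝ) |
              ∑ s, q.2 s * Mm (fun s => F s (q.1 s)) s s' = q.2 s'})) := by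
      ext q
      simp only [hW, Set.mem_setOf_eq, Set.mem_inter_iff, Set.mem_iInter]
    rw [heq]
    refine IsClosed.inter ?_ (IsClosed.inter ?_ (IsClosed.inter ?_ ?_))
    · exact isClosed_iInter fun s =>
        IsClosed.preimage ((continuous_apply s).comp continuous_fst) isClosed_Icc
    · exact isClosed_iInter fun s =>
        isClosed_le continuous_const ((continuous_apply s).comp continuous_snd)
    · exact isClosed_eq
        (continuous_finset_sum _ fun s _ => (continuous_apply s).comp continuous_snd)
        continuous_const
    · refine isClosed_iInter fun s' => isClosed_eq ?_ ((continuous_apply s').comp continuous_snd)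
      apply continuous_finset_sum
      intro s _
      apply ((continuous_apply s).comp continuous_snd).mul
      simp only [hMm]
      exact (((hFcont s).comp ((continuous_apply s).comp continuous_fst)).mul
        continuous_const).add ((continuous_const.sub
          ((hFcont s).comp ((continuous_apply s).comp continuous_fst))).mul continuous_const)
  have hWcomp : IsCompact W := by
    have hKcomp : IsCompact ((Set.univ.pi fun _ : S => Set.Icc (-(2*B+1)) (2*B)) ×ˢ
        (Set.univ.pi fun _ : S => Set.Icc (0:ℝ) 1)) :=
      (isCompact_univ_pi fun _ => isCompact_Icc).prod (isCompact_univ_pi fun _ => isCompact_Icc)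
    apply hKcomp.of_isClosed_subset hWclosed
    rintro ⟨cv, d⟩ ⟨h1, h2, h3, _⟩
    constructor
    · intro s _
      exact h1 s
    · intro s _
      refine ⟨h2 s, ?_⟩
      calc d s ≤ ∑ i, d i := Finset.single_le_sum (fun i _ => h2 i) (Finset.mem_univ s)
        _ = 1 := h3
  -- the zero policy shows W is nonempty
  have hπ0 : IsPolicy (fun (_ : X) (_ : S) => (0:ℝ)) :=
    ⟨fun _ => measurable_const, fun _ _ => ⟨le_refl 0, zero_le_one⟩⟩
  have hF2B : ∀ s, F s (2*B) = 0 := by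
    intro s
    have he : {x | 2*B < τf s x} = ∅ := by
      ext x
      simp only [Set.mem_setOf_eq, Set.mem_empty_iff_false, iff_false, not_lt]
      exact (abs_le.mp (hτb s x)).2
    simp only [hF, he, measure_empty, ENNReal.toReal_zero]
  have hWne : W.Nonempty := by
    obtain ⟨h1, h2, h3⟩ := hd_stat _ hπ0
    refine ⟨(fun _ => 2*B, dstat (fun _ _ => (0:ℝ))), ?_, h1, h2, ?_⟩
    · intro s
      refine ⟨?_, le_refl _⟩
      show -(2*B+1) ≤ 2*B
      linarith
    · intro s'
      have key : ∀ s, Mm (fun s => F s (2*B)) s s'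
          = transMat PX PS (fun _ _ => (0:ℝ)) s s' := by
        intro s
        rw [hmeanM _ hπ0 s s']
        simp only [hMm, hF2B, integral_zero]
      calc ∑ s, dstat (fun _ _ => (0:ℝ)) s * Mm (fun s => F s (2*B)) s s'
          = ∑ s, dstat (fun _ _ => (0:ℝ)) s * transMat PX PS (fun _ _ => (0:ℝ)) s s' :=
            Finset.sum_congr rfl fun s _ => by rw [key s]
        _ = dstat (fun _ _ => (0:ℝ)) s' := h3 s'
  obtain ⟨qs, hqsW, hqmax⟩ := hWcomp.exists_isMaxOn hWne hHcont.continuousOn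
  refine ⟨qs.1, ?_⟩
  intro π hπ
  set πs : X → S → ℝ :=
    fun x s => if qs.1 s < η true x s - η false x s then (1:ℝ) else 0 with hπs
  have hπsPol : IsPolicy πs := by
    constructor
    · intro s
      exact Measurable.ite (measurableSet_lt measurable_const (hτm s))
        measurable_const measurable_const
    · intro x s
      by_cases h : qs.1 s < η true x s - η false x s <;> simp [hπs, h]
  have hmean_s : ∀ s, ∫ x, πs x s ∂PX = F s (qs.1 s) := fun s =>
    aux_ind_int PX (hτm s) (qs.1 s)
  obtain ⟨hq1, hq2, hq3, hq4⟩ := hqsW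
  have hds : dstat πs = qs.2 := by
    have hstat : IsStationaryDist PX PS πs qs.2 := by
      refine ⟨hq2, hq3, ?_⟩
      intro s'
      rw [← hq4 s']
      apply Finset.sum_congr rfl
      intro s _
      congr 1
      rw [hmeanM πs hπsPol s s']
      have he : (fun u => ∫ x, πs x u ∂PX) = fun u => F u (qs.1 u) := funext hmean_s
      rw [he]
    exact (hd_uniq πs hπsPol qs.2 hstat).symm
  -- value of the threshold policy equals H qs
  have hval_s : polValue PX η dstat πs = H qs := by
    rw [polValue, hH]
    apply Finset.sum_congr rfl
    intro s _
    rw [hds]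
    congr 1
    rw [hKdef]
    apply integral_congr_ae (ae_of_all _ _)
    intro x
    by_cases h : qs.1 s < τf s x
    · simp only [hπs, hτf] at h ⊢
      simp [h]
    · simp only [hπs, hτf] at h ⊢
      simp [h]
  -- integrability facts
  have hηfI : ∀ s, Integrable (fun x => η false x s) PX := fun s =>
    aux_int_bdd PX (hη_meas false s) (C := B) fun x => hη_bdd false x s
  have hπτI : ∀ s, Integrable (fun x => π x s * τf s x) PX := fun s =>
    aux_int_bdd PX ((hπ.1 s).mul (hτm s)) (C := 2*B) fun x => by
      rw [abs_mul]
      calc |π x s| * |τf s x| ≤ 1 * (2*B) := by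
            apply mul_le_mul _ (hτb s x) (abs_nonneg _) zero_le_one
            rw [abs_le]
            exact ⟨by linarith [(hπ.2 x s).1], (hπ.2 x s).2⟩
        _ = 2*B := one_mul _
  have hifI : ∀ s c, Integrable (fun x => if c < τf s x then τf s x else 0) PX := fun s c =>
    aux_int_bdd PX (Measurable.ite (measurableSet_lt measurable_const (hτm s)) (hτm s)
      measurable_const) (C := 2*B) fun x => by
        by_cases h : c < τf s x
        · simpa [h] using hτb s x
        · simp [h]; linarith
  -- mean of π
  have hp01 : ∀ s, (∫ x, π x s ∂PX) ∈ Set.Icc (0:ℝ) 1 := by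
    intro s
    constructor
    · exact integral_nonneg fun x => (hπ.2 x s).1
    · have h1 := integral_mono (aux_int_bdd PX (hπ.1 s) (C := 1) fun x => by
        rw [abs_le]; exact ⟨by linarith [(hπ.2 x s).1], (hπ.2 x s).2⟩)
        (integrable_const 1) (fun x => (hπ.2 x s).2)
      simpa [measure_univ] using h1
  have hcs : ∀ s, ∃ c ∈ Set.Icc (-(2*B+1)) (2*B), F s c = ∫ x, π x s ∂PX := fun s =>
    aux_ivt PX (hτm s) (hatomless s) (by linarith) (fun x => hτb s x) (hp01 s)
  choose cc hcc1 hcc2 using hcs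
  obtain ⟨hd1, hd2, hd3⟩ := hd_stat π hπ
  have hmemW : (cc, dstat π) ∈ W := by
    refine ⟨hcc1, hd1, hd2, ?_⟩
    intro s'
    have key : ∀ s, Mm (fun s => F s (cc s)) s s' = transMat PX PS π s s' := by
      intro s
      rw [hmeanM π hπ s s']
      have he : (fun u => F u (cc u)) = fun u => ∫ x, π x u ∂PX := funext hcc2
      rw [he]
    calc ∑ s, dstat π s * Mm (fun s => F s (cc s)) s s'
        = ∑ s, dstat π s * transMat PX PS π s s' :=
          Finset.sum_congr rfl fun s _ => by rw [key s]
      _ = dstat π s' := hd3 s'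
  have hπle : polValue PX η dstat π ≤ H (cc, dstat π) := by
    rw [polValue, hH]
    apply Finset.sum_le_sum
    intro s _
    apply mul_le_mul_of_nonneg_left _ (hd1 s)
    have e1 : ∫ x, (π x s * η true x s + (1 - π x s) * η false x s) ∂PX
        = (∫ x, η false x s ∂PX) + ∫ x, (π x s * τf s x) ∂PX := by
      rw [← integral_add (hηfI s) (hπτI s)]
      apply integral_congr_ae (ae_of_all _ _)
      intro x
      simp only [hτf]
      ring
    have e2 : K s (cc s)
        = (∫ x, η false x s ∂PX) + ∫ x, (if cc s < τf s x then τf s x else 0) ∂PX := by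
      rw [hKdef, ← integral_add (hηfI s) (hifI s (cc s))]
      apply integral_congr_ae (ae_of_all _ _)
      intro x
      by_cases h : cc s < τf s x
      · simp only [h, if_true]
        simp only [hτf]
        ring
      · simp [h]
    have hnp := aux_np PX (hτm s) (hπ.1 s) (fun x => hπ.2 x s) (C := 2*B)
      (fun x => hτb s x) (cc s)
      (by rw [aux_ind_int PX (hτm s) (cc s)]; exact (hcc2 s).symm)
    simp only []
    rw [e1, e2]
    linarith
  have hfin : H (cc, dstat π) ≤ H qs := hqmax hmemW
  calc polValue PX η dstat π ≤ H (cc, dstat π) := hπle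
    _ ≤ H qs := hfin
    _ = polValue PX η dstat πs := hval_s.symm
end

section
/- In the finite-state exogenous MDP, assume |η| ≤ B, the bounded-density assumption on the CADE, and the Lipschitz assumption on stationary distributions. Then there exists a finite constant C, depending only on |S|, B, the density bounds (m̄, M̄), and L_d, such that for every jointly measurable τ' : X × S → ℝ and all vectors c, c' ∈ ℝ^S, the threshold policies π(x,s) := 1{τ(x,s) > c_s} and π'(x,s) := 1{τ'(x,s) > c'_s} satisfy |μ(π) − μ(π')| ≤ C·[ (max_{s∈S} ‖τ(·,s) − τ'(·,s)‖_{L²(P_X)})^{2/3} + max_{s∈S} |c_s − c'_s| ]. -/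
open MeasureTheory

section Setup

variable {X : Type*} [MeasurableSpace X] {S : Type*} [Fintype S]

/-- `d` is a stationary probability vector for `M_π`. -/
def IsStationaryVec (PX : Measure X) (PS : S → Bool → S → ℝ)
    (π : X → S → ℝ) (d : S → ℝ) : Prop :=
  (∀ s, 0 ≤ d s) ∧ (∑ s : S, d s = 1) ∧
    ∀ s' : S, ∑ s : S, d s * transMat PX PS π s s' = d s'

end Setup

section AuxLemmas

variable {X : Type*} [MeasurableSpace X]

lemma aux_integrable_of_bdd {PX : Measure X} [IsFiniteMeasure PX] {f : X → ℝ}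
    (hf : Measurable f) {C : ℝ} (h : ∀ x, |f x| ≤ C) : Integrable f PX :=
  (integrable_const C).mono' hf.aestronglyMeasurable (ae_of_all _ h)

end AuxLemmas

/-- Under boundedness of `η`, the bounded-density assumption on
the CADE and the Lipschitz assumption on stationary distributions, there is a
constant `C` such that for any `τ'` and threshold vectors `c, c'`, the values of
the two threshold policies differ by at most
`C (max_s ‖τ(·,s) − τ'(·,s)‖_{L²(P_X)}^{2/3} + max_s |c_s − c'_s|)`. -/
theorem threshold_policy_value_difference_bound_L2
    {X : Type*} [MeasurableSpace X] (PX : Measure X) [IsProbabilityMeasure PX]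
    {S : Type*} [Fintype S] [Nonempty S]
    (PS : S → Bool → S → ℝ)
    (hPS_nonneg : ∀ s w s', 0 ≤ PS s w s')
    (hPS_sum : ∀ s w, ∑ s' : S, PS s w s' = 1)
    (η : Bool → X → S → ℝ)
    (hη_meas : ∀ w s, Measurable fun x => η w x s)
    (B : ℝ) (hη_bdd : ∀ w x s, |η w x s| ≤ B)
    (dstat : (X → S → ℝ) → S → ℝ)
    (hd_stat : ∀ π : X → S → ℝ, IsPolicy π → IsStationaryVec PX PS π (dstat π))
    (hd_uniq : ∀ π : X → S → ℝ, IsPolicy π →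
      ∀ d : S → ℝ, IsStationaryVec PX PS π d → d = dstat π)
    -- the CADE
    (τ : X → S → ℝ) (hτ : ∀ x s, τ x s = η true x s - η false x s)
    -- bounded-density assumption on the CADE
    (mlow Mhigh : ℝ) (hmlow : 0 < mlow)
    (dens : S → ℝ → ℝ) (hdens_meas : ∀ s, Measurable (dens s))
    (hdens_nonneg : ∀ s t, 0 ≤ dens s t)
    (hdens : ∀ s : S, PX.map (fun x => τ x s) =
      MeasureTheory.volume.withDensity fun t => ENNReal.ofReal (dens s t))
    (hdens_ub : ∀ s t, dens s t ≤ Mhigh)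
    (hdens_lb : ∀ s t, dens s t = 0 ∨ mlow ≤ dens s t)
    -- Lipschitz assumption on stationary distributions
    (Ld : ℝ)
    (hLip : ∀ π π' : X → S → ℝ, IsPolicy π → IsPolicy π' → ∀ s : S,
      |dstat π s - dstat π' s| ≤
        Ld * Finset.univ.sup' Finset.univ_nonempty
          (fun s' : S => |(∫ x, π x s' ∂PX) - ∫ x, π' x s' ∂PX|)) :
    ∃ C : ℝ, 0 ≤ C ∧
      ∀ τ' : X → S → ℝ, (∀ s : S, Measurable fun x => τ' x s) →
        ∀ c c' : S → ℝ,
          ENNReal.ofReal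
              |polValue PX η dstat (fun x s => if c s < τ x s then (1:ℝ) else 0) -
                polValue PX η dstat (fun x s => if c' s < τ' x s then (1:ℝ) else 0)| ≤
            ENNReal.ofReal C *
              ((⨆ s : S, eLpNorm (fun x => τ x s - τ' x s) 2 PX) ^ ((2:ℝ)/3) +
                ENNReal.ofReal
                  (Finset.univ.sup' Finset.univ_nonempty fun s : S => |c s - c' s|)) := by
  classical
  obtain ⟨s₀⟩ := (inferInstance : Nonempty S)
  have hXne : Nonempty X := by
    by_contra h
    rw [not_nonempty_iff] at h
    have h1 : PX Set.univ = 1 := measure_univ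
    rw [Set.univ_eq_empty_iff.2 h] at h1
    simp at h1
  obtain ⟨x₀⟩ := hXne
  have hB0 : 0 ≤ B := le_trans (abs_nonneg _) (hη_bdd true x₀ s₀)
  have hM0 : 0 ≤ Mhigh := le_trans (hdens_nonneg s₀ 0) (hdens_ub s₀ 0)
  set Ld' : ℝ := max Ld 0 with hLd'def
  have hLd'0 : 0 ≤ Ld' := le_max_right _ _
  set n : ℝ := (Fintype.card S : ℝ) with hndef
  have hn0 : 0 ≤ n := Nat.cast_nonneg _
  set K : ℝ := 2*B + n*B*Ld' with hKdef
  have hK0 : 0 ≤ K := add_nonneg (by linarith) (mul_nonneg (mul_nonneg hn0 hB0) hLd'0)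
  refine ⟨K * (1 + 2*Mhigh) + 2*B, by nlinarith, ?_⟩
  intro τ' hτ'meas c c'
  have hτmeas : ∀ s, Measurable fun x => τ x s := by
    intro s
    have hfe : (fun x => τ x s) = fun x => η true x s - η false x s :=
      funext fun x => hτ x s
    rw [hfe]; exact (hη_meas true s).sub (hη_meas false s)
  set π : X → S → ℝ := fun x s => if c s < τ x s then (1:ℝ) else 0 with hπdef
  set π' : X → S → ℝ := fun x s => if c' s < τ' x s then (1:ℝ) else 0 with hπ'def
  have hπ : IsPolicy π :=
    ⟨fun s => Measurable.ite (measurableSet_lt measurable_const (hτmeas s))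
        measurable_const measurable_const,
      fun x s => by by_cases h : c s < τ x s <;> simp [hπdef, h]⟩
  have hπ' : IsPolicy π' :=
    ⟨fun s => Measurable.ite (measurableSet_lt measurable_const (hτ'meas s))
        measurable_const measurable_const,
      fun x s => by by_cases h : c' s < τ' x s <;> simp [hπ'def, h]⟩
  -- integrability and bound for the value integrand
  have hg : ∀ (ρ : X → S → ℝ), IsPolicy ρ → ∀ s : S,
      Integrable (fun x => ρ x s * η true x s + (1 - ρ x s) * η false x s) PX ∧
      |∫ x, (ρ x s * η true x s + (1 - ρ x s) * η false x s) ∂PX| ≤ B := by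
    intro ρ hρ s
    have hbd : ∀ x, |ρ x s * η true x s + (1 - ρ x s) * η false x s| ≤ B := by
      intro x
      obtain ⟨h0, h1⟩ := hρ.2 x s
      have e1 := abs_le.1 (hη_bdd true x s)
      have e0 := abs_le.1 (hη_bdd false x s)
      rw [abs_le]
      constructor <;> nlinarith [e1.1, e1.2, e0.1, e0.2]
    have hm : Measurable fun x => ρ x s * η true x s + (1 - ρ x s) * η false x s :=
      ((hρ.1 s).mul (hη_meas true s)).add
        ((measurable_const.sub (hρ.1 s)).mul (hη_meas false s))
    refine ⟨aux_integrable_of_bdd hm hbd, ?_⟩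
    have hbb := norm_integral_le_of_norm_le_const (μ := PX) (C := B)
      (ae_of_all _ fun x => by rw [Real.norm_eq_abs]; exact hbd x)
    simpa [Real.norm_eq_abs, measure_univ] using hbb
  -- value of any policy bounded by B
  have hμb : ∀ (ρ : X → S → ℝ), IsPolicy ρ → |polValue PX η dstat ρ| ≤ B := by
    intro ρ hρ
    obtain ⟨hd0, hd1, -⟩ := hd_stat ρ hρ
    simp only [polValue]
    calc |∑ s : S, dstat ρ s *
          ∫ x, (ρ x s * η true x s + (1 - ρ x s) * η false x s) ∂PX|
        ≤ ∑ s : S, |dstat ρ s *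
          ∫ x, (ρ x s * η true x s + (1 - ρ x s) * η false x s) ∂PX| :=
          Finset.abs_sum_le_sum_abs _ _
      _ ≤ ∑ s : S, dstat ρ s * B := by
          refine Finset.sum_le_sum fun s _ => ?_
          rw [abs_mul, abs_of_nonneg (hd0 s)]
          exact mul_le_mul_of_nonneg_left (hg ρ hρ s).2 (hd0 s)
      _ = B := by rw [← Finset.sum_mul, hd1, one_mul]
  -- the disagreement sets
  set E : S → Set X := fun s => {x | π x s ≠ π' x s} with hEdef
  have hEmeas : ∀ s, MeasurableSet (E s) :=
    fun s => (measurableSet_eq_fun (hπ.1 s) (hπ'.1 s)).compl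
  set D : S → ℝ := fun s => (PX (E s)).toReal with hDdef
  have hD0 : ∀ s, 0 ≤ D s := fun s => ENNReal.toReal_nonneg
  have hind : ∀ s x, |π x s - π' x s| ≤ (E s).indicator (fun _ => (1:ℝ)) x := by
    intro s x
    by_cases hx : x ∈ E s
    · rw [Set.indicator_of_mem hx]
      obtain ⟨a0, a1⟩ := hπ.2 x s
      obtain ⟨b0, b1⟩ := hπ'.2 x s
      rw [abs_le]; constructor <;> linarith
    · rw [Set.indicator_of_notMem hx]
      have hxe : π x s = π' x s := not_not.1 hx
      simp [hxe]
  have hindint : ∀ s, Integrable ((E s).indicator (fun _ => (1:ℝ))) PX :=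
    fun s => (integrable_const 1).indicator (hEmeas s)
  have hindval : ∀ s, ∫ x, (E s).indicator (fun _ => (1:ℝ)) x ∂PX = D s := by
    intro s
    rw [integral_indicator (hEmeas s)]
    simp [hDdef, measureReal_def]
  have habsdiff_int : ∀ s, Integrable (fun x => |π x s - π' x s|) PX := by
    intro s
    refine aux_integrable_of_bdd ((hπ.1 s).sub (hπ'.1 s)).abs (C := 1) fun x => ?_
    rw [abs_abs]
    obtain ⟨a0, a1⟩ := hπ.2 x s
    obtain ⟨b0, b1⟩ := hπ'.2 x s
    rw [abs_le]; constructor <;> linarith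
  have hL1 : ∀ s, ∫ x, |π x s - π' x s| ∂PX ≤ D s := by
    intro s
    calc ∫ x, |π x s - π' x s| ∂PX
        ≤ ∫ x, (E s).indicator (fun _ => (1:ℝ)) x ∂PX :=
          integral_mono (habsdiff_int s) (hindint s) (hind s)
      _ = D s := hindval s
  have hπint : ∀ (ρ : X → S → ℝ), IsPolicy ρ → ∀ s, Integrable (fun x => ρ x s) PX := by
    intro ρ hρ s
    refine aux_integrable_of_bdd (hρ.1 s) (C := 1) fun x => ?_
    obtain ⟨a0, a1⟩ := hρ.2 x s
    rw [abs_le]; constructor <;> linarith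
  have hIdiff : ∀ s, |(∫ x, π x s ∂PX) - ∫ x, π' x s ∂PX| ≤ D s := by
    intro s
    rw [← integral_sub (hπint π hπ s) (hπint π' hπ' s)]
    calc |∫ x, (π x s - π' x s) ∂PX|
        ≤ ∫ x, |π x s - π' x s| ∂PX := by
          simpa [Real.norm_eq_abs] using
            norm_integral_le_integral_norm (μ := PX) (fun x => π x s - π' x s)
      _ ≤ D s := hL1 s
  -- value integrals
  set V : S → ℝ := fun s =>
    ∫ x, (π x s * η true x s + (1 - π x s) * η false x s) ∂PX with hVdef
  set V' : S → ℝ := fun s =>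
    ∫ x, (π' x s * η true x s + (1 - π' x s) * η false x s) ∂PX with hV'def
  have hVb' : ∀ s, |V' s| ≤ B := fun s => (hg π' hπ' s).2
  have hVdiff : ∀ s, |V s - V' s| ≤ 2*B*(D s) := by
    intro s
    have hVs : V s - V' s
        = ∫ x, ((π x s * η true x s + (1 - π x s) * η false x s)
            - (π' x s * η true x s + (1 - π' x s) * η false x s)) ∂PX :=
      (integral_sub (hg π hπ s).1 (hg π' hπ' s).1).symm
    have heq : (fun x => (π x s * η true x s + (1 - π x s) * η false x s)
        - (π' x s * η true x s + (1 - π' x s) * η false x s))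
        = fun x => (π x s - π' x s) * (η true x s - η false x s) := by
      funext x; ring
    rw [hVs, heq]
    have hprodint : Integrable
        (fun x => (π x s - π' x s) * (η true x s - η false x s)) PX := by
      refine aux_integrable_of_bdd
        (((hπ.1 s).sub (hπ'.1 s)).mul ((hη_meas true s).sub (hη_meas false s)))
        (C := 2*B) fun x => ?_
      obtain ⟨a0, a1⟩ := hπ.2 x s
      obtain ⟨b0, b1⟩ := hπ'.2 x s
      have e1 := abs_le.1 (hη_bdd true x s)
      have e0 := abs_le.1 (hη_bdd false x s)
      rw [abs_mul]
      have h1 : |π x s - π' x s| ≤ 1 := by rw [abs_le]; constructor <;> linarith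
      have h2 : |η true x s - η false x s| ≤ 2*B := by
        rw [abs_le]; constructor <;> linarith
      calc |π x s - π' x s| * |η true x s - η false x s|
          ≤ 1 * (2*B) := mul_le_mul h1 h2 (abs_nonneg _) zero_le_one
        _ = 2*B := one_mul _
    calc |∫ x, (π x s - π' x s) * (η true x s - η false x s) ∂PX|
        ≤ ∫ x, |π x s - π' x s| * |η true x s - η false x s| ∂PX := by
          simpa [Real.norm_eq_abs, abs_mul] using norm_integral_le_integral_norm (μ := PX)
            (fun x => (π x s - π' x s) * (η true x s - η false x s))
      _ ≤ ∫ x, (2*B) * (E s).indicator (fun _ => (1:ℝ)) x ∂PX := by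
          have habsint : Integrable
              (fun x => |π x s - π' x s| * |η true x s - η false x s|) PX := by
            simpa [abs_mul] using hprodint.abs
          refine integral_mono habsint ((hindint s).const_mul _) fun x => ?_
          have e1 := abs_le.1 (hη_bdd true x s)
          have e0 := abs_le.1 (hη_bdd false x s)
          have h2 : |η true x s - η false x s| ≤ 2*B := by
            rw [abs_le]; constructor <;> linarith
          have h3 := hind s x
          have h4 : (0:ℝ) ≤ (E s).indicator (fun _ => (1:ℝ)) x :=
            Set.indicator_nonneg (fun _ _ => zero_le_one) x
          calc |π x s - π' x s| * |η true x s - η false x s|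
              ≤ ((E s).indicator (fun _ => (1:ℝ)) x) * (2*B) :=
                mul_le_mul h3 h2 (abs_nonneg _) h4
            _ = 2*B * (E s).indicator (fun _ => (1:ℝ)) x := mul_comm _ _
      _ = 2*B*(D s) := by rw [integral_const_mul, hindval s]
  -- sup of threshold differences
  set Δ : ℝ := Finset.univ.sup' Finset.univ_nonempty (fun s : S => |c s - c' s|)
    with hΔdef
  have hΔ0 : 0 ≤ Δ := by
    rw [hΔdef]
    exact le_trans (abs_nonneg _)
      (Finset.le_sup' (fun s : S => |c s - c' s|) (Finset.mem_univ s₀))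
  have hΔs : ∀ s, |c s - c' s| ≤ Δ := by
    intro s
    rw [hΔdef]
    exact Finset.le_sup' (fun s : S => |c s - c' s|) (Finset.mem_univ s)
  -- Lipschitz bound on stationary distributions
  have hdd : ∀ (Db : ℝ), (∀ s, D s ≤ Db) → ∀ s,
      |dstat π s - dstat π' s| ≤ Ld' * Db := by
    intro Db hDb s
    have h1 := hLip π π' hπ hπ' s
    have h2 : Finset.univ.sup' Finset.univ_nonempty
        (fun s' : S => |(∫ x, π x s' ∂PX) - ∫ x, π' x s' ∂PX|) ≤ Db :=
      Finset.sup'_le _ _ fun s' _ => le_trans (hIdiff s') (hDb s')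
    have h3 : 0 ≤ Finset.univ.sup' Finset.univ_nonempty
        (fun s' : S => |(∫ x, π x s' ∂PX) - ∫ x, π' x s' ∂PX|) :=
      le_trans (abs_nonneg _)
        (Finset.le_sup' (fun s' : S => |(∫ x, π x s' ∂PX) - ∫ x, π' x s' ∂PX|)
          (Finset.mem_univ s₀))
    calc |dstat π s - dstat π' s|
        ≤ Ld * Finset.univ.sup' Finset.univ_nonempty
            (fun s' : S => |(∫ x, π x s' ∂PX) - ∫ x, π' x s' ∂PX|) := h1
      _ ≤ Ld' * Finset.univ.sup' Finset.univ_nonempty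
            (fun s' : S => |(∫ x, π x s' ∂PX) - ∫ x, π' x s' ∂PX|) :=
          mul_le_mul_of_nonneg_right (le_max_left _ _) h3
      _ ≤ Ld' * Db := mul_le_mul_of_nonneg_left h2 hLd'0
  -- main deterministic bound
  have hmain : ∀ (Db : ℝ), 0 ≤ Db → (∀ s, D s ≤ Db) →
      |polValue PX η dstat π - polValue PX η dstat π'| ≤ K * Db := by
    intro Db hDb0 hDb
    obtain ⟨hd0, hd1, -⟩ := hd_stat π hπ
    have hgoal : polValue PX η dstat π - polValue PX η dstat π'
        = ∑ s : S, (dstat π s * V s - dstat π' s * V' s) := by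
      rw [Finset.sum_sub_distrib]; rfl
    rw [hgoal]
    calc |∑ s : S, (dstat π s * V s - dstat π' s * V' s)|
        ≤ ∑ s : S, |dstat π s * V s - dstat π' s * V' s| :=
          Finset.abs_sum_le_sum_abs _ _
      _ ≤ ∑ s : S, (dstat π s * (2*B*Db) + Ld'*Db*B) := by
          refine Finset.sum_le_sum fun s _ => ?_
          have hsplit : dstat π s * V s - dstat π' s * V' s
              = dstat π s * (V s - V' s) + (dstat π s - dstat π' s) * V' s := by ring
          rw [hsplit]
          calc |dstat π s * (V s - V' s) + (dstat π s - dstat π' s) * V' s|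
              ≤ |dstat π s * (V s - V' s)| + |(dstat π s - dstat π' s) * V' s| :=
                abs_add_le _ _
            _ ≤ dstat π s * (2*B*Db) + Ld'*Db*B := by
                rw [abs_mul, abs_mul, abs_of_nonneg (hd0 s)]
                refine add_le_add ?_ ?_
                · refine mul_le_mul_of_nonneg_left ?_ (hd0 s)
                  refine le_trans (hVdiff s) ?_
                  have := hDb s
                  nlinarith [hD0 s]
                · exact mul_le_mul (hdd Db hDb s) (hVb' s) (abs_nonneg _)
                    (mul_nonneg hLd'0 hDb0)
      _ = 2*B*Db + n * (Ld'*Db*B) := by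
          rw [Finset.sum_add_distrib, ← Finset.sum_mul, hd1, one_mul,
            Finset.sum_const, Finset.card_univ, nsmul_eq_mul, hndef]
      _ ≤ K * Db := le_of_eq (by rw [hKdef]; ring)
  -- the L² supremum
  set ENNε : ENNReal := ⨆ s : S, eLpNorm (fun x => τ x s - τ' x s) 2 PX with hεdef
  by_cases hbig : 1 ≤ ENNε
  · -- trivial case : the value difference is at most 2B ≤ C
    have hμ1 := abs_le.1 (hμb π hπ)
    have hμ2 := abs_le.1 (hμb π' hπ')
    have h2B : |polValue PX η dstat π - polValue PX η dstat π'| ≤ 2*B := by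
      rw [abs_le]; constructor <;> linarith
    calc ENNReal.ofReal |polValue PX η dstat π - polValue PX η dstat π'|
        ≤ ENNReal.ofReal (K*(1+2*Mhigh) + 2*B) :=
          ENNReal.ofReal_le_ofReal (le_trans h2B (by nlinarith))
      _ = ENNReal.ofReal (K*(1+2*Mhigh) + 2*B) * 1 := (mul_one _).symm
      _ ≤ ENNReal.ofReal (K*(1+2*Mhigh) + 2*B) *
          (ENNε ^ ((2:ℝ)/3) + ENNReal.ofReal Δ) := by
          refine mul_le_mul_right ?_ _
          have h1 : (1:ENNReal) ≤ ENNε ^ ((2:ℝ)/3) := by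
            calc (1:ENNReal) = 1 ^ ((2:ℝ)/3) := (ENNReal.one_rpow _).symm
              _ ≤ ENNε ^ ((2:ℝ)/3) := ENNReal.rpow_le_rpow hbig (by norm_num)
          exact le_trans h1 le_self_add
  · -- main case
    push_neg at hbig
    have hεtop : ENNε ≠ ⊤ := (hbig.trans ENNReal.one_lt_top).ne
    set ε : ℝ := ENNε.toReal with hεr
    have hε0 : 0 ≤ ε := ENNReal.toReal_nonneg
    have hofε : ENNReal.ofReal ε = ENNε := ENNReal.ofReal_toReal hεtop
    set δ : ℝ := ε ^ ((2:ℝ)/3) with hδdef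
    have hδ0 : 0 ≤ δ := Real.rpow_nonneg hε0 _
    have hLp : ∀ s, eLpNorm (fun x => τ x s - τ' x s) 2 PX ≤ ENNε :=
      fun s => le_iSup (fun s => eLpNorm (fun x => τ x s - τ' x s) 2 PX) s
    have hfmeas : ∀ s, Measurable fun x => τ x s - τ' x s :=
      fun s => (hτmeas s).sub (hτ'meas s)
    -- Chebyshev bound
    have hset1 : ∀ s, PX {x | δ < |τ x s - τ' x s|} ≤ ENNReal.ofReal δ := by
      intro s
      rcases eq_or_lt_of_le hε0 with hε0' | hεpos
      · -- ε = 0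
        have hENN0 : ENNε = 0 := by rw [← hofε, ← hε0']; simp
        have hz : eLpNorm (fun x => τ x s - τ' x s) 2 PX = 0 :=
          le_antisymm (hENN0 ▸ hLp s) zero_le
        have hae : (fun x => τ x s - τ' x s) =ᵐ[PX] 0 :=
          (eLpNorm_eq_zero_iff (hfmeas s).aestronglyMeasurable (by norm_num)).1 hz
        have hnull : PX {x | ¬ (τ x s - τ' x s) = 0} = 0 := hae
        have hsub : {x | δ < |τ x s - τ' x s|} ⊆ {x | ¬ (τ x s - τ' x s) = 0} := by
          intro x hx
          simp only [Set.mem_setOf_eq] at hx ⊢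
          intro h0
          rw [h0, abs_zero] at hx
          exact absurd hx (not_lt.2 hδ0)
        rw [measure_mono_null hsub hnull]
        exact zero_le
      · -- ε > 0
        have hδpos : 0 < δ := Real.rpow_pos_of_pos hεpos _
        have hsub : {x | δ < |τ x s - τ' x s|} ⊆
            {x | ENNReal.ofReal δ ≤ (‖(τ x s - τ' x s)‖₊ : ENNReal)} := by
          intro x hx
          simp only [Set.mem_setOf_eq] at hx ⊢
          rw [← enorm_eq_nnnorm, ← ofReal_norm_eq_enorm, Real.norm_eq_abs]
          exact ENNReal.ofReal_le_ofReal hx.le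
        have hcheb := meas_ge_le_mul_pow_eLpNorm_enorm (μ := PX) (p := 2) (ε := ENNReal.ofReal δ)
          two_ne_zero ENNReal.ofNat_ne_top (hfmeas s).aestronglyMeasurable
          (by simp [ENNReal.ofReal_eq_zero, not_le, hδpos]) (fun h => absurd h ENNReal.ofReal_ne_top)
        have hchain : PX {x | δ < |τ x s - τ' x s|} ≤
            (ENNReal.ofReal δ)⁻¹ ^ ((2:ENNReal).toReal) * ENNε ^ ((2:ENNReal).toReal) := by
          refine le_trans (measure_mono hsub) (le_trans hcheb ?_)
          gcongr
          exact hLp s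
        have htwo : ((2:ENNReal).toReal) = (2:ℝ) := by simp
        rw [htwo] at hchain
        have hrw : (ENNReal.ofReal δ)⁻¹ ^ (2:ℝ) * ENNε ^ (2:ℝ)
            = ENNReal.ofReal δ := by
          rw [← hofε, ← ENNReal.ofReal_inv_of_pos hδpos,
            ENNReal.ofReal_rpow_of_nonneg (inv_nonneg.2 hδ0) (by norm_num),
            ENNReal.ofReal_rpow_of_nonneg hε0 (by norm_num),
            ← ENNReal.ofReal_mul (by positivity)]
          congr 1
          rw [Real.inv_rpow hδ0, hδdef, ← Real.rpow_mul hε0]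
          rw [← Real.rpow_neg hε0, ← Real.rpow_add hεpos]
          norm_num
        rwa [hrw] at hchain
    -- density bound
    have hset2 : ∀ s, PX {x | τ x s ∈ Set.Ioc (c s - (δ+Δ)) (c s + (δ+Δ))} ≤
        ENNReal.ofReal (Mhigh * (2*(δ+Δ))) := by
      intro s
      have hpre : {x | τ x s ∈ Set.Ioc (c s - (δ+Δ)) (c s + (δ+Δ))}
          = (fun x => τ x s) ⁻¹' (Set.Ioc (c s - (δ+Δ)) (c s + (δ+Δ))) := rfl
      rw [hpre, ← Measure.map_apply (hτmeas s) measurableSet_Ioc, hdens s,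
        withDensity_apply _ measurableSet_Ioc]
      calc ∫⁻ t in Set.Ioc (c s - (δ+Δ)) (c s + (δ+Δ)), ENNReal.ofReal (dens s t)
          ≤ ∫⁻ _ in Set.Ioc (c s - (δ+Δ)) (c s + (δ+Δ)), ENNReal.ofReal Mhigh :=
            lintegral_mono fun t => ENNReal.ofReal_le_ofReal (hdens_ub s t)
        _ = ENNReal.ofReal Mhigh * volume (Set.Ioc (c s - (δ+Δ)) (c s + (δ+Δ))) :=
            setLIntegral_const _ _
        _ = ENNReal.ofReal Mhigh * ENNReal.ofReal ((c s + (δ+Δ)) - (c s - (δ+Δ))) := by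
            rw [Real.volume_Ioc]
        _ = ENNReal.ofReal (Mhigh * (2*(δ+Δ))) := by
            rw [← ENNReal.ofReal_mul hM0]
            congr 1
            ring
    -- inclusion of the disagreement set
    have hincl : ∀ s, E s ⊆ {x | δ < |τ x s - τ' x s|} ∪
        {x | τ x s ∈ Set.Ioc (c s - (δ+Δ)) (c s + (δ+Δ))} := by
      intro s x hx
      by_cases hA : δ < |τ x s - τ' x s|
      · exact Or.inl hA
      · right
        have h1 := abs_le.1 (not_lt.1 hA)
        have h2 := abs_le.1 (hΔs s)
        simp only [hEdef, Set.mem_setOf_eq, hπdef, hπ'def] at hx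
        simp only [Set.mem_setOf_eq, Set.mem_Ioc]
        by_cases hc : c s < τ x s
        · have hc' : ¬ (c' s < τ' x s) := by
            intro hcc; rw [if_pos hc, if_pos hcc] at hx; exact hx rfl
          push_neg at hc'
          constructor <;> linarith
        · have hc' : c' s < τ' x s := by
            by_contra hcc; rw [if_neg hc, if_neg hcc] at hx; exact hx rfl
          push_neg at hc
          constructor <;> linarith
    -- per-state bound on D
    have hDb1 : ∀ s, D s ≤ δ + Mhigh * (2*(δ+Δ)) := by
      intro s
      have h1 : PX (E s) ≤ ENNReal.ofReal δ + ENNReal.ofReal (Mhigh * (2*(δ+Δ))) :=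
        le_trans (measure_mono (hincl s))
          (le_trans (measure_union_le _ _) (add_le_add (hset1 s) (hset2 s)))
      have h2 : PX (E s) ≤ ENNReal.ofReal (δ + Mhigh * (2*(δ+Δ))) := by
        rwa [ENNReal.ofReal_add hδ0 (mul_nonneg hM0 (by linarith))]
      calc D s ≤ (ENNReal.ofReal (δ + Mhigh * (2*(δ+Δ)))).toReal :=
            ENNReal.toReal_mono ENNReal.ofReal_ne_top h2
        _ ≤ δ + Mhigh * (2*(δ+Δ)) := by
          rw [ENNReal.toReal_ofReal (by nlinarith)]
    set Db : ℝ := (1 + 2*Mhigh) * (δ + Δ) with hDbdef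
    have hDb0 : 0 ≤ Db := mul_nonneg (by linarith) (by linarith)
    have hDble : ∀ s, D s ≤ Db := fun s =>
      le_trans (hDb1 s) (by rw [hDbdef]; nlinarith)
    have hfinal := hmain Db hDb0 hDble
    have hrpow : ENNε ^ ((2:ℝ)/3) = ENNReal.ofReal δ := by
      rw [← hofε, ENNReal.ofReal_rpow_of_nonneg hε0 (by norm_num), hδdef]
    calc ENNReal.ofReal |polValue PX η dstat π - polValue PX η dstat π'|
        ≤ ENNReal.ofReal (K * Db) := ENNReal.ofReal_le_ofReal hfinal
      _ ≤ ENNReal.ofReal ((K*(1+2*Mhigh) + 2*B) * (δ + Δ)) := by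
          refine ENNReal.ofReal_le_ofReal ?_
          rw [hDbdef]
          nlinarith [mul_nonneg hB0 (add_nonneg hδ0 hΔ0)]
      _ = ENNReal.ofReal (K*(1+2*Mhigh) + 2*B) * ENNReal.ofReal (δ + Δ) :=
          ENNReal.ofReal_mul
            (add_nonneg (mul_nonneg hK0 (by linarith)) (by linarith))
      _ = ENNReal.ofReal (K*(1+2*Mhigh) + 2*B) *
          (ENNε ^ ((2:ℝ)/3) + ENNReal.ofReal Δ) := by
          rw [hrpow, ← ENNReal.ofReal_add hδ0 hΔ0]
end

section
/- In the finite-state exogenous MDP, assume |η| ≤ B, the bounded-density assumption on the CADE, and the Lipschitz assumption on stationary distributions. Then there exists a finite constant C, depending only on |S|, B, the density bounds (m̄, M̄), and L_d, such that for every jointly measurable τ' : X × S → ℝ and all vectors c, c' ∈ ℝ^S, the threshold policies π(x,s) := 1{τ(x,s) > c_s} and π'(x,s) := 1{τ'(x,s) > c'_s} satisfy |μ(π) − μ(π')| ≤ C·[ sup_{x∈X, s∈S} |τ(x,s) − τ'(x,s)| + max_{s∈S} |c_s − c'_s| ]. -/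
open MeasureTheory

private lemma integrable_of_abs_bound {X : Type*} [MeasurableSpace X] (PX : Measure X)
    [IsProbabilityMeasure PX] {f : X → ℝ} (hf : Measurable f) {C : ℝ} (hC : ∀ x, |f x| ≤ C) :
    Integrable f PX :=
  (integrable_const C).mono' hf.aestronglyMeasurable (ae_of_all _ (by simpa using hC))

private lemma abs_integral_le {X : Type*} [MeasurableSpace X] (PX : Measure X) (f : X → ℝ) :
    |∫ x, f x ∂PX| ≤ ∫ x, |f x| ∂PX := by
  simpa [Real.norm_eq_abs] using norm_integral_le_integral_norm (μ := PX) f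

/-- Under boundedness of `η`, the bounded-density assumption on
the CADE and the Lipschitz assumption on stationary distributions, there is a
constant `C` such that for any `τ'` and threshold vectors `c, c'`, the values of
the two threshold policies differ by at most
`C (sup_{x,s} |τ(x,s) − τ'(x,s)| + max_s |c_s − c'_s|)` (the supremum is
expressed through an arbitrary uniform bound `D` on `|τ − τ'|`). -/
theorem threshold_policy_value_difference_bound_sup
    {X : Type*} [MeasurableSpace X] (PX : Measure X) [IsProbabilityMeasure PX]
    {S : Type*} [Fintype S] [Nonempty S]
    (PS : S → Bool → S → ℝ)
    (hPS_nonneg : ∀ s w s', 0 ≤ PS s w s')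
    (hPS_sum : ∀ s w, ∑ s' : S, PS s w s' = 1)
    (η : Bool → X → S → ℝ)
    (hη_meas : ∀ w s, Measurable fun x => η w x s)
    (B : ℝ) (hη_bdd : ∀ w x s, |η w x s| ≤ B)
    (dstat : (X → S → ℝ) → S → ℝ)
    (hd_stat : ∀ π : X → S → ℝ, IsPolicy π → IsStationaryVec PX PS π (dstat π))
    (hd_uniq : ∀ π : X → S → ℝ, IsPolicy π →
      ∀ d : S → ℝ, IsStationaryVec PX PS π d → d = dstat π)
    -- the CADE
    (τ : X → S → ℝ) (hτ : ∀ x s, τ x s = η true x s - η false x s)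
    -- bounded-density assumption on the CADE
    (mlow Mhigh : ℝ) (hmlow : 0 < mlow)
    (dens : S → ℝ → ℝ) (hdens_meas : ∀ s, Measurable (dens s))
    (hdens_nonneg : ∀ s t, 0 ≤ dens s t)
    (hdens : ∀ s : S, PX.map (fun x => τ x s) =
      MeasureTheory.volume.withDensity fun t => ENNReal.ofReal (dens s t))
    (hdens_ub : ∀ s t, dens s t ≤ Mhigh)
    (hdens_lb : ∀ s t, dens s t = 0 ∨ mlow ≤ dens s t)
    -- Lipschitz assumption on stationary distributions
    (Ld : ℝ)
    (hLip : ∀ π π' : X → S → ℝ, IsPolicy π → IsPolicy π' → ∀ s : S,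
      |dstat π s - dstat π' s| ≤
        Ld * Finset.univ.sup' Finset.univ_nonempty
          (fun s' : S => |(∫ x, π x s' ∂PX) - ∫ x, π' x s' ∂PX|)) :
    ∃ C : ℝ, 0 ≤ C ∧
      ∀ τ' : X → S → ℝ, (∀ s : S, Measurable fun x => τ' x s) →
        ∀ c c' : S → ℝ, ∀ D : ℝ, (∀ x s, |τ x s - τ' x s| ≤ D) →
          |polValue PX η dstat (fun x s => if c s < τ x s then (1:ℝ) else 0) -
              polValue PX η dstat (fun x s => if c' s < τ' x s then (1:ℝ) else 0)| ≤
            C * (D + Finset.univ.sup' Finset.univ_nonempty fun s : S => |c s - c' s|) := by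
  classical
  have hXne : Nonempty X := by
    by_contra h
    have h1 : (Set.univ : Set X) = ∅ := Set.univ_eq_empty_iff.mpr (not_nonempty_iff.mp h)
    have h2 : PX Set.univ = 1 := measure_univ
    rw [h1, measure_empty] at h2
    exact zero_ne_one h2
  obtain ⟨x0⟩ := hXne
  obtain ⟨s0⟩ := (inferInstance : Nonempty S)
  have hB0 : 0 ≤ B := le_trans (abs_nonneg _) (hη_bdd true x0 s0)
  have hM0 : 0 ≤ Mhigh := le_trans (hdens_nonneg s0 0) (hdens_ub s0 0)
  have hτ_meas : ∀ s, Measurable fun x => τ x s := by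
    intro s
    have he : (fun x => τ x s) = fun x => η true x s - η false x s := funext fun x => hτ x s
    rw [he]; exact (hη_meas true s).sub (hη_meas false s)
  have hτ_bdd : ∀ x s, |τ x s| ≤ 2 * B := by
    intro x s; rw [hτ x s]
    calc |η true x s - η false x s| ≤ |η true x s| + |η false x s| := abs_sub _ _
      _ ≤ 2 * B := by
          have := hη_bdd true x s; have := hη_bdd false x s; linarith
  have hconst : (0:ℝ) ≤ 4 * B * Mhigh + 2 * |Ld| * Mhigh * B := by
    have e1 : (0:ℝ) ≤ 4 * B * Mhigh := mul_nonneg (mul_nonneg (by norm_num) hB0) hM0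
    have e2 : (0:ℝ) ≤ 2 * |Ld| * Mhigh * B :=
      mul_nonneg (mul_nonneg (mul_nonneg (by norm_num) (abs_nonneg _)) hM0) hB0
    linarith
  refine ⟨(Fintype.card S : ℝ) * (4 * B * Mhigh + 2 * |Ld| * Mhigh * B),
    mul_nonneg (Nat.cast_nonneg _) hconst, ?_⟩
  intro τ' hτ' c c' D hD
  set Δ : ℝ := Finset.univ.sup' Finset.univ_nonempty (fun s : S => |c s - c' s|) with hΔdef
  have hΔ : ∀ s, |c s - c' s| ≤ Δ := fun s => by
    rw [hΔdef]; exact Finset.le_sup' (fun s : S => |c s - c' s|) (Finset.mem_univ s)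
  have hΔ0 : 0 ≤ Δ := le_trans (abs_nonneg _) (hΔ s0)
  have hD0 : 0 ≤ D := le_trans (abs_nonneg _) (hD x0 s0)
  set ε : ℝ := D + Δ with hεdef
  have hε0 : 0 ≤ ε := add_nonneg hD0 hΔ0
  set π : X → S → ℝ := fun x s => if c s < τ x s then (1:ℝ) else 0 with hπdef
  set π' : X → S → ℝ := fun x s => if c' s < τ' x s then (1:ℝ) else 0 with hπ'def
  have hπ_meas : ∀ s, Measurable fun x => π x s := fun s =>
    Measurable.ite (measurableSet_lt measurable_const (hτ_meas s)) measurable_const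
      measurable_const
  have hπ'_meas : ∀ s, Measurable fun x => π' x s := fun s =>
    Measurable.ite (measurableSet_lt measurable_const (hτ' s)) measurable_const measurable_const
  have hπ_mem : ∀ x s, π x s ∈ Set.Icc (0:ℝ) 1 := fun x s => by
    by_cases h : c s < τ x s <;> simp [hπdef, h]
  have hπ'_mem : ∀ x s, π' x s ∈ Set.Icc (0:ℝ) 1 := fun x s => by
    by_cases h : c' s < τ' x s <;> simp [hπ'def, h]
  have hπ_pol : IsPolicy π := ⟨hπ_meas, hπ_mem⟩
  have hπ'_pol : IsPolicy π' := ⟨hπ'_meas, hπ'_mem⟩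
  -- disagreement sets
  set A : S → Set X := fun s =>
    ({x | c s < τ x s} \ {x | c' s < τ' x s}) ∪ ({x | c' s < τ' x s} \ {x | c s < τ x s})
    with hAdef
  have hA_meas : ∀ s, MeasurableSet (A s) := by
    intro s
    have h1 : MeasurableSet {x | c s < τ x s} := measurableSet_lt measurable_const (hτ_meas s)
    have h2 : MeasurableSet {x | c' s < τ' x s} := measurableSet_lt measurable_const (hτ' s)
    exact (h1.diff h2).union (h2.diff h1)
  have hA_ptwise : ∀ x s, |π x s - π' x s| ≤ (A s).indicator (fun _ => (1:ℝ)) x := by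
    intro x s
    by_cases h1 : c s < τ x s <;> by_cases h2 : c' s < τ' x s <;>
      simp [hπdef, hπ'def, hAdef, Set.indicator_apply, h1, h2]
  have hA_sub : ∀ s, A s ⊆ {x | τ x s ∈ Set.Ioc (c s - ε) (c s + ε)} := by
    intro s x hx
    have hd := abs_le.mp (hD x s)
    have hc := abs_le.mp (hΔ s)
    simp only [hAdef, Set.mem_union, Set.mem_diff, Set.mem_setOf_eq, not_lt] at hx
    simp only [Set.mem_setOf_eq, Set.mem_Ioc, hεdef]
    rcases hx with ⟨h1, h2⟩ | ⟨h1, h2⟩ <;> constructor <;> linarith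
  have hPA : ∀ s, (PX (A s)).toReal ≤ 2 * Mhigh * ε := by
    intro s
    have h1 : PX (A s) ≤ PX ((fun x => τ x s) ⁻¹' Set.Ioc (c s - ε) (c s + ε)) :=
      measure_mono (hA_sub s)
    have h2 : PX ((fun x => τ x s) ⁻¹' Set.Ioc (c s - ε) (c s + ε)) =
        (PX.map (fun x => τ x s)) (Set.Ioc (c s - ε) (c s + ε)) :=
      (Measure.map_apply (hτ_meas s) measurableSet_Ioc).symm
    rw [h2, hdens s, withDensity_apply _ measurableSet_Ioc] at h1
    have h3 : ∫⁻ t in Set.Ioc (c s - ε) (c s + ε), ENNReal.ofReal (dens s t) ≤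
        ENNReal.ofReal (2 * Mhigh * ε) := by
      calc ∫⁻ t in Set.Ioc (c s - ε) (c s + ε), ENNReal.ofReal (dens s t)
          ≤ ∫⁻ _ in Set.Ioc (c s - ε) (c s + ε), ENNReal.ofReal Mhigh :=
            setLIntegral_mono measurable_const
              (fun t _ => ENNReal.ofReal_le_ofReal (hdens_ub s t))
        _ = ENNReal.ofReal Mhigh * volume (Set.Ioc (c s - ε) (c s + ε)) :=
            setLIntegral_const _ _
        _ = ENNReal.ofReal Mhigh * ENNReal.ofReal (2 * ε) := by
            rw [Real.volume_Ioc]; congr 1; ring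
        _ = ENNReal.ofReal (2 * Mhigh * ε) := by
            rw [← ENNReal.ofReal_mul hM0]; congr 1; ring
    exact ENNReal.toReal_le_of_le_ofReal
      (mul_nonneg (mul_nonneg (by norm_num) hM0) hε0) (le_trans h1 h3)
  have hπ_int : ∀ s, Integrable (fun x => π x s) PX := fun s =>
    integrable_of_abs_bound PX (hπ_meas s) (C := 1) (fun x => by
      obtain ⟨h0, h1⟩ := hπ_mem x s; rw [abs_of_nonneg h0]; exact h1)
  have hπ'_int : ∀ s, Integrable (fun x => π' x s) PX := fun s =>
    integrable_of_abs_bound PX (hπ'_meas s) (C := 1) (fun x => by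
      obtain ⟨h0, h1⟩ := hπ'_mem x s; rw [abs_of_nonneg h0]; exact h1)
  have hInd_int : ∀ s, Integrable ((A s).indicator (fun _ => (1:ℝ))) PX := fun s =>
    (integrable_const 1).indicator (hA_meas s)
  have hInd_eq : ∀ s, ∫ x, (A s).indicator (fun _ => (1:ℝ)) x ∂PX = (PX (A s)).toReal := by
    intro s; rw [integral_indicator_const _ (hA_meas s)]; simp; rfl
  have hIntDiff : ∀ s, |(∫ x, π x s ∂PX) - ∫ x, π' x s ∂PX| ≤ (PX (A s)).toReal := by
    intro s
    rw [← integral_sub (hπ_int s) (hπ'_int s)]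
    calc |∫ x, (π x s - π' x s) ∂PX| ≤ ∫ x, |π x s - π' x s| ∂PX :=
          abs_integral_le PX _
      _ ≤ ∫ x, (A s).indicator (fun _ => (1:ℝ)) x ∂PX :=
          integral_mono ((hπ_int s).sub (hπ'_int s)).abs (hInd_int s) (fun x => hA_ptwise x s)
      _ = (PX (A s)).toReal := hInd_eq s
  -- stationary distribution difference
  have hsup_le : Finset.univ.sup' Finset.univ_nonempty
      (fun s' : S => |(∫ x, π x s' ∂PX) - ∫ x, π' x s' ∂PX|) ≤ 2 * Mhigh * ε :=
    Finset.sup'_le _ _ (fun s' _ => le_trans (hIntDiff s') (hPA s'))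
  have hsup_nonneg : 0 ≤ Finset.univ.sup' Finset.univ_nonempty
      (fun s' : S => |(∫ x, π x s' ∂PX) - ∫ x, π' x s' ∂PX|) :=
    le_trans (abs_nonneg _)
      (Finset.le_sup' (fun s' : S => |(∫ x, π x s' ∂PX) - ∫ x, π' x s' ∂PX|)
        (Finset.mem_univ s0))
  have hd_diff : ∀ s, |dstat π s - dstat π' s| ≤ |Ld| * (2 * Mhigh * ε) := by
    intro s
    calc |dstat π s - dstat π' s| ≤ Ld * Finset.univ.sup' Finset.univ_nonempty
          (fun s' : S => |(∫ x, π x s' ∂PX) - ∫ x, π' x s' ∂PX|) := hLip π π' hπ_pol hπ'_pol s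
      _ ≤ |Ld| * Finset.univ.sup' Finset.univ_nonempty
          (fun s' : S => |(∫ x, π x s' ∂PX) - ∫ x, π' x s' ∂PX|) :=
          mul_le_mul_of_nonneg_right (le_abs_self Ld) hsup_nonneg
      _ ≤ |Ld| * (2 * Mhigh * ε) := mul_le_mul_of_nonneg_left hsup_le (abs_nonneg Ld)
  have hd_mem : ∀ (ρ : X → S → ℝ), IsPolicy ρ → ∀ s, 0 ≤ dstat ρ s ∧ dstat ρ s ≤ 1 := by
    intro ρ hρ s
    obtain ⟨hnn, hsum, -⟩ := hd_stat ρ hρ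
    refine ⟨hnn s, ?_⟩
    calc dstat ρ s ≤ ∑ s' : S, dstat ρ s' :=
          Finset.single_le_sum (fun s' _ => hnn s') (Finset.mem_univ s)
      _ = 1 := hsum
  -- pointwise bound on the value integrand
  have hptw : ∀ (ρ : X → S → ℝ), (∀ x s, ρ x s ∈ Set.Icc (0:ℝ) 1) → ∀ x s,
      |ρ x s * η true x s + (1 - ρ x s) * η false x s| ≤ B := by
    intro ρ hb x s
    obtain ⟨h0, h1⟩ := hb x s
    obtain ⟨a1, a2⟩ := abs_le.mp (hη_bdd true x s)
    obtain ⟨b1, b2⟩ := abs_le.mp (hη_bdd false x s)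
    have u1 := mul_le_mul_of_nonneg_left a2 h0
    have u2 := mul_le_mul_of_nonneg_left a1 h0
    have u3 := mul_le_mul_of_nonneg_left b2 (show (0:ℝ) ≤ 1 - ρ x s by linarith)
    have u4 := mul_le_mul_of_nonneg_left b1 (show (0:ℝ) ≤ 1 - ρ x s by linarith)
    rw [abs_le]; constructor <;> nlinarith
  have hf_int : ∀ (ρ : X → S → ℝ), (∀ s, Measurable fun x => ρ x s) →
      (∀ x s, ρ x s ∈ Set.Icc (0:ℝ) 1) → ∀ s,
      Integrable (fun x => ρ x s * η true x s + (1 - ρ x s) * η false x s) PX := by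
    intro ρ hm hb s
    exact integrable_of_abs_bound PX
      (((hm s).mul (hη_meas true s)).add ((measurable_const.sub (hm s)).mul (hη_meas false s)))
      (fun x => hptw ρ hb x s)
  set V : (X → S → ℝ) → S → ℝ :=
    fun ρ s => ∫ x, (ρ x s * η true x s + (1 - ρ x s) * η false x s) ∂PX with hVdef
  have hV'_bdd : ∀ s, |V π' s| ≤ B := by
    intro s
    have h := norm_integral_le_of_norm_le_const (μ := PX)
      (f := fun x => π' x s * η true x s + (1 - π' x s) * η false x s) (C := B)
      (ae_of_all _ fun x => by rw [Real.norm_eq_abs]; exact hptw π' hπ'_mem x s)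
    simpa [hVdef, Real.norm_eq_abs] using h
  have hVdiff : ∀ s, |V π s - V π' s| ≤ 2 * B * (PX (A s)).toReal := by
    intro s
    have e : V π s - V π' s = ∫ x, (π x s - π' x s) * τ x s ∂PX := by
      simp only [hVdef]
      rw [← integral_sub (hf_int π hπ_meas hπ_mem s) (hf_int π' hπ'_meas hπ'_mem s)]
      congr 1; funext x; rw [hτ x s]; ring
    rw [e]
    have hmint : Integrable (fun x => (π x s - π' x s) * τ x s) PX := by
      apply integrable_of_abs_bound PX (((hπ_meas s).sub (hπ'_meas s)).mul (hτ_meas s))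
        (C := 2 * B)
      intro x
      show |(π x s - π' x s) * τ x s| ≤ 2 * B
      rw [abs_mul]
      have h1 : |π x s - π' x s| ≤ 1 := by
        obtain ⟨p0, p1⟩ := hπ_mem x s
        obtain ⟨q0, q1⟩ := hπ'_mem x s
        rw [abs_le]; constructor <;> linarith
      have h2 := hτ_bdd x s
      calc |π x s - π' x s| * |τ x s| ≤ 1 * (2 * B) :=
            mul_le_mul h1 h2 (abs_nonneg _) zero_le_one
        _ = 2 * B := one_mul _
    calc |∫ x, (π x s - π' x s) * τ x s ∂PX| ≤ ∫ x, |(π x s - π' x s) * τ x s| ∂PX :=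
          abs_integral_le PX _
      _ ≤ ∫ x, 2 * B * (A s).indicator (fun _ => (1:ℝ)) x ∂PX := by
          apply integral_mono hmint.abs ((hInd_int s).const_mul _)
          intro x
          have h1 := hA_ptwise x s
          have h2 := hτ_bdd x s
          have h3 : (0:ℝ) ≤ (A s).indicator (fun _ => (1:ℝ)) x :=
            Set.indicator_nonneg (fun _ _ => zero_le_one) x
          show |(π x s - π' x s) * τ x s| ≤ 2 * B * (A s).indicator (fun _ => (1:ℝ)) x
          rw [abs_mul]
          calc |π x s - π' x s| * |τ x s|
              ≤ (A s).indicator (fun _ => (1:ℝ)) x * |τ x s| :=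
                mul_le_mul_of_nonneg_right h1 (abs_nonneg _)
            _ ≤ (A s).indicator (fun _ => (1:ℝ)) x * (2 * B) :=
                mul_le_mul_of_nonneg_left h2 h3
            _ = 2 * B * (A s).indicator (fun _ => (1:ℝ)) x := by ring
      _ = 2 * B * (PX (A s)).toReal := by rw [integral_const_mul, hInd_eq s]
  -- assembling
  have key : polValue PX η dstat π - polValue PX η dstat π' =
      ∑ s : S, (dstat π s * (V π s - V π' s) + (dstat π s - dstat π' s) * V π' s) := by
    unfold polValue
    rw [← Finset.sum_sub_distrib]
    apply Finset.sum_congr rfl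
    intro s _
    simp only [hVdef]
    ring
  rw [key]
  have h2Mε : (0:ℝ) ≤ 2 * Mhigh * ε := mul_nonneg (mul_nonneg (by norm_num) hM0) hε0
  calc |∑ s : S, (dstat π s * (V π s - V π' s) + (dstat π s - dstat π' s) * V π' s)|
      ≤ ∑ s : S, |dstat π s * (V π s - V π' s) + (dstat π s - dstat π' s) * V π' s| :=
        Finset.abs_sum_le_sum_abs _ _
    _ ≤ ∑ _s : S, (4 * B * Mhigh + 2 * |Ld| * Mhigh * B) * ε := by
        apply Finset.sum_le_sum
        intro s _
        have hds : |dstat π s| ≤ 1 := by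
          obtain ⟨h0, h1⟩ := hd_mem π hπ_pol s
          rw [abs_of_nonneg h0]; exact h1
        have hv1 : |V π s - V π' s| ≤ 2 * B * (2 * Mhigh * ε) :=
          le_trans (hVdiff s)
            (mul_le_mul_of_nonneg_left (hPA s) (mul_nonneg (by norm_num) hB0))
        have hv2 := hV'_bdd s
        have hdd := hd_diff s
        calc |dstat π s * (V π s - V π' s) + (dstat π s - dstat π' s) * V π' s|
            ≤ |dstat π s * (V π s - V π' s)| + |(dstat π s - dstat π' s) * V π' s| :=
              abs_add_le _ _
          _ = |dstat π s| * |V π s - V π' s| + |dstat π s - dstat π' s| * |V π' s| := by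
              rw [abs_mul, abs_mul]
          _ ≤ 1 * (2 * B * (2 * Mhigh * ε)) + (|Ld| * (2 * Mhigh * ε)) * B :=
              add_le_add (mul_le_mul hds hv1 (abs_nonneg _) zero_le_one)
                (mul_le_mul hdd hv2 (abs_nonneg _) (mul_nonneg (abs_nonneg _) h2Mε))
          _ = (4 * B * Mhigh + 2 * |Ld| * Mhigh * B) * ε := by ring
    _ = (Fintype.card S : ℝ) * (4 * B * Mhigh + 2 * |Ld| * Mhigh * B) * ε := by
        rw [Finset.sum_const, Finset.card_univ, nsmul_eq_mul]; ring
end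

section
/- In the finite-state exogenous MDP, assume |η| ≤ B, the bounded-density assumption on the CADE, the Lipschitz assumption on stationary distributions, and the separation assumption with maximizer g* ∈ (0,1)^S; set π* := π_{τ,g*}. On a probability space, for each n ∈ ℕ let τ̂_n : Ω × X × S → ℝ be jointly measurable random CADE estimates such that almost surely the pushforward of P_X under x ↦ τ̂_n(ω,x,s) is atomless for every s, and such that max_{s∈S} ‖τ̂_n(ω,·,s) − τ(·,s)‖_{L²(P_X)} = O_p(n^{−β}) for some β > 0. For g ∈ (0,1)^S define the estimated threshold policy π_{τ̂_n,g}(x,s) := 1{τ̂_n(ω,x,s) > κ̂_{1−g_s}(s)}, where κ̂_m(s) is the m-quantile of the pushforward law of τ̂_n(ω,·,s) under P_X. Let V̂_n : Ω × (0,1)^S → ℝ be random functions (off-policy value estimates) with sup_{g∈(0,1)^S} |V̂_n(g) − μ(π_{τ̂_n,g})| = O_p(n^{−γ}) for some γ > 0, and let ĝ_n be random elements of (0,1)^S satisfying V̂_n(ĝ_n) ≥ sup_{g∈(0,1)^S} V̂_n(g) − Z_n with Z_n = O_p(n^{−2β/3} + n^{−γ}). Then |μ(π_{τ̂_n,ĝ_n})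 − μ(π*)| = O_p(n^{−2β/3} + n^{−γ}). -/
open MeasureTheory

section Setup

variable {X : Type*} [MeasurableSpace X] {S : Type*} [Fintype S]

/-- The `m`-quantile of the pushforward of `PX` under `f`:
`κ_m = inf {t : P_X(f ≤ t) ≥ m}`. -/
noncomputable def quantileOf (PX : Measure X) (f : X → ℝ) (m : ℝ) : ℝ :=
  sInf {t : ℝ | ENNReal.ofReal m ≤ PX {x | f x ≤ t}}

/-- The threshold policy `π_{τ,g}(x,s) = 1{τ(x,s) > κ_{1−g_s}(s)}`. -/
noncomputable def thresholdPolicy (PX : Measure X) (τ : X → S → ℝ)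
    (g : S → ℝ) : X → S → ℝ :=
  fun x s => if quantileOf PX (fun x' => τ x' s) (1 - g s) < τ x s then 1 else 0

/-- `g` lies in the open box `(0,1)^S`. -/
def InBox {S : Type*} (g : S → ℝ) : Prop := ∀ s, g s ∈ Set.Ioo (0:ℝ) 1

/-- `Z_n = O_p(a_n)`: for every `ε > 0` there are `M` and `N` such that
`P(|Z_n| > M a_n) ≤ ε` for all `n ≥ N`. -/
def IsBigOp {Ω : Type*} [MeasurableSpace Ω] (P : Measure Ω)
    (Z : ℕ → Ω → ℝ) (a : ℕ → ℝ) : Prop :=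
  ∀ ε : ℝ, 0 < ε → ∃ (M : ℝ) (N : ℕ), ∀ n ≥ N,
    P {ω | M * a n < |Z n ω|} ≤ ENNReal.ofReal ε

end Setup

section Q
set_option linter.unusedSectionVars false
variable {X : Type*} [MeasurableSpace X] (PX : Measure X) [IsProbabilityMeasure PX]

lemma cdf_mono (f : X → ℝ) {a b : ℝ} (hab : a ≤ b) :
    PX {x | f x ≤ a} ≤ PX {x | f x ≤ b} :=
  measure_mono (fun x hx => le_trans hx hab)

lemma quantile_set_nonempty (f : X → ℝ) {m : ℝ} (hm1 : m < 1) :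
    {t : ℝ | ENNReal.ofReal m ≤ PX {x | f x ≤ t}}.Nonempty := by
  have hU : ⋃ n : ℕ, {x | f x ≤ (n : ℝ)} = Set.univ := by
    ext x; simp only [Set.mem_iUnion, Set.mem_univ, iff_true, Set.mem_setOf_eq]
    obtain ⟨n, hn⟩ := exists_nat_ge (f x); exact ⟨n, hn⟩
  have hmono : Monotone (fun n : ℕ => {x | f x ≤ (n : ℝ)}) := by
    intro a b hab
    exact Set.setOf_subset_setOf.mpr (fun x hx => le_trans hx (by exact_mod_cast hab))
  have htend := tendsto_measure_iUnion_atTop (μ := PX) hmono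
  rw [hU, measure_univ] at htend
  have hlt : ENNReal.ofReal m < 1 := ENNReal.ofReal_lt_one.mpr hm1
  obtain ⟨n, hn⟩ := (htend.eventually (eventually_ge_nhds hlt)).exists
  exact ⟨(n : ℝ), hn⟩

lemma quantile_set_bddBelow (f : X → ℝ) (hf : Measurable f) {m : ℝ} (hm0 : 0 < m) :
    BddBelow {t : ℝ | ENNReal.ofReal m ≤ PX {x | f x ≤ t}} := by
  have hI : ⋂ n : ℕ, {x | f x ≤ -(n : ℝ)} = ∅ := by
    ext x; simp only [Set.mem_iInter, Set.mem_empty_iff_false, iff_false, not_forall,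
      Set.mem_setOf_eq, not_le]
    obtain ⟨n, hn⟩ := exists_nat_gt (-(f x)); exact ⟨n, by linarith⟩
  have hanti : Antitone (fun n : ℕ => {x | f x ≤ -(n : ℝ)}) := by
    intro a b hab
    exact Set.setOf_subset_setOf.mpr (fun x hx => le_trans hx (by
      simp only [neg_le_neg_iff]; exact_mod_cast hab))
  have htend := tendsto_measure_iInter_atTop (μ := PX)
    (fun n => (hf measurableSet_Iic).nullMeasurableSet) hanti ⟨0, measure_ne_top _ _⟩
  have hI' : ⋂ n : ℕ, f ⁻¹' Set.Iic (-(n : ℝ)) = ∅ := hI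
  rw [hI', measure_empty] at htend
  have hpos : (0 : ENNReal) < ENNReal.ofReal m := ENNReal.ofReal_pos.mpr hm0
  obtain ⟨n, hn⟩ := (htend.eventually (eventually_lt_nhds hpos)).exists
  refine ⟨-(n : ℝ), fun t ht => ?_⟩
  by_contra hlt
  push_neg at hlt
  exact absurd (le_trans ht (cdf_mono PX f hlt.le)) (not_le.mpr hn)

lemma quantile_Q1 (f : X → ℝ) (hf : Measurable f) {m : ℝ} (hm0 : 0 < m) (hm1 : m < 1)
    {r : ℝ} (hr : 0 < r) :
    ENNReal.ofReal m ≤ PX {x | f x ≤ quantileOf PX f m + r} := by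
  obtain ⟨t, ht, htlt⟩ := Real.lt_sInf_add_pos (quantile_set_nonempty PX f hm1) hr
  exact le_trans ht (cdf_mono PX f (le_of_lt htlt))

lemma quantile_Q2 (f : X → ℝ) (hf : Measurable f) {m : ℝ} (hm0 : 0 < m) (hm1 : m < 1)
    {r : ℝ} (hr : 0 < r) :
    PX {x | f x ≤ quantileOf PX f m - r} < ENNReal.ofReal m := by
  by_contra h
  push_neg at h
  have : quantileOf PX f m ≤ quantileOf PX f m - r :=
    csInf_le (quantile_set_bddBelow PX f hf hm0) h
  linarith

end Q

section D
set_option linter.unusedSectionVars false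
variable {X : Type*} [MeasurableSpace X] (PX : Measure X) [IsProbabilityMeasure PX]

/-- Interval mass bound from a bounded density. -/
lemma ioc_mass_le (f : X → ℝ) (hf : Measurable f) (Mhigh : ℝ) (dens : ℝ → ℝ)
    (hd : PX.map f = MeasureTheory.volume.withDensity fun t => ENNReal.ofReal (dens t))
    (hub : ∀ t, dens t ≤ Mhigh) (hMh : 0 ≤ Mhigh) (a b : ℝ) :
    PX {x | a < f x ∧ f x ≤ b} ≤ ENNReal.ofReal (Mhigh * (b - a)) := by
  rcases le_or_gt b a with hba | hab
  · have : {x | a < f x ∧ f x ≤ b} = ∅ := by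
      ext x; simp only [Set.mem_setOf_eq, Set.mem_empty_iff_false, iff_false, not_and, not_le]
      intro h; linarith
    rw [this, measure_empty]; exact zero_le
  · have h1 : {x | a < f x ∧ f x ≤ b} = f ⁻¹' Set.Ioc a b := rfl
    rw [h1, ← Measure.map_apply hf measurableSet_Ioc, hd,
      withDensity_apply _ measurableSet_Ioc]
    calc ∫⁻ t in Set.Ioc a b, ENNReal.ofReal (dens t)
        ≤ ∫⁻ _ in Set.Ioc a b, ENNReal.ofReal Mhigh := by
          refine setLIntegral_mono_ae (by fun_prop) ?_
          exact Filter.Eventually.of_forall fun t _ => ENNReal.ofReal_le_ofReal (hub t)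
      _ = ENNReal.ofReal Mhigh * MeasureTheory.volume (Set.Ioc a b) := setLIntegral_const _ _
      _ = ENNReal.ofReal (Mhigh * (b - a)) := by
          rw [Real.volume_Ioc, ← ENNReal.ofReal_mul hMh]

/-- Chebyshev: deviation probability bound from an L² bound. -/
lemma cheb_bound (g : X → ℝ) (hg : Measurable g) {e δ : ℝ} (he : 0 ≤ e) (hδ : 0 < δ)
    (hL : eLpNorm g 2 PX ≤ ENNReal.ofReal e) :
    PX {x | δ < |g x|} ≤ ENNReal.ofReal (e ^ 2 / δ ^ 2) := by
  have hkey := meas_ge_le_mul_pow_eLpNorm_enorm PX (p := 2) two_ne_zero ENNReal.ofNat_ne_top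
    hg.aestronglyMeasurable (ε := ENNReal.ofReal δ) (by simp [ENNReal.ofReal_eq_zero, hδ, not_le])
    (fun h => absurd h ENNReal.ofReal_ne_top)
  have hsub : {x | δ < |g x|} ⊆ {x | ENNReal.ofReal δ ≤ (‖g x‖₊ : ENNReal)} := by
    intro x hx
    simp only [Set.mem_setOf_eq] at hx ⊢
    rw [← enorm_eq_nnnorm, ← ofReal_norm]
    exact ENNReal.ofReal_le_ofReal (by rw [Real.norm_eq_abs]; exact hx.le)
  calc PX {x | δ < |g x|} ≤ PX {x | ENNReal.ofReal δ ≤ (‖g x‖₊ : ENNReal)} := measure_mono hsub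
    _ ≤ (ENNReal.ofReal δ)⁻¹ ^ (2:ENNReal).toReal * eLpNorm g 2 PX ^ (2:ENNReal).toReal := hkey
    _ ≤ (ENNReal.ofReal δ)⁻¹ ^ (2:ℝ) * (ENNReal.ofReal e) ^ (2:ℝ) := by
        simp only [ENNReal.toReal_ofNat]
        gcongr
    _ = ENNReal.ofReal (e ^ 2 / δ ^ 2) := by
        rw [← ENNReal.ofReal_inv_of_pos hδ]
        rw [ENNReal.ofReal_rpow_of_nonneg (by positivity) (by norm_num),
          ENNReal.ofReal_rpow_of_nonneg he (by norm_num),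
          ← ENNReal.ofReal_mul (by positivity)]
        congr 1
        rw [show ((2:ℝ)) = ((2:ℕ):ℝ) by norm_num, Real.rpow_natCast, Real.rpow_natCast]
        ring
  
end D

section Dis
set_option linter.unusedSectionVars false
variable {X : Type*} [MeasurableSpace X] (PX : Measure X) [IsProbabilityMeasure PX]

lemma cdf_split (f : X → ℝ) (hf : Measurable f) {a b : ℝ} (hab : a ≤ b) :
    PX {x | f x ≤ b} = PX {x | f x ≤ a} + PX {x | a < f x ∧ f x ≤ b} := by
  have hmeas : MeasurableSet {x | a < f x ∧ f x ≤ b} := hf measurableSet_Ioc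
  have hdisj : Disjoint {x | f x ≤ a} {x | a < f x ∧ f x ≤ b} := by
    rw [Set.disjoint_left]
    rintro x hx ⟨hx1, _⟩
    exact absurd hx (not_le.mpr hx1)
  have hset : {x | f x ≤ b} = {x | f x ≤ a} ∪ {x | a < f x ∧ f x ≤ b} := by
    ext x
    simp only [Set.mem_union, Set.mem_setOf_eq]
    constructor
    · intro h; rcases le_or_gt (f x) a with h' | h'
      · exact Or.inl h'
      · exact Or.inr ⟨h', h⟩
    · rintro (h | ⟨_, h⟩); exacts [le_trans h hab, h]
  rw [hset, measure_union hdisj hmeas]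

lemma ioc_split (f : X → ℝ) (a p b : ℝ) :
    PX {x | a < f x ∧ f x ≤ b} ≤
      PX {x | a < f x ∧ f x ≤ p} + PX {x | p < f x ∧ f x ≤ b} := by
  refine le_trans (measure_mono ?_) (measure_union_le _ _)
  rintro x ⟨h1, h2⟩
  rcases le_or_gt (f x) p with h | h
  · exact Or.inl ⟨h1, h⟩
  · exact Or.inr ⟨h, h2⟩

/-- Core deterministic disagreement bound between estimated and true threshold rules. -/
lemma disagree_bound (f fh : X → ℝ) (hf : Measurable f) (hfh : Measurable fh)
    {m : ℝ} (hm0 : 0 < m) (hm1 : m < 1) {δ : ℝ} (hδ : 0 < δ)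
    (Mhigh : ℝ) (hMh : 0 ≤ Mhigh) (dens : ℝ → ℝ)
    (hd : PX.map f = MeasureTheory.volume.withDensity fun t => ENNReal.ofReal (dens t))
    (hub : ∀ t, dens t ≤ Mhigh) :
    PX {x | (if quantileOf PX fh m < fh x then (1:ℝ) else 0) ≠
        (if quantileOf PX f m < f x then (1:ℝ) else 0)} ≤
      3 * PX {x | δ < |fh x - f x|} + ENNReal.ofReal (8 * (Mhigh * δ)) := by
  set κ := quantileOf PX f m with hκ
  set κh := quantileOf PX fh m with hκh
  set c := PX {x | δ < |fh x - f x|} with hc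
  have hA1 : PX Set.univ ≠ ⊤ := by simp
  have hAκfin : PX {x | f x ≤ κ} ≠ ⊤ := measure_ne_top _ _
  have hAκh2fin : PX {x | f x ≤ κh + 2*δ} ≠ ⊤ := measure_ne_top _ _
  -- CDF comparisons
  have hC1 : ∀ t : ℝ, PX {x | fh x ≤ t} ≤ PX {x | f x ≤ t + δ} + c := by
    intro t
    refine le_trans (measure_mono ?_) (measure_union_le _ _)
    intro x hx
    rcases le_or_gt (|fh x - f x|) δ with h | h
    · left
      have := abs_le.mp h
      simp only [Set.mem_setOf_eq] at hx ⊢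
      linarith [this.1]
    · exact Or.inr h
  have hC2 : ∀ t : ℝ, PX {x | f x ≤ t - δ} ≤ PX {x | fh x ≤ t} + c := by
    intro t
    refine le_trans (measure_mono ?_) (measure_union_le _ _)
    intro x hx
    rcases le_or_gt (|fh x - f x|) δ with h | h
    · left
      have := abs_le.mp h
      simp only [Set.mem_setOf_eq] at hx ⊢
      linarith [this.2]
    · exact Or.inr h
  -- D1 : m ≤ A(κh + 2δ) + c
  have hD1 : ENNReal.ofReal m ≤ PX {x | f x ≤ κh + 2*δ} + c := by
    have h1 := quantile_Q1 PX fh hfh hm0 hm1 hδ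
    have h2 := hC1 (κh + δ)
    have h3 : PX {x | f x ≤ κh + δ + δ} = PX {x | f x ≤ κh + 2*δ} := by ring_nf
    rw [h3] at h2
    exact le_trans h1 h2
  -- D2 : A(κh − 2δ) ≤ m + c
  have hD2 : PX {x | f x ≤ κh - 2*δ} ≤ ENNReal.ofReal m + c := by
    have h1 := (quantile_Q2 PX fh hfh hm0 hm1 hδ).le
    have h2 := hC2 (κh - δ)
    have h3 : PX {x | f x ≤ κh - δ - δ} = PX {x | f x ≤ κh - 2*δ} := by ring_nf
    rw [h3] at h2
    exact le_trans h2 (add_le_add_left h1 c)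
  -- interval bounds
  have hioc : ∀ a b : ℝ, PX {x | a < f x ∧ f x ≤ b} ≤ ENNReal.ofReal (Mhigh * (b - a)) :=
    ioc_mass_le PX f hf Mhigh dens hd hub hMh
  -- A(κ) ≥ m − Mhigh δ i.e. m ≤ A κ + Mhigh δ
  have hAκ_lb : ENNReal.ofReal m ≤ PX {x | f x ≤ κ} + ENNReal.ofReal (Mhigh * δ) := by
    have h1 := quantile_Q1 PX f hf hm0 hm1 hδ
    have h2 := cdf_split PX f hf (le_of_lt (lt_add_of_pos_right κ hδ))
    have h3 := hioc κ (κ + δ)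
    calc ENNReal.ofReal m ≤ PX {x | f x ≤ κ + δ} := h1
      _ = PX {x | f x ≤ κ} + PX {x | κ < f x ∧ f x ≤ κ + δ} := h2
      _ ≤ PX {x | f x ≤ κ} + ENNReal.ofReal (Mhigh * (κ + δ - κ)) := add_le_add_right h3 _
      _ = PX {x | f x ≤ κ} + ENNReal.ofReal (Mhigh * δ) := by ring_nf
  -- A(κ) ≤ m + Mhigh δ
  have hAκ_ub : PX {x | f x ≤ κ} ≤ ENNReal.ofReal m + ENNReal.ofReal (Mhigh * δ) := by
    have h1 := (quantile_Q2 PX f hf hm0 hm1 hδ).le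
    have h2 := cdf_split PX f hf (le_of_lt (sub_lt_self κ hδ))
    have h3 := hioc (κ - δ) κ
    calc PX {x | f x ≤ κ} = PX {x | f x ≤ κ - δ} + PX {x | κ - δ < f x ∧ f x ≤ κ} := h2
      _ ≤ ENNReal.ofReal m + ENNReal.ofReal (Mhigh * (κ - (κ - δ))) := add_le_add h1 h3
      _ = ENNReal.ofReal m + ENNReal.ofReal (Mhigh * δ) := by ring_nf
  -- piece A2 : PX {κ < f ≤ κh − 2δ} ≤ Mhigh δ + c
  have hA2 : PX {x | κ < f x ∧ f x ≤ κh - 2*δ} ≤ ENNReal.ofReal (Mhigh * δ) + c := by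
    rcases le_or_gt (κh - 2*δ) κ with h | h
    · have hemp : {x | κ < f x ∧ f x ≤ κh - 2*δ} = ∅ := by
        ext x
        simp only [Set.mem_setOf_eq, Set.mem_empty_iff_false, iff_false, not_and, not_le]
        intro h1; linarith
      rw [hemp, measure_empty]; exact zero_le
    · have hsplit := cdf_split PX f hf h.le
      have hchain : PX {x | f x ≤ κ} + PX {x | κ < f x ∧ f x ≤ κh - 2*δ} ≤
          PX {x | f x ≤ κ} + (ENNReal.ofReal (Mhigh * δ) + c) := by
        calc PX {x | f x ≤ κ} + PX {x | κ < f x ∧ f x ≤ κh - 2*δ}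
            = PX {x | f x ≤ κh - 2*δ} := hsplit.symm
          _ ≤ ENNReal.ofReal m + c := hD2
          _ ≤ (PX {x | f x ≤ κ} + ENNReal.ofReal (Mhigh * δ)) + c := add_le_add_left hAκ_lb c
          _ = PX {x | f x ≤ κ} + (ENNReal.ofReal (Mhigh * δ) + c) := by rw [add_assoc]
      exact (ENNReal.add_le_add_iff_left hAκfin).mp hchain
  -- piece B2 : PX {κh + 2δ < f ≤ κ} ≤ Mhigh δ + c + Mhigh δ
  have hB2 : PX {x | κh + 2*δ < f x ∧ f x ≤ κ} ≤
      ENNReal.ofReal (Mhigh * δ) + c := by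
    rcases le_or_gt κ (κh + 2*δ) with h | h
    · have hemp : {x | κh + 2*δ < f x ∧ f x ≤ κ} = ∅ := by
        ext x
        simp only [Set.mem_setOf_eq, Set.mem_empty_iff_false, iff_false, not_and, not_le]
        intro h1; linarith
      rw [hemp, measure_empty]; exact zero_le
    · have hsplit := cdf_split PX f hf h.le
      have hchain : PX {x | f x ≤ κh + 2*δ} + PX {x | κh + 2*δ < f x ∧ f x ≤ κ} ≤
          PX {x | f x ≤ κh + 2*δ} + (ENNReal.ofReal (Mhigh * δ) + c) := by
        calc PX {x | f x ≤ κh + 2*δ} + PX {x | κh + 2*δ < f x ∧ f x ≤ κ}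
            = PX {x | f x ≤ κ} := hsplit.symm
          _ ≤ ENNReal.ofReal m + ENNReal.ofReal (Mhigh * δ) := hAκ_ub
          _ ≤ (PX {x | f x ≤ κh + 2*δ} + c) + ENNReal.ofReal (Mhigh * δ) :=
              add_le_add_left hD1 _
          _ = PX {x | f x ≤ κh + 2*δ} + (ENNReal.ofReal (Mhigh * δ) + c) := by
              ring
      exact (ENNReal.add_le_add_iff_left hAκh2fin).mp hchain
  -- Type A bound
  have hTA : PX {x | κ < f x ∧ f x ≤ κh + δ} ≤
      (ENNReal.ofReal (Mhigh * δ) + c) + ENNReal.ofReal (Mhigh * (3*δ)) := by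
    refine le_trans (ioc_split PX f κ (κh - 2*δ) (κh + δ)) (add_le_add hA2 ?_)
    refine le_trans (hioc _ _) (ENNReal.ofReal_le_ofReal ?_)
    nlinarith
  -- Type B bound
  have hTB : PX {x | κh - δ < f x ∧ f x ≤ κ} ≤
      ENNReal.ofReal (Mhigh * (3*δ)) + (ENNReal.ofReal (Mhigh * δ) + c) := by
    refine le_trans (ioc_split PX f (κh - δ) (κh + 2*δ) κ) (add_le_add ?_ hB2)
    refine le_trans (hioc _ _) (ENNReal.ofReal_le_ofReal ?_)
    nlinarith
  -- assemble
  have hsub : {x | (if κh < fh x then (1:ℝ) else 0) ≠ (if κ < f x then (1:ℝ) else 0)} ⊆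
      {x | δ < |fh x - f x|} ∪
        ({x | κ < f x ∧ f x ≤ κh + δ} ∪ {x | κh - δ < f x ∧ f x ≤ κ}) := by
    intro x hx
    simp only [Set.mem_setOf_eq] at hx
    rcases le_or_gt (|fh x - f x|) δ with habs | habs
    · right
      have habs' := abs_le.mp habs
      by_cases h1 : κh < fh x <;> by_cases h2 : κ < f x <;>
        simp only [h1, h2, if_pos, if_neg, not_lt] at hx ⊢
      · exact absurd rfl hx
      · push_neg at h2
        right
        exact ⟨by linarith [habs'.2], by linarith⟩
      · push_neg at h1
        left
        exact ⟨by linarith, by linarith [habs'.1]⟩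
      · exact absurd rfl hx
    · exact Or.inl habs
  calc PX {x | (if κh < fh x then (1:ℝ) else 0) ≠ (if κ < f x then (1:ℝ) else 0)}
      ≤ PX ({x | δ < |fh x - f x|} ∪
        ({x | κ < f x ∧ f x ≤ κh + δ} ∪ {x | κh - δ < f x ∧ f x ≤ κ})) := measure_mono hsub
    _ ≤ c + (PX {x | κ < f x ∧ f x ≤ κh + δ} + PX {x | κh - δ < f x ∧ f x ≤ κ}) := by
        refine le_trans (measure_union_le _ _) (add_le_add_right (measure_union_le _ _) c)
    _ ≤ c + (((ENNReal.ofReal (Mhigh * δ) + c) + ENNReal.ofReal (Mhigh * (3*δ))) +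
        (ENNReal.ofReal (Mhigh * (3*δ)) + (ENNReal.ofReal (Mhigh * δ) + c))) :=
        add_le_add_right (add_le_add hTA hTB) c
    _ = 3 * c + (ENNReal.ofReal (Mhigh * δ) + ENNReal.ofReal (Mhigh * (3*δ)) +
        ENNReal.ofReal (Mhigh * (3*δ)) + ENNReal.ofReal (Mhigh * δ)) := by ring
    _ = 3 * c + ENNReal.ofReal (8 * (Mhigh * δ)) := by
        rw [← ENNReal.ofReal_add (by positivity) (by positivity),
          ← ENNReal.ofReal_add (by positivity) (by positivity),
          ← ENNReal.ofReal_add (by positivity) (by positivity)]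
        congr 1
        ring

end Dis



lemma nonempty_of_prob {Y : Type*} [MeasurableSpace Y] (Q : Measure Y)
    [IsProbabilityMeasure Q] : Nonempty Y := by
  by_contra h
  have he : (Set.univ : Set Y) = ∅ := Set.univ_eq_empty_iff.mpr (not_nonempty_iff.mp h)
  have h1 : Q Set.univ = 1 := measure_univ
  rw [he, measure_empty] at h1
  exact zero_ne_one h1

section V
set_option linter.unusedSectionVars false
variable {X : Type*} [MeasurableSpace X] {S : Type*} [Fintype S] [Nonempty S]
  (PX : Measure X) [IsProbabilityMeasure PX]


lemma integrable_of_bdd_s6 {f : X → ℝ} (hm : Measurable f) {C : ℝ} (hC : ∀ x, |f x| ≤ C) :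
    Integrable f PX :=
  ⟨hm.aestronglyMeasurable, HasFiniteIntegral.of_bounded (C := C)
    (Filter.Eventually.of_forall (fun x => by rw [Real.norm_eq_abs]; exact hC x))⟩

lemma integral_abs_le {f : X → ℝ} (hm : Measurable f) {C : ℝ} (hC : ∀ x, |f x| ≤ C) :
    |∫ x, f x ∂PX| ≤ C := by
  obtain ⟨x0⟩ := nonempty_of_prob PX
  have hC0 : 0 ≤ C := le_trans (abs_nonneg _) (hC x0)
  calc |∫ x, f x ∂PX| ≤ ∫ x, |f x| ∂PX := by
        rw [← Real.norm_eq_abs]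
        exact (norm_integral_le_integral_norm f).trans (le_of_eq (by simp [Real.norm_eq_abs]))
    _ ≤ ∫ _x, C ∂PX := integral_mono ((integrable_of_bdd_s6 PX hm hC).abs)
        (integrable_const C) (fun x => by simpa using hC x)
    _ = C := by simp

/-- Value difference between two policies in terms of L¹ policy distance. -/
lemma polValue_diff
    (PS : S → Bool → S → ℝ)
    (η : Bool → X → S → ℝ) (hη_meas : ∀ w s, Measurable fun x => η w x s)
    (B : ℝ) (hη_bdd : ∀ w x s, |η w x s| ≤ B)
    (dstat : (X → S → ℝ) → S → ℝ)
    (hd_stat : ∀ π : X → S → ℝ, IsPolicy π → IsStationaryVec PX PS π (dstat π))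
    (Ld : ℝ)
    (hLip : ∀ π π' : X → S → ℝ, IsPolicy π → IsPolicy π' → ∀ s : S,
      |dstat π s - dstat π' s| ≤
        Ld * Finset.univ.sup' Finset.univ_nonempty
          (fun s' : S => |(∫ x, π x s' ∂PX) - ∫ x, π' x s' ∂PX|))
    (π π' : X → S → ℝ) (hπ : IsPolicy π) (hπ' : IsPolicy π')
    (D : ℝ) (hD0 : 0 ≤ D)
    (hD : ∀ s : S, ∫ x, |π x s - π' x s| ∂PX ≤ D) :
    |polValue PX η dstat π - polValue PX η dstat π'| ≤
      (Fintype.card S : ℝ) * ((max Ld 0) * B + 2 * B) * D := by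
  obtain ⟨x0⟩ := nonempty_of_prob PX
  have hB0 : 0 ≤ B :=
    le_trans (abs_nonneg _) (hη_bdd true x0 (Classical.arbitrary S))
  -- integrability and bounds for the per-state value integrand
  have hval_meas : ∀ (ρ : X → S → ℝ), IsPolicy ρ → ∀ s : S,
      Measurable (fun x => ρ x s * η true x s + (1 - ρ x s) * η false x s) := by
    intro ρ hρ s
    exact ((hρ.1 s).mul (hη_meas true s)).add
      ((measurable_const.sub (hρ.1 s)).mul (hη_meas false s))
  have hval_bdd : ∀ (ρ : X → S → ℝ), IsPolicy ρ → ∀ s x,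
      |ρ x s * η true x s + (1 - ρ x s) * η false x s| ≤ B := by
    intro ρ hρ s x
    obtain ⟨h0, h1⟩ := hρ.2 x s
    calc |ρ x s * η true x s + (1 - ρ x s) * η false x s|
        ≤ |ρ x s * η true x s| + |(1 - ρ x s) * η false x s| := abs_add_le _ _
      _ = |ρ x s| * |η true x s| + |1 - ρ x s| * |η false x s| := by rw [abs_mul, abs_mul]
      _ = ρ x s * |η true x s| + (1 - ρ x s) * |η false x s| := by
          rw [abs_of_nonneg h0, abs_of_nonneg (show (0:ℝ) ≤ 1 - ρ x s by linarith)]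
      _ ≤ ρ x s * B + (1 - ρ x s) * B :=
          add_le_add (mul_le_mul_of_nonneg_left (hη_bdd true x s) h0)
            (mul_le_mul_of_nonneg_left (hη_bdd false x s) (by linarith))
      _ = B := by ring
  have hπmeas := hπ.1
  have hπ'meas := hπ'.1
  have hπbdd1 : ∀ s x, |π x s| ≤ 1 := fun s x => by
    obtain ⟨h0, h1⟩ := hπ.2 x s; rw [abs_of_nonneg h0]; exact h1
  have hπ'bdd1 : ∀ s x, |π' x s| ≤ 1 := fun s x => by
    obtain ⟨h0, h1⟩ := hπ'.2 x s; rw [abs_of_nonneg h0]; exact h1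
  -- stationary distribution bounds
  have hdbox : ∀ (ρ : X → S → ℝ), IsPolicy ρ → ∀ s : S,
      0 ≤ dstat ρ s ∧ dstat ρ s ≤ 1 := by
    intro ρ hρ s
    obtain ⟨hpos, hsum, _⟩ := hd_stat ρ hρ
    refine ⟨hpos s, ?_⟩
    rw [← hsum]
    exact Finset.single_le_sum (fun i _ => hpos i) (Finset.mem_univ s)
  -- bound on integral distance
  have hIdist : ∀ s : S, |(∫ x, π x s ∂PX) - ∫ x, π' x s ∂PX| ≤ D := by
    intro s
    rw [← integral_sub (integrable_of_bdd_s6 PX (hπmeas s) (hπbdd1 s))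
      (integrable_of_bdd_s6 PX (hπ'meas s) (hπ'bdd1 s))]
    calc |∫ x, (π x s - π' x s) ∂PX| ≤ ∫ x, |π x s - π' x s| ∂PX := by
          rw [← Real.norm_eq_abs]
          exact (norm_integral_le_integral_norm _).trans (le_of_eq (by simp [Real.norm_eq_abs]))
      _ ≤ D := hD s
  -- Lipschitz bound on dstat difference
  have hddiff : ∀ s : S, |dstat π s - dstat π' s| ≤ (max Ld 0) * D := by
    intro s
    refine le_trans (hLip π π' hπ hπ' s) ?_
    have hsup_le : Finset.univ.sup' Finset.univ_nonempty
        (fun s' : S => |(∫ x, π x s' ∂PX) - ∫ x, π' x s' ∂PX|) ≤ D :=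
      Finset.sup'_le _ _ (fun s' _ => hIdist s')
    have hsup_nonneg : 0 ≤ Finset.univ.sup' Finset.univ_nonempty
        (fun s' : S => |(∫ x, π x s' ∂PX) - ∫ x, π' x s' ∂PX|) :=
      le_trans (abs_nonneg _)
        (Finset.le_sup' (fun s' : S => |(∫ x, π x s' ∂PX) - ∫ x, π' x s' ∂PX|)
          (Finset.mem_univ (Classical.arbitrary S)))
    calc Ld * Finset.univ.sup' Finset.univ_nonempty
          (fun s' : S => |(∫ x, π x s' ∂PX) - ∫ x, π' x s' ∂PX|)
        ≤ (max Ld 0) * Finset.univ.sup' Finset.univ_nonempty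
          (fun s' : S => |(∫ x, π x s' ∂PX) - ∫ x, π' x s' ∂PX|) :=
          mul_le_mul_of_nonneg_right (le_max_left _ _) hsup_nonneg
      _ ≤ (max Ld 0) * D := mul_le_mul_of_nonneg_left hsup_le (le_max_right _ _)
  -- per-state value difference
  have hVdiff : ∀ s : S,
      |(∫ x, (π x s * η true x s + (1 - π x s) * η false x s) ∂PX) -
        ∫ x, (π' x s * η true x s + (1 - π' x s) * η false x s) ∂PX| ≤ 2 * B * D := by
    intro s
    rw [← integral_sub (integrable_of_bdd_s6 PX (hval_meas π hπ s) (hval_bdd π hπ s))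
      (integrable_of_bdd_s6 PX (hval_meas π' hπ' s) (hval_bdd π' hπ' s))]
    have hptw : ∀ x, |(π x s * η true x s + (1 - π x s) * η false x s) -
        (π' x s * η true x s + (1 - π' x s) * η false x s)| ≤ 2 * B * |π x s - π' x s| := by
      intro x
      have heq : (π x s * η true x s + (1 - π x s) * η false x s) -
          (π' x s * η true x s + (1 - π' x s) * η false x s) =
          (π x s - π' x s) * (η true x s - η false x s) := by ring
      rw [heq, abs_mul]
      have h1 : |η true x s - η false x s| ≤ 2 * B := by
        calc |η true x s - η false x s| ≤ |η true x s| + |η false x s| := abs_sub _ _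
          _ ≤ 2 * B := by linarith [hη_bdd true x s, hη_bdd false x s]
      calc |π x s - π' x s| * |η true x s - η false x s|
          ≤ |π x s - π' x s| * (2 * B) := mul_le_mul_of_nonneg_left h1 (abs_nonneg _)
        _ = 2 * B * |π x s - π' x s| := by ring
    have hint1 : Integrable (fun x => |(π x s * η true x s + (1 - π x s) * η false x s) -
        (π' x s * η true x s + (1 - π' x s) * η false x s)|) PX :=
      ((integrable_of_bdd_s6 PX (hval_meas π hπ s) (hval_bdd π hπ s)).sub
        (integrable_of_bdd_s6 PX (hval_meas π' hπ' s) (hval_bdd π' hπ' s))).abs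
    have hint2 : Integrable (fun x => 2 * B * |π x s - π' x s|) PX :=
      (((integrable_of_bdd_s6 PX ((hπmeas s).sub (hπ'meas s))
        (C := 2) (fun x => by
          calc |π x s - π' x s| ≤ |π x s| + |π' x s| := abs_sub _ _
            _ ≤ 2 := by linarith [hπbdd1 s x, hπ'bdd1 s x])).abs).const_mul (2 * B))
    calc |∫ x, ((π x s * η true x s + (1 - π x s) * η false x s) -
          (π' x s * η true x s + (1 - π' x s) * η false x s)) ∂PX|
        ≤ ∫ x, |(π x s * η true x s + (1 - π x s) * η false x s) -
          (π' x s * η true x s + (1 - π' x s) * η false x s)| ∂PX := by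
          rw [← Real.norm_eq_abs]
          exact (norm_integral_le_integral_norm _).trans (le_of_eq (by simp [Real.norm_eq_abs]))
      _ ≤ ∫ x, 2 * B * |π x s - π' x s| ∂PX := integral_mono hint1 hint2 hptw
      _ = 2 * B * ∫ x, |π x s - π' x s| ∂PX := integral_const_mul _ _
      _ ≤ 2 * B * D := by
          apply mul_le_mul_of_nonneg_left (hD s) (by positivity)
  -- assemble
  unfold polValue
  rw [← Finset.sum_sub_distrib]
  refine le_trans (Finset.abs_sum_le_sum_abs _ _) ?_
  have hterm : ∀ s : S,
      |dstat π s * (∫ x, (π x s * η true x s + (1 - π x s) * η false x s) ∂PX) -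
        dstat π' s * ∫ x, (π' x s * η true x s + (1 - π' x s) * η false x s) ∂PX| ≤
      ((max Ld 0) * B + 2 * B) * D := by
    intro s
    set u := ∫ x, (π x s * η true x s + (1 - π x s) * η false x s) ∂PX with hu
    set v := ∫ x, (π' x s * η true x s + (1 - π' x s) * η false x s) ∂PX with hv
    have heq : dstat π s * u - dstat π' s * v =
        (dstat π s - dstat π' s) * u + dstat π' s * (u - v) := by ring
    have hub : |u| ≤ B := integral_abs_le PX (hval_meas π hπ s) (hval_bdd π hπ s)
    have hd' := hdbox π' hπ' s
    calc |dstat π s * u - dstat π' s * v|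
        = |(dstat π s - dstat π' s) * u + dstat π' s * (u - v)| := by rw [heq]
      _ ≤ |(dstat π s - dstat π' s) * u| + |dstat π' s * (u - v)| := abs_add_le _ _
      _ = |dstat π s - dstat π' s| * |u| + |dstat π' s| * |u - v| := by rw [abs_mul, abs_mul]
      _ ≤ ((max Ld 0) * D) * B + 1 * (2 * B * D) := by
          refine add_le_add (mul_le_mul (hddiff s) hub (abs_nonneg _) (by positivity)) ?_
          refine mul_le_mul ?_ (hVdiff s) (abs_nonneg _) zero_le_one
          rw [abs_of_nonneg hd'.1]; exact hd'.2
      _ = ((max Ld 0) * B + 2 * B) * D := by ring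
  calc ∑ s : S, |dstat π s * (∫ x, (π x s * η true x s + (1 - π x s) * η false x s) ∂PX) -
        dstat π' s * ∫ x, (π' x s * η true x s + (1 - π' x s) * η false x s) ∂PX|
      ≤ ∑ _s : S, ((max Ld 0) * B + 2 * B) * D := Finset.sum_le_sum (fun s _ => hterm s)
    _ = (Fintype.card S : ℝ) * ((max Ld 0) * B + 2 * B) * D := by
        rw [Finset.sum_const, Finset.card_univ, nsmul_eq_mul]; ring

/-- Threshold policies are policies. -/
lemma isPolicy_threshold (τ : X → S → ℝ) (hτ : ∀ s : S, Measurable fun x => τ x s)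
    (g : S → ℝ) :
    IsPolicy (fun x s => if quantileOf PX (fun x' => τ x' s) (1 - g s) < τ x s
      then (1:ℝ) else 0) := by
  constructor
  · intro s
    have : MeasurableSet {x | quantileOf PX (fun x' => τ x' s) (1 - g s) < τ x s} :=
      (hτ s) measurableSet_Ioi
    exact Measurable.ite this measurable_const measurable_const
  · intro x s
    by_cases h : quantileOf PX (fun x' => τ x' s) (1 - g s) < τ x s <;>
      simp [h]

/-- Integral of the absolute difference of two indicator policies. -/
lemma integral_abs_indicator_diff (f fh : X → ℝ) (hf : Measurable f) (hfh : Measurable fh)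
    (κ κh : ℝ) :
    ∫ x, |(if κh < fh x then (1:ℝ) else 0) - (if κ < f x then (1:ℝ) else 0)| ∂PX =
      (PX {x | (if κh < fh x then (1:ℝ) else 0) ≠ (if κ < f x then (1:ℝ) else 0)}).toReal := by
  have hsetEq : {x | (if κh < fh x then (1:ℝ) else 0) ≠ (if κ < f x then (1:ℝ) else 0)} =
      ({x | κh < fh x} \ {x | κ < f x}) ∪ ({x | κ < f x} \ {x | κh < fh x}) := by
    ext x
    by_cases h1 : κh < fh x <;> by_cases h2 : κ < f x <;>
      simp [h1, h2]
  have hmeas : MeasurableSet {x | (if κh < fh x then (1:ℝ) else 0) ≠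
      (if κ < f x then (1:ℝ) else 0)} := by
    rw [hsetEq]
    exact ((hfh measurableSet_Ioi).diff (hf measurableSet_Ioi)).union
      ((hf measurableSet_Ioi).diff (hfh measurableSet_Ioi))
  have hfun : (fun x => |(if κh < fh x then (1:ℝ) else 0) - (if κ < f x then (1:ℝ) else 0)|) =
      Set.indicator {x | (if κh < fh x then (1:ℝ) else 0) ≠
        (if κ < f x then (1:ℝ) else 0)} (fun _ => (1:ℝ)) := by
    ext x
    by_cases h1 : κh < fh x <;> by_cases h2 : κ < f x <;>
      simp [Set.indicator, h1, h2]
  rw [hfun, integral_indicator hmeas]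
  simp [measureReal_def]

end V

set_option maxHeartbeats 1600000 in
/-- Theorem 4, consistency of Algorithm 1, L²-rate version. -/
theorem learned_policy_value_consistency_L2
    {X : Type*} [MeasurableSpace X] (PX : Measure X) [IsProbabilityMeasure PX]
    {S : Type*} [Fintype S] [Nonempty S]
    (PS : S → Bool → S → ℝ)
    (hPS_nonneg : ∀ s w s', 0 ≤ PS s w s')
    (hPS_sum : ∀ s w, ∑ s' : S, PS s w s' = 1)
    (η : Bool → X → S → ℝ)
    (hη_meas : ∀ w s, Measurable fun x => η w x s)
    (B : ℝ) (hη_bdd : ∀ w x s, |η w x s| ≤ B)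
    (dstat : (X → S → ℝ) → S → ℝ)
    (hd_stat : ∀ π : X → S → ℝ, IsPolicy π → IsStationaryVec PX PS π (dstat π))
    (hd_uniq : ∀ π : X → S → ℝ, IsPolicy π →
      ∀ d : S → ℝ, IsStationaryVec PX PS π d → d = dstat π)
    -- the CADE
    (τ : X → S → ℝ) (hτ : ∀ x s, τ x s = η true x s - η false x s)
    -- bounded-density assumption on the CADE
    (mlow Mhigh : ℝ) (hmlow : 0 < mlow)
    (dens : S → ℝ → ℝ) (hdens_meas : ∀ s, Measurable (dens s))
    (hdens_nonneg : ∀ s t, 0 ≤ dens s t)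
    (hdens : ∀ s : S, PX.map (fun x => τ x s) =
      MeasureTheory.volume.withDensity fun t => ENNReal.ofReal (dens s t))
    (hdens_ub : ∀ s t, dens s t ≤ Mhigh)
    (hdens_lb : ∀ s t, dens s t = 0 ∨ mlow ≤ dens s t)
    -- Lipschitz assumption on stationary distributions
    (Ld : ℝ)
    (hLip : ∀ π π' : X → S → ℝ, IsPolicy π → IsPolicy π' → ∀ s : S,
      |dstat π s - dstat π' s| ≤
        Ld * Finset.univ.sup' Finset.univ_nonempty
          (fun s' : S => |(∫ x, π x s' ∂PX) - ∫ x, π' x s' ∂PX|))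
    -- separation assumption with maximizer g*
    (gstar : S → ℝ) (hgstar : InBox gstar)
    (hmax : ∀ g : S → ℝ, InBox g →
      polValue PX η dstat (thresholdPolicy PX τ g) ≤
        polValue PX η dstat (thresholdPolicy PX τ gstar))
    (hsep : ∀ ε : ℝ, 0 < ε → ∃ δ : ℝ, 0 < δ ∧
      ∀ g : S → ℝ, InBox g → (∃ s : S, ε ≤ |g s - gstar s|) →
        polValue PX η dstat (thresholdPolicy PX τ g) ≤
          polValue PX η dstat (thresholdPolicy PX τ gstar) - δ)
    -- probability space carrying the estimates
    {Ω : Type*} [MeasurableSpace Ω] (P : Measure Ω) [IsProbabilityMeasure P]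
    (β γ : ℝ) (hβ : 0 < β) (hγ : 0 < γ)
    -- random CADE estimates
    (τhat : ℕ → Ω → X → S → ℝ)
    (hτhat_meas : ∀ (n : ℕ) (s : S),
      Measurable fun q : Ω × X => τhat n q.1 q.2 s)
    (hτhat_atomless : ∀ n : ℕ, ∀ᵐ ω ∂P, ∀ (s : S) (t : ℝ),
      PX {x | τhat n ω x s = t} = 0)
    (hτhat_rate : ∀ ε : ℝ, 0 < ε → ∃ (M : ℝ) (N : ℕ), ∀ n ≥ N,
      P {ω | ∃ s : S, ENNReal.ofReal (M * (n : ℝ) ^ (-β)) <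
          eLpNorm (fun x => τhat n ω x s - τ x s) 2 PX} ≤ ENNReal.ofReal ε)
    -- off-policy value estimates, uniformly consistent at rate n^{-γ}
    (Vhat : ℕ → Ω → (S → ℝ) → ℝ)
    (hVhat_rate : ∀ ε : ℝ, 0 < ε → ∃ (M : ℝ) (N : ℕ), ∀ n ≥ N,
      P {ω | ∃ g : S → ℝ, InBox g ∧
          M * (n : ℝ) ^ (-γ) <
            |Vhat n ω g -
              polValue PX η dstat (thresholdPolicy PX (τhat n ω) g)|}
        ≤ ENNReal.ofReal ε)
    -- near-maximizers of the off-policy value estimates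
    (ghat : ℕ → Ω → S → ℝ) (hghat_box : ∀ n ω, InBox (ghat n ω))
    (Z : ℕ → Ω → ℝ)
    (hZ : IsBigOp P Z (fun n => (n : ℝ) ^ (-(2 * β / 3)) + (n : ℝ) ^ (-γ)))
    (hghat_max : ∀ (n : ℕ) (ω : Ω) (g : S → ℝ), InBox g →
      Vhat n ω g - Z n ω ≤ Vhat n ω (ghat n ω)) :
    IsBigOp P
      (fun n ω =>
        polValue PX η dstat (thresholdPolicy PX (τhat n ω) (ghat n ω)) -
          polValue PX η dstat (thresholdPolicy PX τ gstar))
      (fun n => (n : ℝ) ^ (-(2 * β / 3)) + (n : ℝ) ^ (-γ)) := by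
  classical
  obtain ⟨x0⟩ := nonempty_of_prob PX
  have hB0 : 0 ≤ B := le_trans (abs_nonneg _) (hη_bdd true x0 (Classical.arbitrary S))
  have hMh0 : 0 ≤ Mhigh :=
    le_trans (hdens_nonneg (Classical.arbitrary S) 0) (hdens_ub (Classical.arbitrary S) 0)
  have hτmeas : ∀ s : S, Measurable fun x => τ x s := by
    intro s
    have hfe : (fun x => τ x s) = fun x => η true x s - η false x s :=
      funext fun x => hτ x s
    rw [hfe]
    exact (hη_meas true s).sub (hη_meas false s)
  have hτhat_sec : ∀ (n : ℕ) (ω : Ω) (s : S), Measurable fun x => τhat n ω x s :=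
    fun n ω s => (hτhat_meas n s).comp measurable_prodMk_left
  intro ε hε
  obtain ⟨M₁, N₁, h₁⟩ := hτhat_rate (ε/3) (by positivity)
  obtain ⟨M₂, N₂, h₂⟩ := hVhat_rate (ε/3) (by positivity)
  obtain ⟨M₃, N₃, h₃⟩ := hZ (ε/3) (by positivity)
  obtain ⟨M₁', hM₁'⟩ : ∃ r : ℝ, r = max M₁ 1 := ⟨_, rfl⟩
  obtain ⟨M₂', hM₂'⟩ : ∃ r : ℝ, r = max M₂ 0 := ⟨_, rfl⟩
  obtain ⟨M₃', hM₃'⟩ : ∃ r : ℝ, r = max M₃ 0 := ⟨_, rfl⟩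
  have hM₁'pos : 0 < M₁' := by rw [hM₁']; exact lt_of_lt_of_le one_pos (le_max_right _ _)
  have hM₂'0 : 0 ≤ M₂' := by rw [hM₂']; exact le_max_right _ _
  have hM₃'0 : 0 ≤ M₃' := by rw [hM₃']; exact le_max_right _ _
  obtain ⟨C0, hC0⟩ : ∃ r : ℝ, r = (Fintype.card S : ℝ) * ((max Ld 0) * B + 2 * B) := ⟨_, rfl⟩
  have hC00 : 0 ≤ C0 := by
    rw [hC0]
    apply mul_nonneg (Nat.cast_nonneg _)
    have : 0 ≤ max Ld 0 := le_max_right _ _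
    nlinarith
  obtain ⟨K, hK⟩ : ∃ r : ℝ, r = C0 * ((3 + 8 * Mhigh) * M₁' ^ ((2:ℝ)/3)) := ⟨_, rfl⟩
  have hK0 : 0 ≤ K := by
    rw [hK]
    apply mul_nonneg hC00
    apply mul_nonneg (by linarith)
    exact le_of_lt (Real.rpow_pos_of_pos hM₁'pos _)
  refine ⟨K + 2 * M₂' + M₃', max (max N₁ N₂) (max N₃ 1), fun n hn => ?_⟩
  have hnN₁ : n ≥ N₁ := le_trans (le_trans (le_max_left _ _) (le_max_left _ _)) hn
  have hnN₂ : n ≥ N₂ := le_trans (le_trans (le_max_right _ _) (le_max_left _ _)) hn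
  have hnN₃ : n ≥ N₃ := le_trans (le_trans (le_max_left _ _) (le_max_right _ _)) hn
  have hn1 : 1 ≤ n := le_trans (le_trans (le_max_right _ _) (le_max_right _ _)) hn
  have hnpos : (0:ℝ) < (n:ℝ) := by exact_mod_cast Nat.lt_of_lt_of_le Nat.zero_lt_one hn1
  have hbpos : (0:ℝ) < (n:ℝ) ^ (-β) := Real.rpow_pos_of_pos hnpos _
  have hb2pos : (0:ℝ) < (n:ℝ) ^ (-(2*β/3)) := Real.rpow_pos_of_pos hnpos _
  have hgpos : (0:ℝ) < (n:ℝ) ^ (-γ) := Real.rpow_pos_of_pos hnpos _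
  obtain ⟨an, han⟩ : ∃ r : ℝ, r = (n:ℝ) ^ (-(2*β/3)) + (n:ℝ) ^ (-γ) := ⟨_, rfl⟩
  have hanpos : 0 < an := by rw [han]; positivity
  -- the three bad events
  set E₁ : Set Ω := {ω | ∃ s : S, ENNReal.ofReal (M₁ * (n : ℝ) ^ (-β)) <
      eLpNorm (fun x => τhat n ω x s - τ x s) 2 PX} with hE₁
  set E₂ : Set Ω := {ω | ∃ g : S → ℝ, InBox g ∧
      M₂ * (n : ℝ) ^ (-γ) <
        |Vhat n ω g - polValue PX η dstat (thresholdPolicy PX (τhat n ω) g)|} with hE₂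
  set E₃ : Set Ω := {ω | M₃ * ((n : ℝ) ^ (-(2 * β / 3)) + (n : ℝ) ^ (-γ)) < |Z n ω|} with hE₃
  -- deterministic bound on the good event
  have hdet : ∀ ω : Ω, ω ∉ E₁ → ω ∉ E₂ → ω ∉ E₃ →
      |polValue PX η dstat (thresholdPolicy PX (τhat n ω) (ghat n ω)) -
        polValue PX η dstat (thresholdPolicy PX τ gstar)| ≤ (K + 2 * M₂' + M₃') * an := by
    intro ω hω₁ hω₂ hω₃
    -- extract good-event inequalities
    have hg₁ : ∀ s : S, eLpNorm (fun x => τhat n ω x s - τ x s) 2 PX ≤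
        ENNReal.ofReal (M₁' * (n : ℝ) ^ (-β)) := by
      intro s
      simp only [hE₁, Set.mem_setOf_eq, not_exists, not_lt] at hω₁
      refine le_trans (hω₁ s) (ENNReal.ofReal_le_ofReal ?_)
      rw [hM₁']
      exact mul_le_mul_of_nonneg_right (le_max_left _ _) hbpos.le
    have hg₂ : ∀ g : S → ℝ, InBox g →
        |Vhat n ω g - polValue PX η dstat (thresholdPolicy PX (τhat n ω) g)| ≤
          M₂' * (n : ℝ) ^ (-γ) := by
      intro g hg
      simp only [hE₂, Set.mem_setOf_eq, not_exists, not_and, not_lt] at hω₂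
      refine le_trans (hω₂ g hg) ?_
      rw [hM₂']
      exact mul_le_mul_of_nonneg_right (le_max_left _ _) hgpos.le
    have hg₃ : |Z n ω| ≤ M₃' * an := by
      simp only [hE₃, Set.mem_setOf_eq, not_lt] at hω₃
      rw [hM₃', han]
      refine le_trans hω₃ ?_
      exact mul_le_mul_of_nonneg_right (le_max_left _ _) (by positivity)
    -- the L² error level
    obtain ⟨e, he_def⟩ : ∃ r : ℝ, r = M₁' * (n:ℝ) ^ (-β) := ⟨_, rfl⟩
    have hepos : 0 < e := by rw [he_def]; exact mul_pos hM₁'pos hbpos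
    obtain ⟨δ, hδ_def⟩ : ∃ r : ℝ, r = e ^ ((2:ℝ)/3) := ⟨_, rfl⟩
    have hδpos : 0 < δ := by rw [hδ_def]; exact Real.rpow_pos_of_pos hepos _
    have hg₁' : ∀ s : S, eLpNorm (fun x => τhat n ω x s - τ x s) 2 PX ≤
        ENNReal.ofReal e := by
      intro s
      rw [he_def]
      exact hg₁ s
    have hratio : e ^ 2 / δ ^ 2 = δ := by
      rw [hδ_def, ← Real.rpow_natCast e 2, ← Real.rpow_natCast (e ^ ((2:ℝ)/3)) 2,
        ← Real.rpow_mul hepos.le, ← Real.rpow_sub hepos]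
      norm_num
    -- Chebyshev for each state
    have hcheb : ∀ s : S, PX {x | δ < |τhat n ω x s - τ x s|} ≤ ENNReal.ofReal δ := by
      intro s
      have := cheb_bound PX (fun x => τhat n ω x s - τ x s)
        ((hτhat_sec n ω s).sub (hτmeas s)) hepos.le hδpos (hg₁' s)
      rwa [hratio] at this
    obtain ⟨D, hD_def⟩ : ∃ r : ℝ, r = (3 + 8 * Mhigh) * δ := ⟨_, rfl⟩
    have hD0 : 0 ≤ D := by rw [hD_def]; exact mul_nonneg (by linarith) hδpos.le
    -- per-state disagreement bound for any g in the box
    have hdis : ∀ (g : S → ℝ), InBox g → ∀ s : S,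
        ∫ x, |thresholdPolicy PX (τhat n ω) g x s - thresholdPolicy PX τ g x s| ∂PX ≤ D := by
      intro g hg s
      have hm0 : 0 < 1 - g s := by have := (hg s).2; linarith
      have hm1 : 1 - g s < 1 := by have := (hg s).1; linarith
      have hbnd := disagree_bound PX (fun x => τ x s) (fun x => τhat n ω x s)
        (hτmeas s) (hτhat_sec n ω s) hm0 hm1 hδpos Mhigh hMh0 (dens s) (hdens s) (hdens_ub s)
      have hc := hcheb s
      have hmass : PX {x | (if quantileOf PX (fun x' => τhat n ω x' s) (1 - g s) <
          τhat n ω x s then (1:ℝ) else 0) ≠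
          (if quantileOf PX (fun x' => τ x' s) (1 - g s) < τ x s then (1:ℝ) else 0)} ≤
          ENNReal.ofReal D := by
        refine le_trans hbnd ?_
        calc 3 * PX {x | δ < |τhat n ω x s - τ x s|} + ENNReal.ofReal (8 * (Mhigh * δ))
            ≤ 3 * ENNReal.ofReal δ + ENNReal.ofReal (8 * (Mhigh * δ)) := by
              exact add_le_add_left (mul_le_mul_right hc 3) _
          _ = ENNReal.ofReal (3 * δ) + ENNReal.ofReal (8 * (Mhigh * δ)) := by
              rw [ENNReal.ofReal_mul (by norm_num : (0:ℝ) ≤ 3)]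
              norm_num
          _ = ENNReal.ofReal (3 * δ + 8 * (Mhigh * δ)) := by
              rw [← ENNReal.ofReal_add (by positivity) (by positivity)]
          _ = ENNReal.ofReal D := by rw [hD_def]; ring_nf
      have hint := integral_abs_indicator_diff PX (fun x => τ x s) (fun x => τhat n ω x s)
        (hτmeas s) (hτhat_sec n ω s)
        (quantileOf PX (fun x' => τ x' s) (1 - g s))
        (quantileOf PX (fun x' => τhat n ω x' s) (1 - g s))
      calc ∫ x, |thresholdPolicy PX (τhat n ω) g x s - thresholdPolicy PX τ g x s| ∂PX
          = ∫ x, |(if quantileOf PX (fun x' => τhat n ω x' s) (1 - g s) <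
              τhat n ω x s then (1:ℝ) else 0) -
              (if quantileOf PX (fun x' => τ x' s) (1 - g s) < τ x s then (1:ℝ) else 0)| ∂PX := by
            simp only [thresholdPolicy]
        _ = (PX {x | (if quantileOf PX (fun x' => τhat n ω x' s) (1 - g s) <
              τhat n ω x s then (1:ℝ) else 0) ≠
              (if quantileOf PX (fun x' => τ x' s) (1 - g s) < τ x s then (1:ℝ) else 0)}).toReal :=
            hint
        _ ≤ (ENNReal.ofReal D).toReal :=
            ENNReal.toReal_mono ENNReal.ofReal_ne_top hmass
        _ = D := ENNReal.toReal_ofReal hD0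
    -- value comparison between estimated and true threshold policies
    have hval : ∀ (g : S → ℝ), InBox g →
        |polValue PX η dstat (thresholdPolicy PX (τhat n ω) g) -
          polValue PX η dstat (thresholdPolicy PX τ g)| ≤ C0 * D := by
      intro g hg
      have h := polValue_diff PX PS η hη_meas B hη_bdd dstat hd_stat Ld hLip
        (thresholdPolicy PX (τhat n ω) g) (thresholdPolicy PX τ g)
        (isPolicy_threshold PX (τhat n ω) (hτhat_sec n ω) g)
        (isPolicy_threshold PX τ hτmeas g)
        D hD0 (hdis g hg)
      rw [hC0]
      exact h
    -- identify C0 * D with K * n^{-2β/3}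
    have hCD : C0 * D = K * (n:ℝ) ^ (-(2*β/3)) := by
      have h1 : δ = M₁' ^ ((2:ℝ)/3) * (n:ℝ) ^ (-(2*β/3)) := by
        rw [hδ_def, he_def, Real.mul_rpow hM₁'pos.le hbpos.le,
          ← Real.rpow_mul hnpos.le]
        congr 1
        ring
      rw [hD_def, h1, hK]
      ring
    -- final deterministic chain
    have hub : polValue PX η dstat (thresholdPolicy PX (τhat n ω) (ghat n ω)) ≤
        polValue PX η dstat (thresholdPolicy PX τ gstar) + K * (n:ℝ) ^ (-(2*β/3)) := by
      have h1 := hval (ghat n ω) (hghat_box n ω)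
      rw [hCD] at h1
      have h2 := hmax (ghat n ω) (hghat_box n ω)
      have h3 := abs_le.mp h1
      linarith [h3.1, h3.2]
    have hlb : polValue PX η dstat (thresholdPolicy PX τ gstar) -
        (K * (n:ℝ) ^ (-(2*β/3)) + 2 * M₂' * (n:ℝ) ^ (-γ) + M₃' * an) ≤
        polValue PX η dstat (thresholdPolicy PX (τhat n ω) (ghat n ω)) := by
      have hv1 := abs_le.mp (hg₂ (ghat n ω) (hghat_box n ω))
      have hv2 := abs_le.mp (hg₂ gstar hgstar)
      have hmaxx := hghat_max n ω gstar hgstar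
      have hval2 := hval gstar hgstar
      rw [hCD] at hval2
      have hv3 := abs_le.mp hval2
      have hv4 := abs_le.mp hg₃
      have c1 : Vhat n ω (ghat n ω) - M₂' * (n:ℝ) ^ (-γ) ≤
          polValue PX η dstat (thresholdPolicy PX (τhat n ω) (ghat n ω)) := by
        linarith [hv1.2]
      have c3 : polValue PX η dstat (thresholdPolicy PX (τhat n ω) gstar) -
          M₂' * (n:ℝ) ^ (-γ) ≤ Vhat n ω gstar := by
        linarith [hv2.1]
      have c4 : polValue PX η dstat (thresholdPolicy PX τ gstar) -
          K * (n:ℝ) ^ (-(2*β/3)) ≤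
          polValue PX η dstat (thresholdPolicy PX (τhat n ω) gstar) := by
        linarith [hv3.1]
      linarith [hv4.2, c1, hmaxx, c3, c4]
    have hle1 : K * (n:ℝ) ^ (-(2*β/3)) ≤ K * an := by
      apply mul_le_mul_of_nonneg_left _ hK0
      rw [han]; linarith
    have hle2 : 2 * M₂' * (n:ℝ) ^ (-γ) ≤ 2 * M₂' * an := by
      apply mul_le_mul_of_nonneg_left _ (by linarith)
      rw [han]; linarith
    have hle3 : 0 ≤ (2 * M₂' + M₃') * an := mul_nonneg (by linarith) hanpos.le
    rw [abs_le]
    constructor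
    · linarith [hle1, hle2, hub, hlb]
    · linarith [hle1, hle3, hub, hlb]
  -- event inclusion and probability bound
  have hsub : {ω | (K + 2 * M₂' + M₃') * ((n:ℝ) ^ (-(2*β/3)) + (n:ℝ) ^ (-γ)) <
      |polValue PX η dstat (thresholdPolicy PX (τhat n ω) (ghat n ω)) -
        polValue PX η dstat (thresholdPolicy PX τ gstar)|} ⊆ (E₁ ∪ E₂) ∪ E₃ := by
    intro ω hω
    by_contra hcon
    simp only [Set.mem_union, not_or] at hcon
    obtain ⟨⟨hc1, hc2⟩, hc3⟩ := hcon
    have hd := hdet ω hc1 hc2 hc3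
    rw [han] at hd
    exact absurd hd (not_le.mpr hω)
  calc P {ω | (K + 2 * M₂' + M₃') * ((n:ℝ) ^ (-(2*β/3)) + (n:ℝ) ^ (-γ)) <
      |polValue PX η dstat (thresholdPolicy PX (τhat n ω) (ghat n ω)) -
        polValue PX η dstat (thresholdPolicy PX τ gstar)|}
      ≤ P ((E₁ ∪ E₂) ∪ E₃) := measure_mono hsub
    _ ≤ P (E₁ ∪ E₂) + P E₃ := measure_union_le _ _
    _ ≤ (P E₁ + P E₂) + P E₃ := add_le_add_left (measure_union_le _ _) _
    _ ≤ (ENNReal.ofReal (ε/3) + ENNReal.ofReal (ε/3)) + ENNReal.ofReal (ε/3) :=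
        add_le_add (add_le_add (h₁ n hnN₁) (h₂ n hnN₂)) (h₃ n hnN₃)
    _ = ENNReal.ofReal ε := by
        rw [← ENNReal.ofReal_add (by positivity) (by positivity),
          ← ENNReal.ofReal_add (by positivity) (by positivity)]
        congr 1
        ring
end
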